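/- arXiv:1904.06760 — 6 statements merged into one kernel-verified Lean document; each statement's English description precedes it below -/
import Mathlib

section
/- Let p be a planar strict orthogonal drawing of a finite simple graph G and let D ⊆ ℝ × ℝ be the union of the drawn segments of all edges of G. Let a, b, c, d be four distinct consecutive vertices of a cycle C of G (so {a,b}, {b,c}, {c,d} are edges of C), with {b,c} drawn horizontal and {a,b} and {c,d} drawn vertical, and let S be the union of the drawn segments of the edges of C. Assume there is a connected component U of (ℝ × ℝ) \ D whose topological frontier equals S (the cycle C bounds a face of the drawing), and a connected component U' ≠ U of (ℝ × ℝ) \ D whose frontier contains the drawn segment of {b,c} and whose frontier intersects S only within the union of the drawn segment of {b,c} and the finite set of points {p w : w a vertex of C} (the face on the other side of {b,c} shares no edge of C other than {b,c}). Then (p a).2 − (p b).2 and (p d).2 − (p c).2 are both positive or both negative; that is, the drawn segments of {a,b} and {c,d} lie in the same closed half-plane determined by the horizontal line through the drawn segment of {b,c}. -/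
/-- The edge `{u, v}` is drawn horizontal: the two endpoints share their second coordinate. -/
def Horiz {α : Type} (p : α → ℝ × ℝ) (u v : α) : Prop := (p u).2 = (p v).2

/-- The edge `{u, v}` is drawn vertical: the two endpoints share their first coordinate. -/
def Vert {α : Type} (p : α → ℝ × ℝ) (u v : α) : Prop := (p u).1 = (p v).1

/-- The drawing is planar: any point lying on the drawn segments of two distinct edges is
the image of a vertex incident to both edges. -/
def IsPlanarDrawing {α : Type} (G : SimpleGraph α) (p : α → ℝ × ℝ) : Prop :=
  ∀ u v u' v' : α, G.Adj u v → G.Adj u' v' → s(u, v) ≠ s(u', v') →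
    ∀ x : ℝ × ℝ, x ∈ segment ℝ (p u) (p v) → x ∈ segment ℝ (p u') (p v') →
      ∃ w : α, p w = x ∧ (w = u ∨ w = v) ∧ (w = u' ∨ w = v')

open Set Metric

lemma isCompact_seg (A B : ℝ × ℝ) : IsCompact (segment ℝ A B) := by
  rw [segment_eq_image']
  exact isCompact_Icc.image (continuous_const.add (continuous_id.smul continuous_const))

lemma seg_snd_eq {A B : ℝ × ℝ} (h : A.2 = B.2) {z : ℝ × ℝ} (hz : z ∈ segment ℝ A B) :
    z.2 = A.2 := by
  obtain ⟨s, t, hs, ht, hst, rfl⟩ := hz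
  simp only [Prod.snd_add, Prod.smul_snd, smul_eq_mul]
  rw [← h]
  have : s * A.2 + t * A.2 = (s + t) * A.2 := by ring
  rw [this, hst, one_mul]

lemma seg_fst_eq {A B : ℝ × ℝ} (h : A.1 = B.1) {z : ℝ × ℝ} (hz : z ∈ segment ℝ A B) :
    z.1 = A.1 := by
  obtain ⟨s, t, hs, ht, hst, rfl⟩ := hz
  simp only [Prod.fst_add, Prod.smul_fst, smul_eq_mul]
  rw [← h]
  have : s * A.1 + t * A.1 = (s + t) * A.1 := by ring
  rw [this, hst, one_mul]

lemma mem_seg_combo (A B : ℝ × ℝ) (t : ℝ) (h0 : 0 ≤ t) (h1 : t ≤ 1) :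
    (1 - t) • A + t • B ∈ segment ℝ A B := ⟨1 - t, t, by linarith, h0, by ring, rfl⟩

lemma closed_segs {α : Type} [Fintype α] (p : α → ℝ × ℝ) (P : α → α → Prop) :
    IsClosed (⋃ u, ⋃ w, ⋃ (_ : P u w), segment ℝ (p u) (p w)) := by
  classical
  refine isClosed_iUnion_of_finite fun u => isClosed_iUnion_of_finite fun w => ?_
  have : (⋃ (_ : P u w), segment ℝ (p u) (p w)) =
      if P u w then segment ℝ (p u) (p w) else ∅ := by
    by_cases h : P u w <;> simp [h]
  rw [this]
  split_ifs
  · exact (isCompact_seg _ _).isClosed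
  · exact isClosed_empty

lemma vertex_on_edge {α : Type} {G : SimpleGraph α} {p : α → ℝ × ℝ}
    (hinj : Function.Injective p) (hplanar : IsPlanarDrawing G p)
    {u w z z' : α} (huw : G.Adj u w) (hz : G.Adj z z')
    (hmem : p z ∈ segment ℝ (p u) (p w)) : p z = p u ∨ p z = p w := by
  by_cases hsym : s(z, z') = s(u, w)
  · rcases Sym2.eq_iff.1 hsym with ⟨rfl, rfl⟩ | ⟨rfl, rfl⟩
    · exact Or.inl rfl
    · exact Or.inr rfl
  · obtain ⟨w2, hw2, _, h2⟩ := hplanar z z' u w hz huw hsym (p z)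
      (left_mem_segment ℝ _ _) hmem
    rcases h2 with rfl | rfl
    · exact Or.inl hw2.symm
    · exact Or.inr hw2.symm

open Set Metric in
lemma preconn_subset_comp {X : Type} [TopologicalSpace X] {F C : Set X} {x w : X}
    (hC : IsPreconnected C) (hsub : C ⊆ F) (hw : w ∈ C)
    (hwU : w ∈ connectedComponentIn F x) : C ⊆ connectedComponentIn F x := by
  rw [connectedComponentIn_eq hwU]
  exact hC.subset_connectedComponentIn hw hsub

open Set in
lemma pick_near {s t r : ℝ} (hst : s ≠ t) (hr : 0 < r) :
    ∃ x0, x0 ∈ Ioo (min s t) (max s t) ∧ |x0 - s| < r ∧ x0 ≠ s := by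
  rcases hst.lt_or_gt with h | h
  · refine ⟨s + min r (t - s) / 2, ?_, ?_, ?_⟩
    · rw [min_eq_left h.le, max_eq_right h.le]
      constructor
      · have : 0 < min r (t - s) := lt_min hr (by linarith)
        linarith
      · have : min r (t - s) ≤ t - s := min_le_right _ _
        have : 0 < min r (t - s) := lt_min hr (by linarith)
        have h2 : min r (t - s) ≤ t - s := min_le_right _ _
        linarith
    · have h1 : 0 < min r (t - s) := lt_min hr (by linarith)
      have h2 : min r (t - s) ≤ r := min_le_left _ _
      rw [abs_of_pos (by linarith)]
      linarith
    · have h1 : 0 < min r (t - s) := lt_min hr (by linarith)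
      intro he
      have : min r (t - s) / 2 = 0 := by linarith [congrArg (fun z => z - s) he]
      linarith
  · refine ⟨s - min r (s - t) / 2, ?_, ?_, ?_⟩
    · rw [min_eq_right h.le, max_eq_left h.le]
      constructor
      · have h1 : 0 < min r (s - t) := lt_min hr (by linarith)
        have h2 : min r (s - t) ≤ s - t := min_le_right _ _
        linarith
      · have h1 : 0 < min r (s - t) := lt_min hr (by linarith)
        linarith
    · have h1 : 0 < min r (s - t) := lt_min hr (by linarith)
      have h2 : min r (s - t) ≤ r := min_le_left _ _
      rw [abs_of_neg (by linarith)]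
      linarith
    · have h1 : 0 < min r (s - t) := lt_min hr (by linarith)
      intro he
      have : min r (s - t) / 2 = 0 := by linarith [congrArg (fun z => z - s) he]
      linarith

open Set in
lemma mem_seg_vert {A B : ℝ × ℝ} (h1 : A.1 = B.1) {y : ℝ} (hy : y ∈ uIcc A.2 B.2) :
    ((A.1, y) : ℝ × ℝ) ∈ segment ℝ A B := by
  rw [← segment_eq_uIcc] at hy
  obtain ⟨s, t, hs, ht, hst, hy⟩ := hy
  refine ⟨s, t, hs, ht, hst, ?_⟩
  apply Prod.ext
  · simp only [Prod.fst_add, Prod.smul_fst, smul_eq_mul]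
    rw [← h1]
    have : s * A.1 + t * A.1 = (s + t) * A.1 := by ring
    rw [this, hst, one_mul]
  · simpa using hy

open Set in
lemma mem_seg_horiz {A B : ℝ × ℝ} (h2 : A.2 = B.2) {x : ℝ} (hx : x ∈ uIcc A.1 B.1) :
    ((x, A.2) : ℝ × ℝ) ∈ segment ℝ A B := by
  rw [← segment_eq_uIcc] at hx
  obtain ⟨s, t, hs, ht, hst, hx⟩ := hx
  refine ⟨s, t, hs, ht, hst, ?_⟩
  apply Prod.ext
  · simpa using hx
  · simp only [Prod.snd_add, Prod.smul_snd, smul_eq_mul]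
    rw [← h2]
    have : s * A.2 + t * A.2 = (s + t) * A.2 := by ring
    rw [this, hst, one_mul]

open Set Metric in
lemma corner_lemma {α : Type} [Fintype α] (G : SimpleGraph α) (p : α → ℝ × ℝ)
    (hinj : Function.Injective p)
    (horth : ∀ u v : α, G.Adj u v → Horiz p u v ∨ Vert p u v)
    (hplanar : IsPlanarDrawing G p)
    (k : ℕ) (v : ZMod k → α)
    (hadj : ∀ i : ZMod k, G.Adj (v i) (v (i + 1)))
    (b c : α) (hGbc : G.Adj b c) (hbcne : b ≠ c) (hbc : Horiz p b c)
    (D : Set (ℝ × ℝ))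
    (hD : D = ⋃ (u : α) (w : α) (_ : G.Adj u w), segment ℝ (p u) (p w))
    (S : Set (ℝ × ℝ))
    (hS : S = ⋃ i : ZMod k, segment ℝ (p (v i)) (p (v (i + 1))))
    (U' : Set (ℝ × ℝ)) (x' : ℝ × ℝ) (hU' : U' = connectedComponentIn Dᶜ x')
    (hfrU'₂ : frontier U' ∩ S ⊆
      segment ℝ (p b) (p c) ∪ Set.range (fun i : ZMod k => p (v i)))
    (σ : ℝ) (hσ : σ = 1 ∨ σ = -1)
    (Hstrip : ∀ x1, x1 ∈ Set.Ioo (min (p b).1 (p c).1) (max (p b).1 (p c).1) →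
      ∃ ε > 0, ∀ y : ℝ, 0 < σ * ((p b).2 - y) → σ * ((p b).2 - y) < ε → (x1, y) ∈ U')
    (c' d' : α) (hGcd : G.Adj c' d') (hvert : Vert p c' d')
    (hc'2 : (p c').2 = (p b).2) (hc'1 : (p c').1 = (p b).1 ∨ (p c').1 = (p c).1)
    (hside : 0 < σ * ((p b).2 - (p d').2))
    (hseg : segment ℝ (p c') (p d') ⊆ S) : False := by
  classical
  have hσ2 : σ * σ = 1 := by rcases hσ with rfl | rfl <;> norm_num
  have hσabs : ∀ tt : ℝ, |σ * tt| = |tt| := by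
    intro tt; rcases hσ with rfl | rfl <;> simp
  have hxbc : (p b).1 ≠ (p c).1 := by
    intro he
    exact hbcne (hinj (Prod.ext he hbc))
  -- Step C1: local structure near the corner p c'
  set D₀ := ⋃ u, ⋃ w, ⋃ (_ : G.Adj u w ∧ u ≠ c' ∧ w ≠ c'), segment ℝ (p u) (p w) with hD₀
  have hD₀c : IsClosed D₀ := closed_segs p _
  have hpc' : p c' ∉ D₀ := by
    intro hmem
    simp only [hD₀, mem_iUnion] at hmem
    obtain ⟨u, w, ⟨huw, hu, hw⟩, hm⟩ := hmem
    rcases vertex_on_edge hinj hplanar huw hGcd hm with he | he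
    · exact hu (hinj he).symm
    · exact hw (hinj he).symm
  obtain ⟨r, hr, hball⟩ := Metric.isOpen_iff.1 hD₀c.isOpen_compl (p c') hpc'
  have hloc : ∀ z ∈ D, dist z (p c') < r → z.1 = (p c').1 ∨ z.2 = (p b).2 := by
    intro z hz hdist
    rw [hD] at hz
    simp only [mem_iUnion] at hz
    obtain ⟨u, w, huw, hm⟩ := hz
    by_cases hu : u = c'
    · subst hu
      rcases horth u w huw with hh | hv
      · right; rw [← hc'2]; exact seg_snd_eq hh hm
      · left; exact seg_fst_eq hv hm
    by_cases hw : w = c'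
    · subst hw
      rcases horth u w huw with hh | hv
      · right
        have := seg_snd_eq hh hm
        rw [this, hh, hc'2]
      · left
        have := seg_fst_eq hv hm
        rw [this, hv]
    · exact absurd (hball (mem_ball.2 hdist))
        (by simp only [mem_compl_iff, not_not]
            exact mem_iUnion.2 ⟨u, mem_iUnion.2 ⟨w, mem_iUnion.2 ⟨⟨huw, hu, hw⟩, hm⟩⟩⟩)
  -- Step C2: choose x0 in the open interval, near the corner
  have hx0ex : ∃ x0, x0 ∈ Ioo (min (p b).1 (p c).1) (max (p b).1 (p c).1) ∧
      |x0 - (p c').1| < r ∧ x0 ≠ (p c').1 := by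
    rcases hc'1 with h1 | h1
    · rw [h1]; exact pick_near hxbc hr
    · rw [h1]
      obtain ⟨x0, hm, h2, h3⟩ := pick_near hxbc.symm hr
      rw [min_comm, max_comm] at hm
      exact ⟨x0, hm, h2, h3⟩
  obtain ⟨x0, hx0mem, hx0r, hx0ne⟩ := hx0ex
  obtain ⟨ε₀, hε₀, hstr⟩ := Hstrip x0 hx0mem
  -- the width ε
  set ε := min ε₀ (min r (σ * ((p b).2 - (p d').2))) with hεdef
  have hεpos : 0 < ε := lt_min hε₀ (lt_min hr hside)
  have hεε₀ : ε ≤ ε₀ := min_le_left _ _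
  have hεr : ε ≤ r := le_trans (min_le_right _ _) (min_le_left _ _)
  have hεd : ε ≤ σ * ((p b).2 - (p d').2) := le_trans (min_le_right _ _) (min_le_right _ _)
  set z2 := (p b).2 - σ * (ε / 2) with hz2def
  have hz2σ : σ * ((p b).2 - z2) = ε / 2 := by
    have : σ * ((p b).2 - z2) = σ * σ * (ε / 2) := by rw [hz2def]; ring
    rw [this, hσ2, one_mul]
  -- Y part of the box
  set Yset := {y : ℝ | 0 < σ * ((p b).2 - y) ∧ σ * ((p b).2 - y) < ε} with hYdef
  have hYeq : ∃ lo hi : ℝ, Yset = Ioo lo hi := by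
    rcases hσ with rfl | rfl
    · refine ⟨(p b).2 - ε, (p b).2, ?_⟩
      ext y
      simp only [hYdef, mem_setOf_eq, mem_Ioo, one_mul]
      constructor <;> rintro ⟨h1, h2⟩ <;> constructor <;> linarith
    · refine ⟨(p b).2, (p b).2 + ε, ?_⟩
      ext y
      simp only [hYdef, mem_setOf_eq, mem_Ioo, neg_mul, one_mul]
      constructor <;> rintro ⟨h1, h2⟩ <;> constructor <;> linarith
  obtain ⟨lo, hi, hYIoo⟩ := hYeq
  have hz2Y : z2 ∈ Yset := by
    constructor
    · rw [hz2σ]; linarith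
    · rw [hz2σ]; linarith
  -- X part of the box
  have hXex : ∃ Xs : Set ℝ, Convex ℝ Xs ∧ x0 ∈ Xs ∧ (p c').1 ∈ closure Xs ∧
      ∀ x ∈ Xs, x ≠ (p c').1 ∧ |x - (p c').1| < r := by
    rcases hx0ne.lt_or_gt with hlt | hlt
    · refine ⟨Ico x0 (p c').1, convex_Ico _ _, ⟨le_refl _, hlt⟩, ?_, ?_⟩
      · rw [closure_Ico hlt.ne]
        exact ⟨hlt.le, le_refl _⟩
      · rintro x ⟨hx1, hx2⟩
        refine ⟨hx2.ne, ?_⟩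
        rw [abs_of_neg (by linarith)]
        rw [abs_of_neg (by linarith)] at hx0r
        linarith
    · refine ⟨Ioc (p c').1 x0, convex_Ioc _ _, ⟨hlt, le_refl _⟩, ?_, ?_⟩
      · rw [closure_Ioc hlt.ne]
        exact ⟨le_refl _, hlt.le⟩
      · rintro x ⟨hx1, hx2⟩
        refine ⟨hx1.ne', ?_⟩
        rw [abs_of_pos (by linarith)]
        rw [abs_of_pos (by linarith)] at hx0r
        linarith
  obtain ⟨Xs, hXconv, hx0X, hclX, hXprop⟩ := hXex
  -- the box Q
  set Q : Set (ℝ × ℝ) := Xs ×ˢ Yset with hQdef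
  have hQD : Q ⊆ Dᶜ := by
    rintro ⟨xx, yy⟩ ⟨hxX, hyY⟩ hzD
    obtain ⟨hxne, hxr⟩ := hXprop xx hxX
    obtain ⟨hy1, hy2⟩ := hyY
    have hyne : yy ≠ (p b).2 := by
      intro he
      rw [he] at hy1
      simp at hy1
    have hdist : dist ((xx, yy) : ℝ × ℝ) (p c') < r := by
      rw [Prod.dist_eq]
      apply max_lt
      · rw [Real.dist_eq]; exact hxr
      · rw [Real.dist_eq, hc'2]
        have h1 : |σ * ((p b).2 - yy)| < r := by
          rw [abs_of_pos hy1]; linarith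
        rw [hσabs] at h1
        rw [abs_sub_comm] at h1
        exact h1
    rcases hloc _ hzD hdist with he | he
    · exact hxne he
    · exact hyne he
  have hQU' : Q ⊆ U' := by
    have hw0 : ((x0, z2) : ℝ × ℝ) ∈ U' := by
      apply hstr
      · rw [hz2σ]; linarith
      · rw [hz2σ]; linarith
    rw [hU'] at hw0 ⊢
    apply preconn_subset_comp _ hQD ⟨hx0X, hz2Y⟩ hw0
    apply Convex.isPreconnected
    apply hXconv.prod
    rw [hYIoo]
    exact convex_Ioo _ _
  -- the contradiction point z on the vertical edge
  set z : ℝ × ℝ := ((p c').1, z2) with hzdef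
  have hzcl : z ∈ closure U' := by
    apply closure_mono hQU'
    rw [hQdef, closure_prod_eq]
    exact ⟨hclX, subset_closure hz2Y⟩
  have hz2uIcc : z2 ∈ uIcc (p c').2 (p d').2 := by
    rw [mem_uIcc, hc'2]
    rcases hσ with rfl | rfl
    · right
      rw [hz2def]
      simp only [one_mul] at hεd hside ⊢
      constructor <;> linarith
    · left
      rw [hz2def]
      simp only [neg_mul, one_mul] at hεd hside ⊢
      constructor <;> linarith
  have hzseg : z ∈ segment ℝ (p c') (p d') := mem_seg_vert hvert hz2uIcc
  have hzS : z ∈ S := hseg hzseg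
  have hzD : z ∈ D := by
    rw [hD]
    exact mem_iUnion.2 ⟨c', mem_iUnion.2 ⟨d', mem_iUnion.2 ⟨hGcd, hzseg⟩⟩⟩
  have hzU' : z ∉ U' := by
    intro hmm
    rw [hU'] at hmm
    exact (connectedComponentIn_subset _ _ hmm) hzD
  have hzfr : z ∈ frontier U' :=
    ⟨hzcl, fun h => hzU' (interior_subset h)⟩
  have hzne : z2 ≠ (p b).2 := by
    intro he
    rw [he] at hz2σ
    simp at hz2σ
    linarith
  rcases hfrU'₂ ⟨hzfr, hzS⟩ with hz1 | hz1
  · exact hzne (seg_snd_eq hbc hz1)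
  · obtain ⟨i, hi⟩ := hz1
    have hi' : p (v i) = z := hi
    have hmem : p (v i) ∈ segment ℝ (p c') (p d') := by rw [hi']; exact hzseg
    rcases vertex_on_edge hinj hplanar hGcd (hadj i) hmem with he | he
    · have : z2 = (p b).2 := by
        have h2 : z.2 = (p c').2 := by rw [← hi', he]
        rw [hc'2] at h2
        exact h2
      exact hzne this
    · have h2 : z2 = (p d').2 := by
        have : z.2 = (p d').2 := by rw [← hi', he]
        exact this
      rw [← h2] at hεd
      rw [hz2σ] at hεd
      linarith

open Set Metric in
set_option maxHeartbeats 1000000 in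
/-- if `a, b, c, d` are consecutive vertices of a cycle `C` bounding a face `U`
of a planar strict orthogonal drawing, `{b,c}` is drawn horizontal while `{a,b}` and `{c,d}`
are drawn vertical, and the face `U'` on the other side of `{b,c}` meets the drawing of `C`
only within the segment of `{b,c}` and the vertices of `C`, then the segments of `{a,b}` and
`{c,d}` lie in the same closed half-plane determined by the line through `{b,c}`. -/
theorem critical_edge_neighbours_same_side
    {α : Type} [Fintype α] (G : SimpleGraph α) (p : α → ℝ × ℝ)
    (hinj : Function.Injective p)
    (horth : ∀ u v : α, G.Adj u v → Horiz p u v ∨ Vert p u v)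
    (hplanar : IsPlanarDrawing G p)
    -- the cycle C, given by its vertices v_0, …, v_{k-1}
    (k : ℕ) (hk : 3 ≤ k) (v : ZMod k → α) (hv : Function.Injective v)
    (hadj : ∀ i : ZMod k, G.Adj (v i) (v (i + 1)))
    -- a, b, c, d are four distinct consecutive vertices of C
    (j : ZMod k) (a b c d : α)
    (ha : a = v j) (hb : b = v (j + 1)) (hc : c = v (j + 2)) (hd : d = v (j + 3))
    (habcd : a ≠ b ∧ a ≠ c ∧ a ≠ d ∧ b ≠ c ∧ b ≠ d ∧ c ≠ d)
    -- {b,c} is drawn horizontal, {a,b} and {c,d} are drawn vertical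
    (hbc : Horiz p b c) (hab : Vert p a b) (hcd : Vert p c d)
    -- D is the union of the drawn segments of all edges of G
    (D : Set (ℝ × ℝ))
    (hD : D = ⋃ (u : α) (w : α) (_ : G.Adj u w), segment ℝ (p u) (p w))
    -- S is the union of the drawn segments of the edges of C
    (S : Set (ℝ × ℝ))
    (hS : S = ⋃ i : ZMod k, segment ℝ (p (v i)) (p (v (i + 1))))
    -- U is a connected component of the complement of D whose frontier is S
    (U : Set (ℝ × ℝ)) (x : ℝ × ℝ) (hx : x ∈ Dᶜ)
    (hU : U = connectedComponentIn Dᶜ x)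
    (hfrU : frontier U = S)
    -- U' is a different component; its frontier contains the segment of {b,c} and meets S
    -- only within that segment and the vertices of C
    (U' : Set (ℝ × ℝ)) (x' : ℝ × ℝ) (hx' : x' ∈ Dᶜ)
    (hU' : U' = connectedComponentIn Dᶜ x')
    (hUU' : U' ≠ U)
    (hfrU'₁ : segment ℝ (p b) (p c) ⊆ frontier U')
    (hfrU'₂ : frontier U' ∩ S ⊆
      segment ℝ (p b) (p c) ∪ Set.range (fun i : ZMod k => p (v i))) :
    (0 < (p a).2 - (p b).2 ∧ 0 < (p d).2 - (p c).2) ∨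
    ((p a).2 - (p b).2 < 0 ∧ (p d).2 - (p c).2 < 0) := by
  classical
  obtain ⟨hab1, hac, had, hbc1, hbd, hcd1⟩ := habcd
  -- the three cycle edges
  have hGab : G.Adj a b := by
    rw [ha, hb]; exact hadj j
  have hGbc : G.Adj b c := by
    rw [hb, hc]
    have h := hadj (j + 1)
    rwa [show j + 1 + 1 = j + 2 by ring] at h
  have hGcd : G.Adj c d := by
    rw [hc, hd]
    have h := hadj (j + 2)
    rwa [show j + 2 + 1 = j + 3 by ring] at h
  have hxbc : (p b).1 ≠ (p c).1 := by
    intro he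
    exact hbc1 (hinj (Prod.ext he hbc))
  have hsegab : segment ℝ (p b) (p a) ⊆ S := by
    rw [hS, segment_symm, ha, hb]
    exact subset_iUnion (fun i : ZMod k => segment ℝ (p (v i)) (p (v (i + 1)))) j
  have hsegcd : segment ℝ (p c) (p d) ⊆ S := by
    rw [hS, hc, hd, show j + 3 = (j + 2) + 1 by ring]
    exact subset_iUnion (fun i : ZMod k => segment ℝ (p (v i)) (p (v (i + 1)))) (j + 2)
  -- ya and yd are off the line
  have hya : (p a).2 ≠ (p b).2 := by
    intro he
    exact hab1 (hinj (Prod.ext hab he))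
  have hyd : (p d).2 ≠ (p c).2 := by
    intro he
    exact hcd1 (hinj (Prod.ext hcd he.symm))
  -- D₁ : all edges other than {b,c}
  set D₁ := ⋃ u, ⋃ w, ⋃ (_ : G.Adj u w ∧ s(u, w) ≠ s(b, c)), segment ℝ (p u) (p w) with hD₁def
  have hD₁c : IsClosed D₁ := closed_segs p _
  have hIoomem : ∀ x1 ∈ Ioo (min (p b).1 (p c).1) (max (p b).1 (p c).1),
      x1 ∈ uIcc (p b).1 (p c).1 ∧ x1 ≠ (p b).1 ∧ x1 ≠ (p c).1 := by
    intro x1 hx1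
    rcases le_total (p b).1 (p c).1 with hh | hh
    · rw [min_eq_left hh, max_eq_right hh] at hx1
      refine ⟨mem_uIcc.2 (Or.inl ⟨hx1.1.le, hx1.2.le⟩), ?_, ?_⟩
      · exact fun he => absurd (he ▸ hx1.1) (lt_irrefl _)
      · exact fun he => absurd (he ▸ hx1.2) (lt_irrefl _)
    · rw [min_eq_right hh, max_eq_left hh] at hx1
      refine ⟨mem_uIcc.2 (Or.inr ⟨hx1.1.le, hx1.2.le⟩), ?_, ?_⟩
      · exact fun he => absurd (he ▸ hx1.2) (lt_irrefl _)
      · exact fun he => absurd (he ▸ hx1.1) (lt_irrefl _)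
  have hbcpt : ∀ x1 ∈ Ioo (min (p b).1 (p c).1) (max (p b).1 (p c).1),
      ((x1, (p b).2) : ℝ × ℝ) ∈ segment ℝ (p b) (p c) ∧ ((x1, (p b).2) : ℝ × ℝ) ∉ D₁ := by
    intro x1 hx1
    obtain ⟨huIcc, hne1, hne2⟩ := hIoomem x1 hx1
    have hmem : ((x1, (p b).2) : ℝ × ℝ) ∈ segment ℝ (p b) (p c) := mem_seg_horiz hbc huIcc
    refine ⟨hmem, ?_⟩
    intro hmem1
    rw [hD₁def] at hmem1
    simp only [mem_iUnion] at hmem1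
    obtain ⟨u, w, ⟨huw, hne⟩, hm⟩ := hmem1
    obtain ⟨w', hw', _, hw'bc⟩ := hplanar u w b c huw hGbc hne _ hm hmem
    rcases hw'bc with rfl | rfl
    · exact hne1 (congrArg Prod.fst hw').symm
    · exact hne2 (congrArg Prod.fst hw').symm
  have hDsplit : ∀ z ∈ D, z ∈ D₁ ∨ z ∈ segment ℝ (p b) (p c) := by
    intro z hz
    rw [hD] at hz
    simp only [mem_iUnion] at hz
    obtain ⟨u, w, huw, hm⟩ := hz
    by_cases hsym : s(u, w) = s(b, c)
    · right
      rcases Sym2.eq_iff.1 hsym with ⟨rfl, rfl⟩ | ⟨rfl, rfl⟩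
      · exact hm
      · rw [segment_symm]; exact hm
    · left
      rw [hD₁def]
      exact mem_iUnion.2 ⟨u, mem_iUnion.2 ⟨w, mem_iUnion.2 ⟨⟨huw, hsym⟩, hm⟩⟩⟩
  -- midpoint of {b,c}
  set m : ℝ × ℝ := (((p b).1 + (p c).1) / 2, (p b).2) with hmdef
  have hmIoo : m.1 ∈ Ioo (min (p b).1 (p c).1) (max (p b).1 (p c).1) := by
    rcases hxbc.lt_or_gt with hh | hh
    · rw [min_eq_left hh.le, max_eq_right hh.le]
      constructor <;> · simp only [hmdef]; linarith
    · rw [min_eq_right hh.le, max_eq_left hh.le]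
      constructor <;> · simp only [hmdef]; linarith
  obtain ⟨hmseg, hmD₁⟩ := hbcpt m.1 hmIoo
  obtain ⟨r₁, hr₁, hball₁⟩ := Metric.isOpen_iff.1 hD₁c.isOpen_compl m hmD₁
  set rm := min r₁ (|(p c).1 - (p b).1| / 2) with hrmdef
  have hrmpos : 0 < rm := lt_min hr₁ (by
    have : 0 < |(p c).1 - (p b).1| := abs_pos.2 (sub_ne_zero.2 hxbc.symm)
    linarith)
  have hrmr₁ : rm ≤ r₁ := min_le_left _ _
  have hm1 : m.1 = ((p b).1 + (p c).1) / 2 := rfl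
  have hm2 : m.2 = (p b).2 := rfl
  have hnear : ∀ x1 : ℝ, |x1 - m.1| < rm →
      x1 ∈ Ioo (min (p b).1 (p c).1) (max (p b).1 (p c).1) := by
    intro x1 hx1
    have h2 : rm ≤ |(p c).1 - (p b).1| / 2 := min_le_right _ _
    rw [abs_lt] at hx1
    rcases hxbc.lt_or_gt with hh | hh
    · rw [min_eq_left hh.le, max_eq_right hh.le]
      rw [abs_of_pos (by linarith)] at h2
      constructor <;> [skip; skip] <;> rw [hm1] at hx1 <;>
        [linarith [hx1.1]; linarith [hx1.2]]
    · rw [min_eq_right hh.le, max_eq_left hh.le]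
      rw [abs_of_neg (by linarith)] at h2
      constructor <;> [skip; skip] <;> rw [hm1] at hx1 <;>
        [linarith [hx1.2]; linarith [hx1.1]]
  -- find a point of U' near m, off the line
  have hmfr : m ∈ frontier U' := hfrU'₁ hmseg
  have hmcl : m ∈ closure U' := frontier_subset_closure hmfr
  obtain ⟨w1, hw1U', hw1dist⟩ := Metric.mem_closure_iff.1 hmcl rm hrmpos
  have hw1d : dist m.1 w1.1 < rm ∧ dist m.2 w1.2 < rm := by
    rw [Prod.dist_eq] at hw1dist
    exact ⟨lt_of_le_of_lt (le_max_left _ _) hw1dist, lt_of_le_of_lt (le_max_right _ _) hw1dist⟩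
  have hw1x : w1.1 ∈ Ioo (min (p b).1 (p c).1) (max (p b).1 (p c).1) := by
    apply hnear
    rw [abs_sub_comm, ← Real.dist_eq]
    exact hw1d.1
  have hw1D : w1 ∉ D := by
    have := hU' ▸ hw1U'
    exact (connectedComponentIn_subset _ _ this)
  have hw1y : w1.2 ≠ (p b).2 := by
    intro he
    apply hw1D
    rw [hD]
    have hw1eq : w1 = ((w1.1, (p b).2) : ℝ × ℝ) := Prod.ext rfl he
    have hmem : ((w1.1, (p b).2) : ℝ × ℝ) ∈ segment ℝ (p b) (p c) :=
      mem_seg_horiz hbc (hIoomem w1.1 hw1x).1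
    rw [← hw1eq] at hmem
    exact mem_iUnion.2 ⟨b, mem_iUnion.2 ⟨c, mem_iUnion.2 ⟨hGbc, hmem⟩⟩⟩
  -- the sign of the side of U'
  obtain ⟨σ, hσ, hw1σ⟩ : ∃ σ : ℝ, (σ = 1 ∨ σ = -1) ∧ 0 < σ * ((p b).2 - w1.2) := by
    rcases (hw1y).lt_or_gt with hh | hh
    · exact ⟨1, Or.inl rfl, by linarith⟩
    · exact ⟨-1, Or.inr rfl, by linarith⟩
  have hσ2 : σ * σ = 1 := by rcases hσ with rfl | rfl <;> norm_num
  have hσabs : ∀ tt : ℝ, |σ * tt| = |tt| := by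
    intro tt; rcases hσ with rfl | rfl <;> simp
  have hw1absy : |w1.2 - (p b).2| < rm := by
    rw [abs_sub_comm, ← Real.dist_eq, ← hm2]
    exact hw1d.2
  -- the strip property
  have Hstrip : ∀ x1 ∈ Set.Ioo (min (p b).1 (p c).1) (max (p b).1 (p c).1),
      ∃ ε > 0, ∀ y : ℝ, 0 < σ * ((p b).2 - y) → σ * ((p b).2 - y) < ε → (x1, y) ∈ U' := by
    intro x1 hx1
    -- the compact segment of the line between w1.1 and x1
    set K : Set (ℝ × ℝ) := Icc (min w1.1 x1) (max w1.1 x1) ×ˢ ({(p b).2} : Set ℝ) with hKdef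
    have hKc : IsCompact K := isCompact_Icc.prod isCompact_singleton
    have hKD₁ : K ⊆ D₁ᶜ := by
      rintro ⟨xx, yy⟩ ⟨hxx, hyy⟩
      rw [mem_singleton_iff] at hyy
      subst hyy
      have hxxIoo : xx ∈ Ioo (min (p b).1 (p c).1) (max (p b).1 (p c).1) := by
        constructor
        · exact lt_of_lt_of_le (lt_min hw1x.1 hx1.1) hxx.1
        · exact lt_of_le_of_lt hxx.2 (max_lt hw1x.2 hx1.2)
      exact (hbcpt xx hxxIoo).2
    obtain ⟨δ, hδ, hthick⟩ := hKc.exists_cthickening_subset_open hD₁c.isOpen_compl hKD₁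
    set μ := min δ (σ * ((p b).2 - w1.2)) with hμdef
    have hμpos : 0 < μ := lt_min hδ hw1σ
    have hμδ : μ ≤ δ := min_le_left _ _
    have hμA : μ ≤ σ * ((p b).2 - w1.2) := min_le_right _ _
    refine ⟨μ / 2, by positivity, ?_⟩
    intro y hy1 hy2
    -- walk down/up from w1 to the level of the strip
    set w2 : ℝ × ℝ := (w1.1, (p b).2 - σ * (μ / 2)) with hw2def
    have hw2σ : σ * ((p b).2 - w2.2) = μ / 2 := by
      have : σ * ((p b).2 - w2.2) = σ * σ * (μ / 2) := by rw [hw2def]; ring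
      rw [this, hσ2, one_mul]
    set A := σ * ((p b).2 - w1.2) with hAdef
    have hColD : segment ℝ w1 w2 ⊆ Dᶜ := by
      intro z hz
      have hz1 : z.1 = w1.1 := seg_fst_eq (show w1.1 = w2.1 from rfl) hz
      have hzE : 0 < σ * ((p b).2 - z.2) ∧ σ * ((p b).2 - z.2) ≤ A := by
        obtain ⟨s, t, hs, ht, hst, rfl⟩ := hz
        have hs' : s = 1 - t := by linarith
        have he : σ * ((p b).2 - (s • w1 + t • w2).2) = s * A + t * (μ / 2) := by
          simp only [Prod.snd_add, Prod.smul_snd, smul_eq_mul, hAdef, hw2def]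
          rw [hs']
          linear_combination (t * (μ / 2)) * hσ2
        rw [he]
        have h1 : μ / 2 ≤ A := le_trans (by linarith) hμA
        have key : s * (μ / 2) + t * (μ / 2) = μ / 2 := by rw [← add_mul, hst, one_mul]
        have key2 : s * A + t * A = A := by rw [← add_mul, hst, one_mul]
        constructor
        · have h3 := mul_le_mul_of_nonneg_left h1 hs
          have h4 : 0 ≤ t * (μ / 2) := mul_nonneg ht (half_pos hμpos).le
          have h5 : 0 ≤ s * (μ / 2) := mul_nonneg hs (half_pos hμpos).le
          linarith [half_pos hμpos]
        · have h3 := mul_le_mul_of_nonneg_left h1 ht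
          linarith
      intro hzD
      have hzy : z.2 ≠ (p b).2 := by
        intro heq
        rw [heq] at hzE
        obtain ⟨h1', _⟩ := hzE
        simp at h1'
      rcases hDsplit z hzD with hzz | hzz
      · -- z would be in D₁, but it is in the ball around m
        have hzm : dist z m < r₁ := by
          rw [Prod.dist_eq]
          apply max_lt
          · rw [Real.dist_eq, hz1, hm1]
            have := hw1d.1
            rw [Real.dist_eq, hm1] at this
            rw [abs_sub_comm]
            exact lt_of_lt_of_le this hrmr₁
          · rw [Real.dist_eq, hm2]
            calc |z.2 - (p b).2| = |σ * ((p b).2 - z.2)| := by rw [hσabs, abs_sub_comm]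
              _ = σ * ((p b).2 - z.2) := abs_of_pos hzE.1
              _ ≤ A := hzE.2
              _ ≤ |σ * ((p b).2 - w1.2)| := le_abs_self _
              _ = |w1.2 - (p b).2| := by rw [hσabs, abs_sub_comm]
              _ < rm := hw1absy
              _ ≤ r₁ := hrmr₁
        exact (hball₁ (mem_ball.2 hzm)) hzz
      · exact hzy (seg_snd_eq hbc hzz)
    have hColU' : segment ℝ w1 w2 ⊆ U' := by
      rw [hU'] at hw1U' ⊢
      exact preconn_subset_comp (convex_segment _ _).isPreconnected hColD
        (left_mem_segment ℝ _ _) hw1U'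
    have hw2U' : w2 ∈ U' := hColU' (right_mem_segment ℝ _ _)
    -- the rectangle R
    set Yμ := {y : ℝ | 0 < σ * ((p b).2 - y) ∧ σ * ((p b).2 - y) ≤ μ / 2} with hYμdef
    have hYμconv : Convex ℝ Yμ := by
      rcases hσ with rfl | rfl
      · have : Yμ = Ico ((p b).2 - μ / 2) (p b).2 := by
          ext yy
          simp only [hYμdef, mem_setOf_eq, mem_Ico, one_mul]
          constructor <;> rintro ⟨u1, u2⟩ <;> constructor <;> linarith
        rw [this]; exact convex_Ico _ _
      · have : Yμ = Ioc (p b).2 ((p b).2 + μ / 2) := by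
          ext yy
          simp only [hYμdef, mem_setOf_eq, mem_Ioc, neg_mul, one_mul]
          constructor <;> rintro ⟨u1, u2⟩ <;> constructor <;> linarith
        rw [this]; exact convex_Ioc _ _
    set R : Set (ℝ × ℝ) := Icc (min w1.1 x1) (max w1.1 x1) ×ˢ Yμ with hRdef
    have hRD : R ⊆ Dᶜ := by
      rintro ⟨xx, yy⟩ ⟨hxx, hyy⟩
      obtain ⟨hyy1, hyy2⟩ := hyy
      have hyne : yy ≠ (p b).2 := by
        intro heq
        rw [heq] at hyy1
        simp at hyy1
      intro hzD
      rcases hDsplit _ hzD with hzz | hzz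
      · have hKmem : ((xx, (p b).2) : ℝ × ℝ) ∈ K := ⟨hxx, mem_singleton _⟩
        have hdd : dist ((xx, yy) : ℝ × ℝ) ((xx, (p b).2) : ℝ × ℝ) ≤ δ := by
          rw [Prod.dist_eq]
          apply max_le
          · simp [dist_self]; linarith
          · rw [Real.dist_eq]
            have h1 : |σ * ((p b).2 - yy)| ≤ μ / 2 := by
              rw [abs_of_pos hyy1]; exact hyy2
            rw [hσabs, abs_sub_comm] at h1
            linarith
        have : ((xx, yy) : ℝ × ℝ) ∈ Metric.cthickening δ K :=
          Metric.mem_cthickening_of_dist_le _ _ _ _ hKmem hdd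
        exact (hthick this) hzz
      · exact hyne (seg_snd_eq hbc hzz)
    have hw2R : w2 ∈ R := by
      refine ⟨⟨min_le_left _ _, le_max_left _ _⟩, ?_, ?_⟩
      · rw [hw2σ]; linarith
      · exact le_of_eq hw2σ
    have hRU' : R ⊆ U' := by
      rw [hU'] at hw2U' ⊢
      exact preconn_subset_comp ((convex_Icc _ _).prod hYμconv).isPreconnected hRD hw2R hw2U'
    exact hRU' ⟨⟨min_le_right _ _, le_max_right _ _⟩, hy1, le_of_lt hy2⟩
  -- apply the corner lemma at the corner c (with the edge {c,d})
  have hnc : ¬ (0 < σ * ((p b).2 - (p d).2)) := fun hs =>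
    corner_lemma G p hinj horth hplanar k v hadj b c hGbc hbc1 hbc D hD S hS U' x' hU'
      hfrU'₂ σ hσ Hstrip c d hGcd hcd hbc.symm (Or.inr rfl) hs hsegcd
  -- apply the corner lemma at the corner b (with the edge {b,a})
  have hnb : ¬ (0 < σ * ((p b).2 - (p a).2)) := fun hs =>
    corner_lemma G p hinj horth hplanar k v hadj b c hGbc hbc1 hbc D hD S hS U' x' hU'
      hfrU'₂ σ hσ Hstrip b a hGab.symm hab.symm rfl (Or.inl rfl) hs hsegab
  have hycb : (p c).2 = (p b).2 := hbc.symm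
  have hyd' : (p d).2 ≠ (p b).2 := by rw [← hycb]; exact hyd
  rcases hσ with rfl | rfl
  · left
    simp only [one_mul] at hnc hnb
    push_neg at hnc hnb
    constructor
    · rcases hya.lt_or_gt with hh | hh
      · exfalso; exact absurd (by linarith : (0:ℝ) < (p b).2 - (p a).2) (by linarith)
      · linarith
    · rcases hyd'.lt_or_gt with hh | hh
      · exfalso; exact absurd (by linarith : (0:ℝ) < (p b).2 - (p d).2) (by linarith)
      · linarith
  · right
    simp only [neg_mul, one_mul] at hnc hnb
    push_neg at hnc hnb
    constructor
    · rcases hya.lt_or_gt with hh | hh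
      · linarith
      · exfalso
        have : 0 < -((p b).2 - (p a).2) := by linarith
        linarith
    · rcases hyd'.lt_or_gt with hh | hh
      · linarith
      · exfalso
        have : 0 < -((p b).2 - (p d).2) := by linarith
        linarith
end

section
/- Let P be the path graph with vertices v_0, v_1, …, v_m (m ≥ 2) and edges {v_i, v_{i+1}} for 0 ≤ i < m, and let p be a planar strict orthogonal drawing of P. Assume: (i) the first edge {v_0, v_1} and the last edge {v_{m−1}, v_m} are drawn horizontal, with (p v_0).1 > (p v_1).1 and (p v_m).1 > (p v_{m−1}).1 (so the first and last edges are traversed in opposite horizontal directions); (ii) every edge drawn vertical is immediately preceded and immediately followed on the path by edges drawn horizontal (in particular no two consecutive edges are both vertical); (iii) for every vertical edge {v_i, v_{i+1}} (0 < i < i+1 < m), the quantities ((p v_{i−1}).1 − (p v_i).1) and ((p v_{i+2}).1 − (p v_{i+1}).1) are both positive or both negative (the two adjacent horizontal drawn segments lie on the same side of the vertical line through the edge). Then the number of edges of P drawn vertical is odd. -/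
lemma horiz_mem (a b : ℝ × ℝ) (h : a.2 = b.2) {t : ℝ}
    (ht : t ∈ segment ℝ a.1 b.1) : (t, a.2) ∈ segment ℝ a b := by
  obtain ⟨u, v, hu, hv, huv, huvt⟩ := ht
  refine ⟨u, v, hu, hv, huv, ?_⟩
  apply Prod.ext
  · simpa using huvt
  · simp only [Prod.snd_add, Prod.smul_snd, smul_eq_mul]
    rw [← h]; linear_combination a.2 * huv

lemma noreverse (m : ℕ) (p : ℕ → ℝ × ℝ)
    (hplanar : ∀ i < m, ∀ j < m, i ≠ j →
      ∀ x : ℝ × ℝ, x ∈ segment ℝ (p i) (p (i + 1)) → x ∈ segment ℝ (p j) (p (j + 1)) →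
        ∃ w : ℕ, p w = x ∧ (w = i ∨ w = i + 1) ∧ (w = j ∨ w = j + 1))
    (j : ℕ) (hjm : j + 1 < m)
    (h1 : (p j).2 = (p (j + 1)).2) (h2 : (p (j + 1)).2 = (p (j + 2)).2)
    (hne1 : (p j).1 ≠ (p (j + 1)).1) (hne2 : (p (j + 1)).1 ≠ (p (j + 2)).1) :
    ((p (j + 1)).1 < (p j).1 ↔ (p (j + 2)).1 < (p (j + 1)).1) := by
  set a := (p j).1 with ha
  set c := (p (j + 1)).1 with hc
  set b := (p (j + 2)).1 with hb
  -- rule out both segments on the same side of c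
  have key : ∀ t : ℝ, t ∈ segment ℝ a c → t ∈ segment ℝ c b → t = c := by
    intro t hta htb
    have hX1 : ((t, (p (j+1)).2) : ℝ × ℝ) ∈ segment ℝ (p j) (p (j + 1)) := by
      have := horiz_mem (p j) (p (j+1)) h1 hta
      rwa [h1] at this
    have hX2 : ((t, (p (j+1)).2) : ℝ × ℝ) ∈ segment ℝ (p (j+1)) (p (j + 2)) := by
      exact horiz_mem (p (j+1)) (p (j+2)) h2 htb
    obtain ⟨w, hw0, hw1, hw2⟩ := hplanar j (by omega) (j + 1) hjm (by omega)
      ((t, (p (j+1)).2)) hX1 hX2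
    have hw : w = j + 1 := by omega
    subst hw
    have := congrArg Prod.fst hw0
    simpa using this.symm
  constructor
  · intro hca
    rcases lt_or_gt_of_ne hne2 with h | h
    · -- c < b : both a and b on the right of c → contradiction
      exfalso
      set t := (c + min a b) / 2 with htdef
      have h1' : c < min a b := by simp [lt_min_iff]; constructor <;> linarith
      have ht1 : t ∈ segment ℝ a c := by
        rw [segment_symm, segment_eq_Icc (by linarith [min_le_left a b] : c ≤ a)]
        constructor <;> [linarith; linarith [min_le_left a b]]
      have ht2 : t ∈ segment ℝ c b := by
        rw [segment_eq_Icc (by linarith [min_le_right a b] : c ≤ b)]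
        constructor <;> [linarith; linarith [min_le_right a b]]
      have := key t ht1 ht2
      linarith
    · exact h
  · intro hbc
    rcases lt_or_gt_of_ne hne1 with h | h
    · -- a < c and b < c : both on the left → contradiction
      exfalso
      set t := (c + max a b) / 2 with htdef
      have h1' : max a b < c := by simp [max_lt_iff]; constructor <;> linarith
      have ht1 : t ∈ segment ℝ a c := by
        rw [segment_eq_Icc (by linarith [le_max_left a b] : a ≤ c)]
        constructor <;> [linarith [le_max_left a b]; linarith]
      have ht2 : t ∈ segment ℝ c b := by
        rw [segment_symm, segment_eq_Icc (by linarith [le_max_right a b] : b ≤ c)]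
        constructor <;> [linarith [le_max_right a b]; linarith]
      have := key t ht1 ht2
      linarith
    · exact h



/-- a planar strict orthogonal drawing of a path `v_0, …, v_m` whose first and
last edges are horizontal and traversed in opposite horizontal directions, in which every
vertical edge is surrounded by horizontal edges lying on the same side of it, has an odd
number of vertical edges.

Here `p i` is the position of the vertex `v_i` (for `i ≤ m`); the edge `{v_i, v_{i+1}}`
(for `i < m`) is drawn vertical when `(p i).1 = (p (i+1)).1` and horizontal when
`(p i).2 = (p (i+1)).2`. -/
theorem odd_vertical_edges_on_reversing_path
    (m : ℕ) (hm : 2 ≤ m) (p : ℕ → ℝ × ℝ)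
    -- `p` is injective on the vertices of the path
    (hinj : Set.InjOn p (Set.Iic m))
    -- every edge is drawn horizontal or vertical
    (horth : ∀ i < m, (p i).2 = (p (i + 1)).2 ∨ (p i).1 = (p (i + 1)).1)
    -- planarity: a common point of the drawn segments of two distinct edges is the image
    -- of a vertex incident to both edges
    (hplanar : ∀ i < m, ∀ j < m, i ≠ j →
      ∀ x : ℝ × ℝ, x ∈ segment ℝ (p i) (p (i + 1)) → x ∈ segment ℝ (p j) (p (j + 1)) →
        ∃ w : ℕ, p w = x ∧ (w = i ∨ w = i + 1) ∧ (w = j ∨ w = j + 1))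
    -- (i) the first and last edges are horizontal, traversed in opposite directions
    (hfirst : (p 0).2 = (p 1).2 ∧ (p 1).1 < (p 0).1)
    (hlast : (p (m - 1)).2 = (p m).2 ∧ (p (m - 1)).1 < (p m).1)
    -- (ii) every vertical edge is immediately preceded and followed by horizontal edges
    (hii : ∀ i < m, (p i).1 = (p (i + 1)).1 →
      0 < i ∧ i + 1 < m ∧ (p (i - 1)).2 = (p i).2 ∧ (p (i + 1)).2 = (p (i + 2)).2)
    -- (iii) the horizontal edges adjacent to a vertical edge lie on the same side of it
    (hiii : ∀ i : ℕ, 0 < i → i + 1 < m → (p i).1 = (p (i + 1)).1 →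
      (0 < (p (i - 1)).1 - (p i).1 ∧ 0 < (p (i + 2)).1 - (p (i + 1)).1) ∨
      ((p (i - 1)).1 - (p i).1 < 0 ∧ (p (i + 2)).1 - (p (i + 1)).1 < 0)) :
    Odd {i : ℕ | i < m ∧ (p i).1 = (p (i + 1)).1}.ncard := by
  classical
  -- nondegeneracy: a horizontal edge is not vertical
  have hnv : ∀ i < m, (p i).2 = (p (i + 1)).2 → (p i).1 ≠ (p (i + 1)).1 := by
    intro i him hh hv
    have : p i = p (i + 1) := Prod.ext hv hh
    have := hinj (by simp; omega : i ∈ Set.Iic m) (by simp; omega : i + 1 ∈ Set.Iic m) this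
    omega
  set C : ℕ → Finset ℕ :=
    fun n => (Finset.range n).filter (fun k => (p k).1 = (p (k + 1)).1) with hC
  -- main induction
  have main : ∀ i, i < m → (p i).2 = (p (i + 1)).2 →
      ((p (i + 1)).1 < (p i).1 ↔ Even (C i).card) := by
    intro i
    induction i using Nat.strong_induction_on with
    | _ i ih =>
      intro him hhor
      match i with
      | 0 => simp [hC, hfirst.2]
      | Nat.succ j =>
        show (p (j + 1 + 1)).1 < (p (j + 1)).1 ↔ Even (C (j + 1)).card
        have him' : j + 1 < m := him
        have hhor' : (p (j + 1)).2 = (p (j + 1 + 1)).2 := hhor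
        rcases horth j (by omega) with hj | hj
        · -- previous edge horizontal
          have hiff := noreverse m p hplanar j him' hj hhor'
            (hnv j (by omega) hj) (hnv (j + 1) him' hhor')
          have hcount : C (j + 1) = C j := by
            simp only [hC]
            rw [Finset.range_add_one, Finset.filter_insert, if_neg (hnv j (by omega) hj)]
          rw [hcount, ← hiff]
          exact ih j (by omega) (by omega) hj
        · -- previous edge vertical
          obtain ⟨hj0, hj1, h2a, h2b⟩ := hii j (by omega) hj
          obtain ⟨k, rfl⟩ : ∃ k, j = k + 1 := ⟨j - 1, by omega⟩
          have h2a' : (p k).2 = (p (k + 1)).2 := by simpa using h2a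
          have hsign := hiii (k + 1) (by omega) (by omega) hj
          simp only [Nat.add_sub_cancel] at hsign
          have hflip : ((p (k + 1 + 1 + 1)).1 < (p (k + 1 + 1)).1 ↔
              ¬ ((p (k + 1)).1 < (p k).1)) := by
            simp only [not_lt]
            rcases hsign with ⟨ha, hb⟩ | ⟨ha, hb⟩ <;> constructor <;> intro <;> linarith
          have hknv : ¬ ((p k).1 = (p (k + 1)).1) := hnv k (by omega) h2a'
          have hcount : (C (k + 1 + 1)).card = (C k).card + 1 := by
            simp only [hC]
            rw [Finset.range_add_one, Finset.filter_insert,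
              if_pos hj, Finset.range_add_one, Finset.filter_insert, if_neg hknv,
              Finset.card_insert_of_notMem (by simp)]
          rw [hflip, ih k (by omega) (by omega) h2a', hcount, Nat.even_add_one]
    -- done
  have hm1 : m - 1 + 1 = m := by omega
  have hlastnv : ¬ ((p (m - 1)).1 = (p m).1) := ne_of_lt hlast.2
  have hfin := main (m - 1) (by omega) (by rw [hm1]; exact hlast.1)
  rw [hm1] at hfin
  have hnotlt : ¬ ((p m).1 < (p (m - 1)).1) := not_lt.mpr (le_of_lt hlast.2)
  have hodd : ¬ Even (C (m - 1)).card := fun h => hnotlt (hfin.mpr h)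
  have hCm : C m = C (m - 1) := by
    simp only [hC]
    conv_lhs => rw [← hm1]
    rw [Finset.range_add_one, Finset.filter_insert, if_neg (by rw [hm1]; exact hlastnv)]
  have hset : {i : ℕ | i < m ∧ (p i).1 = (p (i + 1)).1} = ↑(C m) := by
    ext x; simp [hC]
  rw [hset, Set.ncard_coe_finset, hCm, ← Nat.not_even_iff_odd]
  exact hodd
end

section
/- Let p be a planar strict orthogonal drawing of a finite simple graph G. If v_0, v_1, …, v_k (k ≥ 1) is a path in G (distinct vertices, with {v_i, v_{i+1}} ∈ E for all i) all of whose edges are drawn horizontal, then the sequence (p v_0).1, (p v_1).1, …, (p v_k).1 is strictly monotone (strictly increasing or strictly decreasing); the analogous statement, with second coordinates in place of first coordinates, holds when all edges of the path are drawn vertical. -/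
lemma mem_seg_horiz_s6 (a b : ℝ × ℝ) (h : a.2 = b.2) (x1 : ℝ)
    (hx : x1 ∈ Set.uIcc a.1 b.1) : (x1, a.2) ∈ segment ℝ a b := by
  rw [← segment_eq_uIcc] at hx
  obtain ⟨s, t, hs, ht, hst, hx1⟩ := hx
  have h2 : s • a.2 + t • b.2 = a.2 := by
    rw [h]; simp only [smul_eq_mul]; linear_combination b.2 * hst
  exact ⟨s, t, hs, ht, hst, Prod.ext (by simpa using hx1) (by simpa using h2)⟩

lemma key_step {α : Type} (G : SimpleGraph α) (p : α → ℝ × ℝ)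
    (hplanar : IsPlanarDrawing G p) (a b c : α)
    (hab : G.Adj a b) (hbc : G.Adj b c) (hac : a ≠ c)
    (h1 : (p a).2 = (p b).2) (h2 : (p b).2 = (p c).2)
    (hab1 : (p a).1 ≠ (p b).1) (hbc1 : (p b).1 ≠ (p c).1) :
    ((p a).1 < (p b).1 ↔ (p b).1 < (p c).1) := by
  have hedge : s(a, b) ≠ s(b, c) := by
    intro hEq
    rw [Sym2.eq_iff] at hEq
    rcases hEq with ⟨h, h'⟩ | ⟨h, _⟩
    · exact hbc.ne (h ▸ h')
    · exact hac h
  constructor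
  · intro hlt
    by_contra hge
    have hcb : (p c).1 < (p b).1 := lt_of_le_of_ne (not_lt.mp hge) hbc1.symm
    set m1 : ℝ := (max (p a).1 (p c).1 + (p b).1) / 2 with hm1
    have hmax : max (p a).1 (p c).1 < m1 := by
      have := max_lt hlt hcb; rw [hm1]; linarith [le_max_left (p a).1 (p c).1]
    have hmb : m1 < (p b).1 := by
      have := max_lt hlt hcb; rw [hm1]; linarith
    have hma : (p a).1 < m1 := lt_of_le_of_lt (le_max_left _ _) hmax
    have hmc : (p c).1 < m1 := lt_of_le_of_lt (le_max_right _ _) hmax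
    have hmem1 : ((m1, (p a).2) : ℝ × ℝ) ∈ segment ℝ (p a) (p b) :=
      mem_seg_horiz_s6 _ _ h1 _ (Set.mem_uIcc.2 (Or.inl ⟨hma.le, hmb.le⟩))
    have hmem2 : ((m1, (p b).2) : ℝ × ℝ) ∈ segment ℝ (p b) (p c) :=
      mem_seg_horiz_s6 _ _ h2 _ (Set.mem_uIcc.2 (Or.inr ⟨hmc.le, hmb.le⟩))
    rw [h1] at hmem1
    obtain ⟨w, hw, hw1, hw2⟩ := hplanar a b b c hab hbc hedge _ hmem1 hmem2
    have : (p w).1 = m1 := by rw [hw]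
    rcases hw1 with rfl | rfl
    · exact hma.ne this
    · exact hmb.ne' this
  · intro hlt
    by_contra hge
    have hba : (p b).1 < (p a).1 := lt_of_le_of_ne (not_lt.mp hge) hab1.symm
    set m1 : ℝ := (min (p a).1 (p c).1 + (p b).1) / 2 with hm1
    have hmin : m1 < min (p a).1 (p c).1 := by
      have := lt_min hba hlt; rw [hm1]; linarith [min_le_left (p a).1 (p c).1]
    have hmb : (p b).1 < m1 := by
      have := lt_min hba hlt; rw [hm1]; linarith
    have hma : m1 < (p a).1 := lt_of_lt_of_le hmin (min_le_left _ _)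
    have hmc : m1 < (p c).1 := lt_of_lt_of_le hmin (min_le_right _ _)
    have hmem1 : ((m1, (p a).2) : ℝ × ℝ) ∈ segment ℝ (p a) (p b) :=
      mem_seg_horiz_s6 _ _ h1 _ (Set.mem_uIcc.2 (Or.inr ⟨hmb.le, hma.le⟩))
    have hmem2 : ((m1, (p b).2) : ℝ × ℝ) ∈ segment ℝ (p b) (p c) :=
      mem_seg_horiz_s6 _ _ h2 _ (Set.mem_uIcc.2 (Or.inl ⟨hmb.le, hmc.le⟩))
    rw [h1] at hmem1
    obtain ⟨w, hw, hw1, hw2⟩ := hplanar a b b c hab hbc hedge _ hmem1 hmem2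
    have : (p w).1 = m1 := by rw [hw]
    rcases hw1 with rfl | rfl
    · exact hma.ne' this
    · exact hmb.ne this

/-- Horizontal version of the main result. -/
lemma horiz_case {α : Type} (G : SimpleGraph α) (p : α → ℝ × ℝ)
    (hinj : Function.Injective p)
    (hplanar : IsPlanarDrawing G p)
    (k : ℕ) (hk : 1 ≤ k) (v : Fin (k + 1) → α) (hv : Function.Injective v)
    (hadj : ∀ i : Fin k, G.Adj (v i.castSucc) (v i.succ))
    (hh : ∀ i : Fin k, Horiz p (v i.castSucc) (v i.succ)) :
    StrictMono (fun i : Fin (k + 1) => (p (v i)).1) ∨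
      StrictAnti (fun i : Fin (k + 1) => (p (v i)).1) := by
  set f : Fin (k + 1) → ℝ := fun i => (p (v i)).1 with hf
  have hne : ∀ i : Fin k, f i.castSucc ≠ f i.succ := by
    intro i h
    have : p (v i.castSucc) = p (v i.succ) := Prod.ext h (hh i)
    exact absurd (Fin.castSucc_lt_succ (i := i)).ne (by simp [hv (hinj this)])
  have hcons : ∀ i j : Fin k, (i : ℕ) + 1 = (j : ℕ) →
      (f i.castSucc < f i.succ ↔ f j.castSucc < f j.succ) := by
    intro i j hij
    have hbe : i.succ = j.castSucc := Fin.ext (by simp [← hij])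
    have hac : v i.castSucc ≠ v j.succ := by
      intro h; have := hv h; rw [Fin.ext_iff] at this; simp [← hij] at this; omega
    have := key_step G p hplanar _ _ _ (hadj i) (hbe ▸ hadj j) hac
      (hh i) (hbe ▸ hh j) (hne i) (hbe ▸ hne j)
    rw [← hbe]
    exact this
  have hall : ∀ n (hn : n < k),
      (f (⟨n, hn⟩ : Fin k).castSucc < f (⟨n, hn⟩ : Fin k).succ ↔
        f (⟨0, by omega⟩ : Fin k).castSucc < f (⟨0, by omega⟩ : Fin k).succ) := by
    intro n
    induction n with
    | zero => intro _; rfl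
    | succ m ih =>
      intro hn
      exact (hcons ⟨m, by omega⟩ ⟨m + 1, hn⟩ rfl).symm.trans (ih (by omega))
  have hstep : ∀ i : Fin k, (f i.castSucc < f i.succ ↔
      f (⟨0, by omega⟩ : Fin k).castSucc < f (⟨0, by omega⟩ : Fin k).succ) :=
    fun i => hall i.1 i.2
  set c0 := f (⟨0, by omega⟩ : Fin k).castSucc
  set c1 := f (⟨0, by omega⟩ : Fin k).succ
  by_cases h0 : c0 < c1
  · left
    rw [Fin.strictMono_iff_lt_succ]
    exact fun i => (hstep i).2 h0
  · right
    rw [Fin.strictAnti_iff_succ_lt]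
    intro i
    rcases lt_trichotomy (f i.castSucc) (f i.succ) with h | h | h
    · exact absurd ((hstep i).1 h) h0
    · exact absurd h (hne i)
    · exact h

/-- in a planar strict orthogonal drawing, along a path all of whose edges are
drawn horizontal the first coordinates are strictly monotone, and similarly for vertical. -/
theorem monotone_along_uniform_path
    {α : Type} [Fintype α] (G : SimpleGraph α) (p : α → ℝ × ℝ)
    (hinj : Function.Injective p)
    (horth : ∀ u v : α, G.Adj u v → Horiz p u v ∨ Vert p u v)
    (hplanar : IsPlanarDrawing G p)
    (k : ℕ) (hk : 1 ≤ k) (v : Fin (k + 1) → α) (hv : Function.Injective v)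
    (hadj : ∀ i : Fin k, G.Adj (v i.castSucc) (v i.succ)) :
    ((∀ i : Fin k, Horiz p (v i.castSucc) (v i.succ)) →
      StrictMono (fun i : Fin (k + 1) => (p (v i)).1) ∨
      StrictAnti (fun i : Fin (k + 1) => (p (v i)).1)) ∧
    ((∀ i : Fin k, Vert p (v i.castSucc) (v i.succ)) →
      StrictMono (fun i : Fin (k + 1) => (p (v i)).2) ∨
      StrictAnti (fun i : Fin (k + 1) => (p (v i)).2)) := by
  constructor
  · exact horiz_case G p hinj hplanar k hk v hv hadj
  · intro hvert
    -- Swap coordinates and use the horizontal case.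
    set q : α → ℝ × ℝ := fun a => Prod.swap (p a) with hq
    have hdir : ∀ a b x : ℝ × ℝ, x ∈ segment ℝ a b →
        Prod.swap x ∈ segment ℝ (Prod.swap a) (Prod.swap b) := by
      rintro a b x ⟨s, t, hs, ht, hst, hx⟩
      exact ⟨s, t, hs, ht, hst, by rw [← hx]; rfl⟩
    have hswapseg : ∀ a b x : ℝ × ℝ, x ∈ segment ℝ (Prod.swap a) (Prod.swap b) ↔
        Prod.swap x ∈ segment ℝ a b := by
      intro a b x
      constructor
      · intro h; simpa using hdir _ _ _ h
      · intro h; simpa using hdir a b _ h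
    have hqinj : Function.Injective q := fun a b h =>
      hinj (Prod.swap_injective (by exact h))
    have hqplanar : IsPlanarDrawing G q := by
      intro u v u' v' huv huv' hne x hx hx'
      obtain ⟨w, hw, hw1, hw2⟩ := hplanar u v u' v' huv huv' hne (Prod.swap x)
        ((hswapseg _ _ _).1 hx) ((hswapseg _ _ _).1 hx')
      exact ⟨w, by rw [hq]; simp [hw], hw1, hw2⟩
    have := horiz_case G q hqinj hqplanar k hk v hv hadj
      (fun i => by simpa [hq, Horiz, Vert] using hvert i)
    simpa [hq] using this
end

section
/- Let p be a planar strict orthogonal drawing of a finite simple graph G. Then for every cycle v_0, v_1, …, v_{k−1}, v_0 of G with edges e_i = {v_i, v_{i+1 mod k}}, there exist indices 0 ≤ i_1 < i_2 < i_3 < i_4 ≤ k − 1 such that either e_{i_1} and e_{i_3} are drawn horizontal and e_{i_2} and e_{i_4} are drawn vertical, or e_{i_1} and e_{i_3} are drawn vertical and e_{i_2} and e_{i_4} are drawn horizontal. (That is, the cyclic sequence of drawn orientations of the edges of any cycle contains H, V, H, V as a cyclic subsequence; in particular every cycle has at least two horizontal and at least two vertical edges, and G has no cycle of length 3.) -/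
lemma swap_mem_segment' {u w x : ℝ × ℝ} (h : x ∈ segment ℝ u w) :
    x.swap ∈ segment ℝ u.swap w.swap := by
  obtain ⟨a, b, ha, hb, hab, rfl⟩ := h
  exact ⟨a, b, ha, hb, hab, by simp [Prod.ext_iff]⟩

lemma mem_segment_horiz' {a b c y : ℝ} (h1 : a ≤ c) (h2 : c ≤ b) :
    ((c, y) : ℝ × ℝ) ∈ segment ℝ (a, y) (b, y) := by
  rcases eq_or_lt_of_le (h1.trans h2) with hab | hab
  · have hca : c = a := le_antisymm (hab ▸ h2) h1
    subst hca
    exact left_mem_segment ℝ _ _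
  · refine ⟨(b - c) / (b - a), (c - a) / (b - a),
      div_nonneg (by linarith) (by linarith), div_nonneg (by linarith) (by linarith), ?_, ?_⟩
    · rw [← add_div, div_eq_one_iff_eq (by linarith)]; ring
    · have hba : b - a ≠ 0 := by linarith
      refine Prod.ext ?_ ?_ <;> simp [smul_eq_mul] <;> field_simp <;> ring

lemma chain_eq' {α : Type} {k : ℕ} (v : ZMod k → α) (f : α → ℝ) :
    ∀ (b a : ℕ), a ≤ b → (∀ t : ℕ, a ≤ t → t < b → f (v t) = f (v ((t : ZMod k) + 1))) →
      f (v a) = f (v b) := by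
  intro b
  induction b with
  | zero => intro a ha _; interval_cases a; rfl
  | succ n ih =>
    intro a ha h
    rcases Nat.lt_succ_iff_lt_or_eq.mp (Nat.lt_succ_of_le ha) with h' | rfl
    · have h1 : f (v a) = f (v n) := ih a (by omega) (fun t ht1 ht2 => h t ht1 (by omega))
      have h2 : f (v n) = f (v ((n : ZMod k) + 1)) := h n (by omega) (by omega)
      have h3 : ((n + 1 : ℕ) : ZMod k) = (n : ZMod k) + 1 := by push_cast; ring
      rw [h1, h2, h3]
    · rfl

lemma cast_nat_inj' {k : ℕ} [NeZero k] {a b : ℕ} (ha : a < k) (hb : b < k)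
    (h : (a : ZMod k) = b) : a = b := by
  have := congrArg ZMod.val h
  rwa [ZMod.val_cast_of_lt ha, ZMod.val_cast_of_lt hb] at this

lemma no_all_horiz {α : Type} (G : SimpleGraph α) (p : α → ℝ × ℝ)
    (hinj : Function.Injective p) (hplanar : IsPlanarDrawing G p)
    (k : ℕ) (hk : 3 ≤ k) (v : ZMod k → α) (hv : Function.Injective v)
    (hadj : ∀ i : ZMod k, G.Adj (v i) (v (i + 1)))
    (hall : ∀ i : ZMod k, Horiz p (v i) (v (i + 1))) : False := by
  haveI : NeZero k := ⟨by omega⟩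
  -- all second coordinates are equal
  have hyn : ∀ t : ℕ, (p (v (t : ZMod k))).2 = (p (v (0 : ZMod k))).2 := by
    intro t
    induction t with
    | zero => norm_num
    | succ n ih =>
      have h3 : ((n + 1 : ℕ) : ZMod k) = (n : ZMod k) + 1 := by push_cast; ring
      rw [h3, ← hall (n : ZMod k)]; exact ih
  have hy : ∀ i : ZMod k, (p (v i)).2 = (p (v 0)).2 := by
    intro i
    have := hyn i.val
    rwa [ZMod.natCast_rightInverse i] at this
  -- vertex of maximal first coordinate
  obtain ⟨i0, hmax⟩ := Finite.exists_max (fun i : ZMod k => (p (v i)).1)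
  have hadj1 : G.Adj (v (i0 - 1)) (v i0) := by
    have := hadj (i0 - 1); rwa [sub_add_cancel] at this
  have hadj2 : G.Adj (v i0) (v (i0 + 1)) := hadj i0
  have hne2 : (i0 - 1 : ZMod k) ≠ i0 + 1 := by
    intro h
    have h2 : ((2 : ℕ) : ZMod k) = ((0 : ℕ) : ZMod k) := by push_cast; linear_combination -h
    have := cast_nat_inj' (by omega) (by omega) h2
    omega
  have hvne : v (i0 - 1) ≠ v (i0 + 1) := fun h => hne2 (hv h)
  have hedges : s(v (i0 - 1), v i0) ≠ s(v i0, v (i0 + 1)) := by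
    intro h
    rcases Sym2.eq_iff.mp h with ⟨h1, h2⟩ | ⟨h1, h2⟩
    · exact hadj1.ne h1
    · exact hvne h1
  -- strict inequalities
  have hxlt : ∀ j : ZMod k, v j ≠ v i0 → (p (v j)).1 < (p (v i0)).1 := by
    intro j hj
    rcases lt_or_eq_of_le (hmax j) with h | h
    · exact h
    · exact absurd (hinj (Prod.ext h ((hy j).trans (hy i0).symm))) hj
  have hlt1 : (p (v (i0 - 1))).1 < (p (v i0)).1 := hxlt _ hadj1.ne
  have hlt2 : (p (v (i0 + 1))).1 < (p (v i0)).1 := hxlt _ hadj2.ne'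
  -- rewrite points in coordinates
  have e0 : p (v i0) = ((p (v i0)).1, (p (v 0)).2) := Prod.ext rfl (hy i0)
  have e1 : p (v (i0 - 1)) = ((p (v (i0 - 1))).1, (p (v 0)).2) := Prod.ext rfl (hy _)
  have e2 : p (v (i0 + 1)) = ((p (v (i0 + 1))).1, (p (v 0)).2) := Prod.ext rfl (hy _)
  rcases le_total ((p (v (i0 + 1))).1) ((p (v (i0 - 1))).1) with hc | hc
  · -- q = p (v (i0 - 1))
    have hseg2 : p (v (i0 - 1)) ∈ segment ℝ (p (v i0)) (p (v (i0 + 1))) := by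
      rw [segment_symm, e0, e1, e2]
      exact mem_segment_horiz' hc hlt1.le
    obtain ⟨w, hw, hw1, hw2⟩ := hplanar _ _ _ _ hadj1 hadj2 hedges _
      (left_mem_segment ℝ _ _) hseg2
    have hwe : w = v (i0 - 1) := hinj hw
    rcases hw2 with h | h
    · exact hadj1.ne (hwe.symm.trans h)
    · exact hvne (hwe.symm.trans h)
  · -- q = p (v (i0 + 1))
    have hseg1 : p (v (i0 + 1)) ∈ segment ℝ (p (v (i0 - 1))) (p (v i0)) := by
      rw [e0, e1, e2]
      exact mem_segment_horiz' hc hlt2.le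
    obtain ⟨w, hw, hw1, hw2⟩ := hplanar _ _ _ _ hadj1 hadj2 hedges _
      hseg1 (right_mem_segment ℝ _ _)
    have hwe : w = v (i0 + 1) := hinj hw
    rcases hw1 with h | h
    · exact hvne (hwe.symm.trans h).symm
    · exact hadj2.ne (h.symm.trans hwe)

lemma no_all_vert {α : Type} (G : SimpleGraph α) (p : α → ℝ × ℝ)
    (hinj : Function.Injective p) (hplanar : IsPlanarDrawing G p)
    (k : ℕ) (hk : 3 ≤ k) (v : ZMod k → α) (hv : Function.Injective v)
    (hadj : ∀ i : ZMod k, G.Adj (v i) (v (i + 1)))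
    (hall : ∀ i : ZMod k, Vert p (v i) (v (i + 1))) : False := by
  have hinj' : Function.Injective (Prod.swap ∘ p) :=
    fun a b h => hinj (Prod.swap_injective h)
  have hplanar' : IsPlanarDrawing G (Prod.swap ∘ p) := by
    intro u w u' w' h1 h2 h3 x hx1 hx2
    obtain ⟨z, hz, hz1, hz2⟩ := hplanar u w u' w' h1 h2 h3 x.swap
      (by simpa using swap_mem_segment' hx1) (by simpa using swap_mem_segment' hx2)
    refine ⟨z, ?_, hz1, hz2⟩
    show Prod.swap (p z) = x
    rw [hz, Prod.swap_swap]
  exact no_all_horiz G (Prod.swap ∘ p) hinj' hplanar' k hk v hv hadj (fun i => hall i)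


/-- in a planar strict orthogonal drawing, the cyclic sequence of drawn
orientations of the edges of any cycle contains H, V, H, V as a cyclic subsequence. -/
theorem cycle_contains_HVHV
    {α : Type} [Fintype α] (G : SimpleGraph α) (p : α → ℝ × ℝ)
    (hinj : Function.Injective p)
    (horth : ∀ u v : α, G.Adj u v → Horiz p u v ∨ Vert p u v)
    (hplanar : IsPlanarDrawing G p)
    (k : ℕ) (hk : 3 ≤ k) (v : ZMod k → α) (hv : Function.Injective v)
    (hadj : ∀ i : ZMod k, G.Adj (v i) (v (i + 1))) :
    ∃ i₁ i₂ i₃ i₄ : ℕ, i₁ < i₂ ∧ i₂ < i₃ ∧ i₃ < i₄ ∧ i₄ ≤ k - 1 ∧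
      ((Horiz p (v (i₁ : ZMod k)) (v ((i₁ : ZMod k) + 1)) ∧
        Vert p (v (i₂ : ZMod k)) (v ((i₂ : ZMod k) + 1)) ∧
        Horiz p (v (i₃ : ZMod k)) (v ((i₃ : ZMod k) + 1)) ∧
        Vert p (v (i₄ : ZMod k)) (v ((i₄ : ZMod k) + 1))) ∨
       (Vert p (v (i₁ : ZMod k)) (v ((i₁ : ZMod k) + 1)) ∧
        Horiz p (v (i₂ : ZMod k)) (v ((i₂ : ZMod k) + 1)) ∧
        Vert p (v (i₃ : ZMod k)) (v ((i₃ : ZMod k) + 1)) ∧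
        Horiz p (v (i₄ : ZMod k)) (v ((i₄ : ZMod k) + 1)))) := by
  classical
  haveI : NeZero k := ⟨by omega⟩
  set s : ℕ → Bool := fun t => decide (Horiz p (v (t : ZMod k)) (v ((t : ZMod k) + 1))) with hsdef
  have Hs : ∀ t : ℕ, s t = true → Horiz p (v (t : ZMod k)) (v ((t : ZMod k) + 1)) :=
    fun t h => of_decide_eq_true h
  have Vs : ∀ t : ℕ, s t = false → Vert p (v (t : ZMod k)) (v ((t : ZMod k) + 1)) :=
    fun t h => (horth _ _ (hadj _)).resolve_left (of_decide_eq_false h)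
  have bnot : ∀ a b : Bool, a ≠ b → b = !a := by decide
  by_contra hcon
  -- no alternating 4-pattern
  have pat : ∀ a1 a2 a3 a4 : ℕ, a1 < a2 → a2 < a3 → a3 < a4 → a4 ≤ k - 1 →
      s a1 ≠ s a2 → s a2 ≠ s a3 → s a3 ≠ s a4 → False := by
    intro a1 a2 a3 a4 h12 h23 h34 h4 d1 d2 d3
    apply hcon
    refine ⟨a1, a2, a3, a4, h12, h23, h34, h4, ?_⟩
    cases hb1 : s a1 <;> cases hb2 : s a2 <;> cases hb3 : s a3 <;> cases hb4 : s a4 <;>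
      rw [hb1, hb2] at d1 <;> rw [hb2, hb3] at d2 <;> rw [hb3, hb4] at d3 <;>
      first
        | exact absurd rfl d1
        | exact absurd rfl d2
        | exact absurd rfl d3
        | exact Or.inr ⟨Vs _ hb1, Hs _ hb2, Vs _ hb3, Hs _ hb4⟩
        | exact Or.inl ⟨Hs _ hb1, Vs _ hb2, Hs _ hb3, Vs _ hb4⟩
  -- no three changes
  have no3 : ∀ j1 j2 j3 : ℕ, j1 < j2 → j2 < j3 → j3 < k - 1 →
      s j1 ≠ s (j1 + 1) → s j2 ≠ s (j2 + 1) → s j3 ≠ s (j3 + 1) → False := by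
    intro j1 j2 j3 h12 h23 h3k c1 c2 c3
    obtain ⟨a1, ha1lt, ha1⟩ : ∃ a1, a1 < j2 ∧ s a1 ≠ s j2 := by
      by_cases e1 : s j1 = s j2
      · have hne : j1 + 1 ≠ j2 := fun h => c1 (by rw [h]; exact e1)
        exact ⟨j1 + 1, by omega, fun hh => c1 (e1.trans hh.symm)⟩
      · exact ⟨j1, h12, e1⟩
    obtain ⟨a4, ha4gt, ha4le, ha4⟩ : ∃ a4, j2 + 1 < a4 ∧ a4 ≤ k - 1 ∧ s (j2 + 1) ≠ s a4 := by
      by_cases e3 : s (j2 + 1) = s j3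
      · exact ⟨j3 + 1, by omega, by omega, fun hh => c3 (e3.symm.trans hh)⟩
      · have hne : j2 + 1 ≠ j3 := fun h => e3 (by rw [h])
        exact ⟨j3, by omega, by omega, e3⟩
    exact pat a1 j2 (j2 + 1) a4 ha1lt (by omega) ha4gt ha4le ha1 c2 ha4
  -- constancy on an interval without changes
  have const_of : ∀ a b : ℕ, (∀ t, a ≤ t → t < b → s t = s (t + 1)) →
      ∀ t, a ≤ t → t ≤ b → s t = s a := by
    intro a b h t
    induction t with
    | zero => intro ht1 _; rw [Nat.le_zero.mp ht1]
    | succ n ih =>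
      intro ht1 ht2
      rcases eq_or_lt_of_le ht1 with h' | h'
      · exact congrArg s h'.symm
      · exact ((h n (by omega) (by omega)).symm).trans (ih (by omega) (by omega))
  -- distinct vertices give distinct points
  have vfix : ∀ a b : ℕ, a < b → b < k → p (v (a : ZMod k)) = p (v (b : ZMod k)) → False := by
    intro a b hab hbk hp
    have h1 := hv (hinj hp)
    have h2 := cast_nat_inj' (by omega) hbk h1
    omega
  by_cases h1 : ∃ j, j < k - 1 ∧ s j ≠ s (j + 1)
  · -- at least one change
    set j1 := Nat.find h1 with hj1def
    have hj1 := Nat.find_spec h1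
    have hj1min : ∀ m, m < j1 → ¬(m < k - 1 ∧ s m ≠ s (m + 1)) := fun m hm => Nat.find_min h1 hm
    have hb1 : ∀ t, t ≤ j1 → s t = s j1 := by
      have hc : ∀ t, 0 ≤ t → t < j1 → s t = s (t + 1) := by
        intro t _ ht
        by_contra hh
        exact hj1min t ht ⟨by omega, hh⟩
      intro t ht
      rw [const_of 0 j1 hc t (by omega) ht, const_of 0 j1 hc j1 (by omega) le_rfl]
    have hx1 : s (j1 + 1) = !(s j1) := bnot _ _ hj1.2
    by_cases h2 : ∃ j, j1 < j ∧ j < k - 1 ∧ s j ≠ s (j + 1)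
    · -- at least two changes
      set j2 := Nat.find h2 with hj2def
      have hj2 := Nat.find_spec h2
      have hj2min : ∀ m, m < j2 → ¬(j1 < m ∧ m < k - 1 ∧ s m ≠ s (m + 1)) :=
        fun m hm => Nat.find_min h2 hm
      by_cases h3 : ∃ j, j2 < j ∧ j < k - 1 ∧ s j ≠ s (j + 1)
      · obtain ⟨j3, hj3a, hj3b, hj3c⟩ := h3
        exact no3 j1 j2 j3 hj2.1 hj3a hj3b hj1.2 hj2.2.2 hj3c
      · -- exactly two changes: blocks [0,j1], [j1+1,j2], [j2+1,k-1]
        have hbm : ∀ t, j1 + 1 ≤ t → t ≤ j2 → s t = s (j1 + 1) := by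
          apply const_of
          intro t ht1 ht2
          by_contra hh
          exact hj2min t ht2 ⟨by omega, by omega, hh⟩
        have hb3 : ∀ t, j2 + 1 ≤ t → t ≤ k - 1 → s t = s (j2 + 1) := by
          apply const_of
          intro t ht1 ht2
          by_contra hh
          exact h3 ⟨t, by omega, by omega, hh⟩
        have hx2 : s (j2 + 1) = !(s j2) := bnot _ _ hj2.2.2
        have hmid : s j2 = !(s j1) := (hbm j2 (by omega) le_rfl).trans hx1
        have hend : s (j2 + 1) = s j1 := by rw [hx2, hmid, Bool.not_not]
        have hkey : p (v ((j1 + 1 : ℕ) : ZMod k)) = p (v ((j2 + 1 : ℕ) : ZMod k)) := by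
          cases hval : s j1
          · -- outer blocks vertical, middle horizontal
            have chA1 : (p (v ((0 : ℕ) : ZMod k))).1 = (p (v ((j1 + 1 : ℕ) : ZMod k))).1 :=
              chain_eq' v (fun u => (p u).1) (j1 + 1) 0 (by omega)
                (fun t _ ht2 => Vs t ((hb1 t (by omega)).trans hval))
            have chM : (p (v ((j1 + 1 : ℕ) : ZMod k))).2 = (p (v ((j2 + 1 : ℕ) : ZMod k))).2 :=
              chain_eq' v (fun u => (p u).2) (j2 + 1) (j1 + 1) (by omega)
                (fun t ht1 ht2 => Hs t (by rw [hbm t ht1 (by omega), hx1, hval]; rfl))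
            have chA2 : (p (v ((j2 + 1 : ℕ) : ZMod k))).1 = (p (v ((k : ℕ) : ZMod k))).1 :=
              chain_eq' v (fun u => (p u).1) k (j2 + 1) (by omega)
                (fun t ht1 ht2 => Vs t (by rw [hb3 t ht1 (by omega), hend, hval]))
            rw [Nat.cast_zero] at chA1
            rw [ZMod.natCast_self] at chA2
            exact Prod.ext (chA1.symm.trans chA2.symm) chM
          · -- outer blocks horizontal, middle vertical
            have chA1 : (p (v ((0 : ℕ) : ZMod k))).2 = (p (v ((j1 + 1 : ℕ) : ZMod k))).2 :=
              chain_eq' v (fun u => (p u).2) (j1 + 1) 0 (by omega)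
                (fun t _ ht2 => Hs t ((hb1 t (by omega)).trans hval))
            have chM : (p (v ((j1 + 1 : ℕ) : ZMod k))).1 = (p (v ((j2 + 1 : ℕ) : ZMod k))).1 :=
              chain_eq' v (fun u => (p u).1) (j2 + 1) (j1 + 1) (by omega)
                (fun t ht1 ht2 => Vs t (by rw [hbm t ht1 (by omega), hx1, hval]; rfl))
            have chA2 : (p (v ((j2 + 1 : ℕ) : ZMod k))).2 = (p (v ((k : ℕ) : ZMod k))).2 :=
              chain_eq' v (fun u => (p u).2) k (j2 + 1) (by omega)
                (fun t ht1 ht2 => Hs t (by rw [hb3 t ht1 (by omega), hend, hval]))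
            rw [Nat.cast_zero] at chA1
            rw [ZMod.natCast_self] at chA2
            exact Prod.ext chM (chA1.symm.trans chA2.symm)
        exact vfix (j1 + 1) (j2 + 1) (by omega) (by omega) hkey
    · -- exactly one change: blocks [0,j1], [j1+1,k-1]
      have hb2 : ∀ t, j1 + 1 ≤ t → t ≤ k - 1 → s t = s (j1 + 1) := by
        apply const_of
        intro t ht1 ht2
        by_contra hh
        exact h2 ⟨t, by omega, by omega, hh⟩
      have hkey : p (v ((0 : ℕ) : ZMod k)) = p (v ((j1 + 1 : ℕ) : ZMod k)) := by
        cases hval : s j1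
        · have ch1 : (p (v ((0 : ℕ) : ZMod k))).1 = (p (v ((j1 + 1 : ℕ) : ZMod k))).1 :=
            chain_eq' v (fun u => (p u).1) (j1 + 1) 0 (by omega)
              (fun t _ ht2 => Vs t ((hb1 t (by omega)).trans hval))
          have ch2 : (p (v ((j1 + 1 : ℕ) : ZMod k))).2 = (p (v ((k : ℕ) : ZMod k))).2 :=
            chain_eq' v (fun u => (p u).2) k (j1 + 1) (by omega)
              (fun t ht1 ht2 => Hs t (by rw [hb2 t ht1 (by omega), hx1, hval]; rfl))
          rw [ZMod.natCast_self] at ch2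
          refine Prod.ext ch1 ?_
          rw [Nat.cast_zero]
          exact ch2.symm
        · have ch1 : (p (v ((0 : ℕ) : ZMod k))).2 = (p (v ((j1 + 1 : ℕ) : ZMod k))).2 :=
            chain_eq' v (fun u => (p u).2) (j1 + 1) 0 (by omega)
              (fun t _ ht2 => Hs t ((hb1 t (by omega)).trans hval))
          have ch2 : (p (v ((j1 + 1 : ℕ) : ZMod k))).1 = (p (v ((k : ℕ) : ZMod k))).1 :=
            chain_eq' v (fun u => (p u).1) k (j1 + 1) (by omega)
              (fun t ht1 ht2 => Vs t (by rw [hb2 t ht1 (by omega), hx1, hval]; rfl))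
          rw [ZMod.natCast_self] at ch2
          refine Prod.ext ?_ ch1
          rw [Nat.cast_zero]
          exact ch2.symm
      exact vfix 0 (j1 + 1) (by omega) (by omega) hkey
  · -- no change at all: all edges have the same orientation
    have hc : ∀ t, 0 ≤ t → t < k - 1 → s t = s (t + 1) := by
      intro t _ ht
      by_contra hh
      exact h1 ⟨t, ht, hh⟩
    have hconst : ∀ t, t ≤ k - 1 → s t = s 0 := fun t ht => const_of 0 (k - 1) hc t (by omega) ht
    cases hb : s 0
    · apply no_all_vert G p hinj hplanar k hk v hv hadj
      intro i
      have h0 : s i.val = false := (hconst i.val (by have := ZMod.val_lt i; omega)).trans hb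
      have := Vs i.val h0
      rwa [ZMod.natCast_rightInverse i] at this
    · apply no_all_horiz G p hinj hplanar k hk v hv hadj
      intro i
      have h0 : s i.val = true := (hconst i.val (by have := ZMod.val_lt i; omega)).trans hb
      have := Hs i.val h0
      rwa [ZMod.natCast_rightInverse i] at this
end

section
/- Let C_k be the cycle graph with vertices w_0, …, w_{k−1} and edges e_i = {w_i, w_{i+1 mod k}} (k ≥ 3), equipped with an HV-labelling λ. Then C_k admits a good orthogonal drawing if and only if there exist indices 0 ≤ i_1 < i_2 < i_3 < i_4 ≤ k − 1 such that either λ(e_{i_1}) = λ(e_{i_3}) = H and λ(e_{i_2}) = λ(e_{i_4}) = V, or λ(e_{i_1}) = λ(e_{i_3}) = V and λ(e_{i_2}) = λ(e_{i_4}) = H (i.e., the cyclic sequence of labels contains H, V, H, V as a cyclic subsequence). -/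
/-- The two possible orientations of an edge in an HV-restricted graph. -/
inductive HVLabel : Type
  | H : HVLabel
  | V : HVLabel
  deriving DecidableEq

/-- The cycle graph `C_k` on vertex set `ZMod k`, with edges `e_i = {i, i+1}`. -/
def cycleGraph (k : ℕ) : SimpleGraph (ZMod k) where
  Adj i j := i ≠ j ∧ (j = i + 1 ∨ i = j + 1)
  symm := by
    constructor
    intro i j hij
    exact ⟨hij.1.symm, hij.2.symm⟩
  loopless := by
    constructor
    intro i hi
    exact hi.1 rfl

/-- For a labelling `lab` of the edges of `C_k` (where `lab i` is the label of the edge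
`e_i = {i, i+1}`), the drawing `p` respects the labelling. -/
def CycleRespects (k : ℕ) (lab : ZMod k → HVLabel) (p : ZMod k → ℝ × ℝ) : Prop :=
  ∀ i : ZMod k, (lab i = HVLabel.H → Horiz p i (i + 1)) ∧ (lab i = HVLabel.V → Vert p i (i + 1))

/-- A good orthogonal drawing of the HV-restricted cycle `C_k`. -/
def CycleGood (k : ℕ) (lab : ZMod k → HVLabel) (p : ZMod k → ℝ × ℝ) : Prop :=
  Function.Injective p ∧ IsPlanarDrawing (cycleGraph k) p ∧ CycleRespects k lab p

/-- The cyclic sequence of labels of the edges of `C_k` contains H, V, H, V as a cyclic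
subsequence. -/
def HasHVHV (k : ℕ) (lab : ZMod k → HVLabel) : Prop :=
  ∃ i₁ i₂ i₃ i₄ : ℕ, i₁ < i₂ ∧ i₂ < i₃ ∧ i₃ < i₄ ∧ i₄ ≤ k - 1 ∧
    ((lab (i₁ : ZMod k) = HVLabel.H ∧ lab (i₂ : ZMod k) = HVLabel.V ∧
      lab (i₃ : ZMod k) = HVLabel.H ∧ lab (i₄ : ZMod k) = HVLabel.V) ∨
     (lab (i₁ : ZMod k) = HVLabel.V ∧ lab (i₂ : ZMod k) = HVLabel.H ∧
      lab (i₃ : ZMod k) = HVLabel.V ∧ lab (i₄ : ZMod k) = HVLabel.H))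

lemma mem_seg_horiz_s8 {x₁ x₂ c : ℝ} {z : ℝ × ℝ} :
    z ∈ segment ℝ (x₁, c) (x₂, c) ↔ z.2 = c ∧ z.1 ∈ Set.uIcc x₁ x₂ := by
  constructor
  · intro h
    have h2 := Prod.segment_subset _ _ h
    simp only [Set.mem_prod] at h2
    obtain ⟨h3, h4⟩ := h2
    rw [segment_same] at h4
    rw [segment_eq_uIcc] at h3
    exact ⟨h4, h3⟩
  · rintro ⟨h4, h3⟩
    rw [← segment_eq_uIcc] at h3
    have := Prod.image_mk_segment_left (𝕜 := ℝ) x₁ x₂ c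
    rw [← this]
    exact ⟨z.1, h3, by ext <;> simp [h4.symm]⟩

lemma mem_seg_vert_s8 {y₁ y₂ c : ℝ} {z : ℝ × ℝ} :
    z ∈ segment ℝ (c, y₁) (c, y₂) ↔ z.1 = c ∧ z.2 ∈ Set.uIcc y₁ y₂ := by
  constructor
  · intro h
    have h2 := Prod.segment_subset _ _ h
    simp only [Set.mem_prod] at h2
    obtain ⟨h3, h4⟩ := h2
    rw [segment_same] at h3
    rw [segment_eq_uIcc] at h4
    exact ⟨h3, h4⟩
  · rintro ⟨h4, h3⟩
    rw [← segment_eq_uIcc] at h3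
    have := Prod.image_mk_segment_right (𝕜 := ℝ) c y₁ y₂
    rw [← this]
    exact ⟨z.2, h3, by ext <;> simp [h4.symm]⟩


namespace HVx

lemma hv_cases (x : HVLabel) : x = HVLabel.H ∨ x = HVLabel.V := by cases x <;> simp

section Construction

variable (k : ℕ) (lab : ZMod k → HVLabel) (s : ZMod k)

/-- walk labels -/
def Lw : ℕ → HVLabel := fun j => lab (s + (j : ZMod k))

/-- block index of edge j along the walk -/
def tb : ℕ → ℕ
  | 0 => 0
  | j+1 => if Lw k lab s (j+1) = Lw k lab s j then tb j else tb j + 1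

lemma tb_step (j : ℕ) : tb k lab s (j+1) = tb k lab s j ∨ tb k lab s (j+1) = tb k lab s j + 1 := by
  rw [tb]; split <;> simp

lemma tb_mono : Monotone (tb k lab s) := by
  apply monotone_nat_of_le_succ
  intro j
  rcases tb_step k lab s j with h | h <;> omega

lemma tb_parity (h0 : Lw k lab s 0 = HVLabel.H) (j : ℕ) :
    Lw k lab s j = HVLabel.H ↔ Even (tb k lab s j) := by
  induction j with
  | zero => simp [h0, tb]
  | succ j ih =>
    rw [tb]
    by_cases h : Lw k lab s (j+1) = Lw k lab s j
    · rw [if_pos h, h, ih]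
    · rw [if_neg h, Nat.even_add_one, ← ih]
      rcases hv_cases (Lw k lab s (j+1)) with h1 | h1 <;>
        rcases hv_cases (Lw k lab s j) with h2 | h2 <;> simp_all

/-- start of block b -/
noncomputable def bst : ℕ → ℕ := fun b => sInf {j | b ≤ tb k lab s j}

/-- number of blocks minus one -/
def Tb : ℕ := tb k lab s (k-1)

lemma bst_le {b n : ℕ} (h : b ≤ tb k lab s n) : bst k lab s b ≤ n := Nat.sInf_le h

lemma le_tb_bst {b : ℕ} (h : b ≤ Tb k lab s) : b ≤ tb k lab s (bst k lab s b) := by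
  have : (bst k lab s b) ∈ {j | b ≤ tb k lab s j} := Nat.sInf_mem ⟨k-1, h⟩
  exact this

lemma tb_bst {b : ℕ} (h : b ≤ Tb k lab s) : tb k lab s (bst k lab s b) = b := by
  have h1 := le_tb_bst k lab s h
  match h2 : bst k lab s b with
  | 0 =>
    rw [h2] at h1
    simp only [tb] at h1 ⊢
    omega
  | j + 1 =>
    have hlt : ¬ (b ≤ tb k lab s j) := by
      intro hc
      have := bst_le k lab s hc
      omega
    rw [h2] at h1
    simp only [Nat.succ_eq_add_one] at h1
    show tb k lab s (j+1) = b
    rcases tb_step k lab s j with h3 | h3 <;> omega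

lemma bst_le_iff {b n : ℕ} (h : b ≤ Tb k lab s) : bst k lab s b ≤ n ↔ b ≤ tb k lab s n := by
  constructor
  · intro hn
    calc b = tb k lab s (bst k lab s b) := (tb_bst k lab s h).symm
    _ ≤ tb k lab s n := tb_mono k lab s hn
  · exact bst_le k lab s

lemma bst_lt_iff {b n : ℕ} (h : b + 1 ≤ Tb k lab s) : n < bst k lab s (b+1) ↔ tb k lab s n ≤ b := by
  constructor
  · intro hn
    by_contra hc
    have := (bst_le_iff k lab s (b := b+1) (n := n) h).mpr (by omega)
    omega
  · intro hn
    by_contra hc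
    have := (bst_le_iff k lab s (b := b+1) (n := n) h).mp (by omega)
    omega

/-- length of block b -/
noncomputable def blen : ℕ → ℕ := fun b =>
  if b = Tb k lab s then k - bst k lab s b else bst k lab s (b+1) - bst k lab s b

lemma bst_zero : bst k lab s 0 = 0 := by
  have := bst_le (b := 0) (n := 0) k lab s (by omega)
  omega

lemma bst_add_blen {b : ℕ} (h : b < Tb k lab s) :
    bst k lab s (b+1) = bst k lab s b + blen k lab s b := by
  have h1 : bst k lab s b ≤ bst k lab s (b+1) := by
    rw [bst_le_iff k lab s (by omega)]
    calc b ≤ b + 1 := by omega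
    _ ≤ tb k lab s (bst k lab s (b+1)) := le_tb_bst k lab s (by omega)
  rw [blen, if_neg (by omega)]
  omega

lemma blen_pos (hk : 1 ≤ k) {b : ℕ} (h : b ≤ Tb k lab s) : 1 ≤ blen k lab s b := by
  rw [blen]
  split
  · have : bst k lab s b ≤ k - 1 := bst_le k lab s h
    omega
  · have hlt : b < Tb k lab s := by omega
    have h1 : ¬ (bst k lab s (b+1) ≤ bst k lab s b) := by
      rw [bst_le_iff k lab s (by omega), tb_bst k lab s (by omega)]
      omega
    omega

lemma bst_add_blen_T : bst k lab s (Tb k lab s) + blen k lab s (Tb k lab s) = k := by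
  have h1 : bst k lab s (Tb k lab s) ≤ k - 1 := bst_le k lab s le_rfl
  rw [blen, if_pos rfl]
  omega

/-- r bounds for an edge n -/
lemma edge_r (hk : 1 ≤ k) {n : ℕ} (hn : n ≤ k - 1) :
    bst k lab s (tb k lab s n) ≤ n ∧
    n - bst k lab s (tb k lab s n) + 1 ≤ blen k lab s (tb k lab s n) ∧
    tb k lab s n ≤ Tb k lab s := by
  have hT : tb k lab s n ≤ Tb k lab s := tb_mono k lab s hn
  have h1 : bst k lab s (tb k lab s n) ≤ n := bst_le k lab s le_rfl
  refine ⟨h1, ?_, hT⟩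
  rw [blen]
  split
  · omega
  · have hlt : tb k lab s n < Tb k lab s := by omega
    have h2 : n < bst k lab s (tb k lab s n + 1) := by
      rw [bst_lt_iff k lab s (by omega)]
    have h3 := bst_add_blen k lab s hlt
    omega


/-- x corner coordinates -/
noncomputable def Xc : ℕ → ℕ := fun i => ∑ i' ∈ Finset.range i, blen k lab s (2*i')

/-- y corner coordinates -/
noncomputable def Yc : ℕ → ℕ := fun j => ∑ j' ∈ Finset.range j, blen k lab s (2*j'+1)

/-- number of H blocks -/
noncomputable def mb : ℕ := (Tb k lab s + 1)/2

noncomputable def lam1 : ℕ := blen k lab s (Tb k lab s - 1)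
noncomputable def lam2 : ℕ := blen k lab s (Tb k lab s)

/-- integer coordinates of the vertex at offset r in block b -/
noncomputable def Fn : ℕ → ℕ → ℕ × ℕ := fun b r =>
  if b % 2 = 0 then
    if b < Tb k lab s - 1 then
      ((Xc k lab s (b/2) + r) * lam1 k lab s, Yc k lab s (b/2) * lam2 k lab s)
    else
      ((lam1 k lab s - r) * Xc k lab s (mb k lab s - 1), Yc k lab s (mb k lab s - 1) * lam2 k lab s)
  else
    if b < Tb k lab s then
      (Xc k lab s ((b+1)/2) * lam1 k lab s, (Yc k lab s ((b-1)/2) + r) * lam2 k lab s)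
    else
      (0, (lam2 k lab s - r) * Yc k lab s (mb k lab s - 1))

lemma Xc_succ (i : ℕ) : Xc k lab s (i+1) = Xc k lab s i + blen k lab s (2*i) := by
  rw [Xc, Xc, Finset.sum_range_succ]

lemma Yc_succ (j : ℕ) : Yc k lab s (j+1) = Yc k lab s j + blen k lab s (2*j+1) := by
  rw [Yc, Yc, Finset.sum_range_succ]

lemma Xc_mono {i i' : ℕ} (h : i ≤ i') : Xc k lab s i ≤ Xc k lab s i' := by
  exact Finset.sum_le_sum_of_subset (Finset.range_subset_range.mpr h)

lemma Yc_mono {j j' : ℕ} (h : j ≤ j') : Yc k lab s j ≤ Yc k lab s j' := by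
  exact Finset.sum_le_sum_of_subset (Finset.range_subset_range.mpr h)

section Hyp

variable (hk : 3 ≤ k) (hT3 : 3 ≤ Tb k lab s)

include hk hT3

lemma Xc_strict {i i' : ℕ} (h : i < i') (h' : i' ≤ mb k lab s - 1) :
    Xc k lab s i + blen k lab s (2*i) ≤ Xc k lab s i' := by
  rw [← Xc_succ]
  exact Xc_mono k lab s (by omega)

lemma Yc_strict {j j' : ℕ} (h : j < j') (h' : j' ≤ mb k lab s - 1) :
    Yc k lab s j + blen k lab s (2*j+1) ≤ Yc k lab s j' := by
  rw [← Yc_succ]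
  exact Yc_mono k lab s (by omega)

lemma blen_pos' {b : ℕ} (h : b ≤ Tb k lab s) : 1 ≤ blen k lab s b :=
  blen_pos k lab s (by omega) h

lemma Xc_pos {i : ℕ} (h1 : 1 ≤ i) (h2 : i ≤ mb k lab s - 1) : 1 ≤ Xc k lab s i := by
  have h3 : 1 ≤ blen k lab s 0 := blen_pos' k lab s hk hT3 (by omega)
  have h4 : Xc k lab s 1 ≤ Xc k lab s i := Xc_mono k lab s h1
  have h5 : Xc k lab s 1 = blen k lab s 0 := by
    rw [Xc]; simp
  omega

lemma Yc_pos {j : ℕ} (h1 : 1 ≤ j) (h2 : j ≤ mb k lab s - 1) : 1 ≤ Yc k lab s j := by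
  have h3 : 1 ≤ blen k lab s 1 := blen_pos' k lab s hk hT3 (by omega)
  have h4 : Yc k lab s 1 ≤ Yc k lab s j := Yc_mono k lab s h1
  have h5 : Yc k lab s 1 = blen k lab s 1 := by
    rw [Yc]; simp
  omega

omit hk hT3 in
lemma Fn_E {b r : ℕ} (hbe : b % 2 = 0) (hlt : b < Tb k lab s - 1) :
    Fn k lab s b r = ((Xc k lab s (b/2) + r) * lam1 k lab s, Yc k lab s (b/2) * lam2 k lab s) := by
  rw [Fn, if_pos hbe, if_pos hlt]

omit hk hT3 in
lemma Fn_Top {b r : ℕ} (hbe : b % 2 = 0) (hlt : ¬ b < Tb k lab s - 1) :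
    Fn k lab s b r = ((lam1 k lab s - r) * Xc k lab s (mb k lab s - 1),
      Yc k lab s (mb k lab s - 1) * lam2 k lab s) := by
  rw [Fn, if_pos hbe, if_neg hlt]

omit hk hT3 in
lemma Fn_O {b r : ℕ} (hbo : ¬ b % 2 = 0) (hlt : b < Tb k lab s) :
    Fn k lab s b r = (Xc k lab s ((b+1)/2) * lam1 k lab s,
      (Yc k lab s ((b-1)/2) + r) * lam2 k lab s) := by
  rw [Fn, if_neg hbo, if_pos hlt]

omit hk hT3 in
lemma Fn_Left {b r : ℕ} (hbo : ¬ b % 2 = 0) (hlt : ¬ b < Tb k lab s) :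
    Fn k lab s b r = (0, (lam2 k lab s - r) * Yc k lab s (mb k lab s - 1)) := by
  rw [Fn, if_neg hbo, if_neg hlt]

lemma corner (hodd : Tb k lab s % 2 = 1) {b : ℕ} (hb : b < Tb k lab s) :
    Fn k lab s (b+1) 0 = Fn k lab s b (blen k lab s b) := by
  rcases Nat.even_or_odd b with he | ho
  · -- b even
    obtain ⟨i, hi0⟩ := he
    have hbe : b % 2 = 0 := by omega
    have hi : b = 2*i := by omega
    by_cases hb1 : b < Tb k lab s - 1
    · rw [Fn_E k lab s hbe hb1, Fn_O k lab s (b := b+1) (by omega) (by omega)]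
      have h1 : (b+1+1)/2 = i + 1 := by omega
      have h2 : (b+1-1)/2 = i := by omega
      have h3 : b/2 = i := by omega
      rw [h1, h2, h3, Xc_succ, hi]
      simp
    · -- b = Tb - 1 : top side
      rw [Fn_Top k lab s hbe hb1, Fn_Left k lab s (b := b+1) (by omega) (by omega)]
      have h1 : lam1 k lab s = blen k lab s b := by
        rw [lam1, show Tb k lab s - 1 = b by omega]
      rw [h1, Nat.sub_self, Nat.sub_zero, Nat.zero_mul, Nat.mul_comm]
  · -- b odd
    obtain ⟨j, hj⟩ := ho
    have h1 : (b+1)/2 = j+1 := by omega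
    have h2 : (b-1)/2 = j := by omega
    rw [Fn_O k lab s (by omega) hb]
    by_cases hb1 : b + 1 < Tb k lab s - 1
    · rw [Fn_E k lab s (b := b+1) (by omega) hb1]
      rw [h1, h2, Yc_succ, hj]
      simp
    · -- b + 1 = Tb - 1
      have hbT : b + 1 = Tb k lab s - 1 := by omega
      rw [Fn_Top k lab s (b := b+1) (by omega) (by omega)]
      have hm : mb k lab s - 1 = j + 1 := by
        rw [mb]; omega
      rw [hm, h1, h2, Nat.sub_zero, Yc_succ, hj, Nat.mul_comm]

end Hyp

end Construction

section Construction2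

/-- cast to the plane -/
def cR : ℕ × ℕ → ℝ × ℝ := fun q => ((q.1 : ℝ), (q.2 : ℝ))

@[simp] lemma cR_mk (a b : ℕ) : cR (a, b) = ((a : ℝ), (b : ℝ)) := rfl

variable (k : ℕ) (lab : ZMod k → HVLabel) (s : ZMod k)

/-- integer coordinates of vertex n of the walk -/
noncomputable def Qn : ℕ → ℕ × ℕ := fun n =>
  Fn k lab s (tb k lab s (min n (k-1))) (n - bst k lab s (tb k lab s (min n (k-1))))

/-- the drawing -/
noncomputable def pdraw : ZMod k → ℝ × ℝ := fun v => cR (Qn k lab s ((v - s).val))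

lemma Qn_lt {n : ℕ} (hn : n ≤ k-1) :
    Qn k lab s n = Fn k lab s (tb k lab s n) (n - bst k lab s (tb k lab s n)) := by
  rw [Qn, min_eq_left hn]

lemma tb_zero : tb k lab s 0 = 0 := rfl

lemma Qn_zero (hk : 3 ≤ k) (hT3 : 3 ≤ Tb k lab s) : Qn k lab s 0 = (0, 0) := by
  rw [Qn_lt k lab s (by omega), tb_zero]
  rw [Fn_E k lab s (by omega) (by omega)]
  have h0 : Xc k lab s 0 = 0 := by rw [Xc]; simp
  have h1 : Yc k lab s 0 = 0 := by rw [Yc]; simp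
  rw [bst_zero]
  simp [h0, h1]

lemma Tb_odd (h0 : Lw k lab s 0 = HVLabel.H) (hlast : Lw k lab s (k-1) = HVLabel.V) :
    Tb k lab s % 2 = 1 := by
  have h1 := tb_parity k lab s h0 (k-1)
  rw [hlast] at h1
  have h2 : ¬ Even (Tb k lab s) := by
    rw [Tb]
    intro h
    exact absurd (h1.mpr h) (by simp)
  rcases Nat.even_or_odd (Tb k lab s) with h | h
  · exact absurd h h2
  · obtain ⟨c, hc⟩ := h
    omega

lemma Qn_succ (hk : 3 ≤ k) (hT3 : 3 ≤ Tb k lab s) (hodd : Tb k lab s % 2 = 1)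
    {n : ℕ} (hn : n ≤ k - 1) :
    Qn k lab s (n+1) = Fn k lab s (tb k lab s n) (n - bst k lab s (tb k lab s n) + 1) := by
  obtain ⟨hr1, hr2, hr3⟩ := edge_r k lab s (by omega) hn
  by_cases hn1 : n + 1 ≤ k - 1
  · rw [Qn_lt k lab s hn1]
    rcases tb_step k lab s n with hs | hs
    · rw [hs]
      congr 1
      omega
    · have hb1 : tb k lab s n + 1 ≤ Tb k lab s := by
        rw [← hs, Tb]
        exact tb_mono k lab s hn1
      have h2 : bst k lab s (tb k lab s n + 1) ≤ n + 1 := by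
        rw [bst_le_iff k lab s hb1, hs]
      have h3 : ¬ bst k lab s (tb k lab s n + 1) ≤ n := by
        rw [bst_le_iff k lab s hb1]
        omega
      have h4 : bst k lab s (tb k lab s n + 1) = n + 1 := by omega
      rw [hs, h4, Nat.sub_self]
      rw [corner k lab s hk hT3 hodd (by omega)]
      congr 1
      have h5 := bst_add_blen k lab s (b := tb k lab s n) (by omega)
      omega
  · have hkn : n = k - 1 := by omega
    have hmin : min (n+1) (k-1) = k - 1 := by omega
    rw [Qn, hmin, ← hkn]
    congr 1
    omega

lemma mem_uIcc_nat {a b : ℕ} {x : ℝ} (h : a ≤ b) :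
    x ∈ Set.uIcc (a : ℝ) (b : ℝ) ↔ ((a : ℝ) ≤ x ∧ x ≤ (b : ℝ)) := by
  rw [Set.uIcc_of_le (by exact_mod_cast h), Set.mem_Icc]

lemma seg_E {b r : ℕ} (hbe : b % 2 = 0) (hlt : b < Tb k lab s - 1) {z : ℝ × ℝ} :
    z ∈ segment ℝ (cR (Fn k lab s b r)) (cR (Fn k lab s b (r+1))) ↔
      (z.2 = ((Yc k lab s (b/2) * lam2 k lab s : ℕ) : ℝ) ∧
       (((Xc k lab s (b/2) + r) * lam1 k lab s : ℕ) : ℝ) ≤ z.1 ∧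
       z.1 ≤ (((Xc k lab s (b/2) + (r + 1)) * lam1 k lab s : ℕ) : ℝ)) := by
  rw [Fn_E k lab s hbe hlt, Fn_E k lab s hbe hlt, cR_mk, cR_mk, mem_seg_horiz_s8,
    mem_uIcc_nat (Nat.mul_le_mul_right _ (by omega))]

lemma seg_Top {b r : ℕ} (hbe : b % 2 = 0) (hlt : ¬ b < Tb k lab s - 1) {z : ℝ × ℝ} :
    z ∈ segment ℝ (cR (Fn k lab s b r)) (cR (Fn k lab s b (r+1))) ↔
      (z.2 = ((Yc k lab s (mb k lab s - 1) * lam2 k lab s : ℕ) : ℝ) ∧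
       (((lam1 k lab s - (r + 1)) * Xc k lab s (mb k lab s - 1) : ℕ) : ℝ) ≤ z.1 ∧
       z.1 ≤ (((lam1 k lab s - r) * Xc k lab s (mb k lab s - 1) : ℕ) : ℝ)) := by
  rw [Fn_Top k lab s hbe hlt, Fn_Top k lab s hbe hlt, cR_mk, cR_mk, mem_seg_horiz_s8,
    Set.uIcc_comm, mem_uIcc_nat (Nat.mul_le_mul_right _ (by omega))]

lemma seg_O {b r : ℕ} (hbo : ¬ b % 2 = 0) (hlt : b < Tb k lab s) {z : ℝ × ℝ} :
    z ∈ segment ℝ (cR (Fn k lab s b r)) (cR (Fn k lab s b (r+1))) ↔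
      (z.1 = ((Xc k lab s ((b+1)/2) * lam1 k lab s : ℕ) : ℝ) ∧
       (((Yc k lab s ((b-1)/2) + r) * lam2 k lab s : ℕ) : ℝ) ≤ z.2 ∧
       z.2 ≤ (((Yc k lab s ((b-1)/2) + (r + 1)) * lam2 k lab s : ℕ) : ℝ)) := by
  rw [Fn_O k lab s hbo hlt, Fn_O k lab s hbo hlt, cR_mk, cR_mk, mem_seg_vert_s8,
    mem_uIcc_nat (Nat.mul_le_mul_right _ (by omega))]

lemma seg_Left {b r : ℕ} (hbo : ¬ b % 2 = 0) (hlt : ¬ b < Tb k lab s) {z : ℝ × ℝ} :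
    z ∈ segment ℝ (cR (Fn k lab s b r)) (cR (Fn k lab s b (r+1))) ↔
      (z.1 = 0 ∧
       (((lam2 k lab s - (r + 1)) * Yc k lab s (mb k lab s - 1) : ℕ) : ℝ) ≤ z.2 ∧
       z.2 ≤ (((lam2 k lab s - r) * Yc k lab s (mb k lab s - 1) : ℕ) : ℝ)) := by
  rw [Fn_Left k lab s hbo hlt, Fn_Left k lab s hbo hlt, cR_mk, cR_mk, Nat.cast_zero,
    mem_seg_vert_s8, Set.uIcc_comm, mem_uIcc_nat (Nat.mul_le_mul_right _ (by omega))]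

lemma Xc_zero : Xc k lab s 0 = 0 := by rw [Xc]; simp

lemma Yc_zero : Yc k lab s 0 = 0 := by rw [Yc]; simp

lemma lam1_pos (hk : 3 ≤ k) : 1 ≤ lam1 k lab s := by
  rw [lam1]; exact blen_pos k lab s (by omega) (by omega)

lemma lam2_pos (hk : 3 ≤ k) : 1 ≤ lam2 k lab s := by
  rw [lam2]; exact blen_pos k lab s (by omega) (by omega)

lemma core (hk : 3 ≤ k) (hT3 : 3 ≤ Tb k lab s) (hodd : Tb k lab s % 2 = 1)
    {n n' : ℕ} (hnn : n < n') (hn' : n' ≤ k - 1) {z : ℝ × ℝ}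
    (hz : z ∈ segment ℝ (cR (Qn k lab s n)) (cR (Qn k lab s (n+1))))
    (hz' : z ∈ segment ℝ (cR (Qn k lab s n')) (cR (Qn k lab s (n'+1)))) :
    (n' = n + 1 ∧ z = cR (Qn k lab s n')) ∨ (n = 0 ∧ n' = k - 1 ∧ z = cR (Qn k lab s 0)) := by
  have hn : n ≤ k - 1 := by omega
  have hl1 : 1 ≤ lam1 k lab s := lam1_pos k lab s hk
  have hl2 : 1 ≤ lam2 k lab s := lam2_pos k lab s hk
  have hM2 : 2 ≤ mb k lab s := by rw [mb]; omega
  have hMT : 2 * (mb k lab s) - 1 = Tb k lab s := by rw [mb]; omega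
  have hXm1 : 1 ≤ Xc k lab s (mb k lab s - 1) := Xc_pos k lab s hk hT3 (by omega) (by omega)
  have hYm1 : 1 ≤ Yc k lab s (mb k lab s - 1) := Yc_pos k lab s hk hT3 (by omega) (by omega)
  obtain ⟨hr1, hr2, hr3⟩ := edge_r k lab s (by omega) hn
  obtain ⟨hr1', hr2', hr3'⟩ := edge_r k lab s (by omega) hn'
  have hbb : tb k lab s n ≤ tb k lab s n' := tb_mono k lab s (by omega)
  rw [Qn_lt k lab s hn] at hz
  rw [Qn_succ k lab s hk hT3 hodd hn] at hz
  rw [Qn_lt k lab s hn'] at hz'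
  rw [Qn_succ k lab s hk hT3 hodd hn'] at hz'
  have hQ' : Qn k lab s n' = Fn k lab s (tb k lab s n') (n' - bst k lab s (tb k lab s n')) :=
    Qn_lt k lab s hn'
  obtain ⟨b, hb⟩ : ∃ b, tb k lab s n = b := ⟨_, rfl⟩
  obtain ⟨b', hb'⟩ : ∃ b', tb k lab s n' = b' := ⟨_, rfl⟩
  obtain ⟨r, hr⟩ : ∃ r, n - bst k lab s b = r := ⟨_, rfl⟩
  obtain ⟨r', hrr'⟩ : ∃ r', n' - bst k lab s b' = r' := ⟨_, rfl⟩
  rw [hb, hr] at hz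
  rw [hb', hrr'] at hz'
  rw [hb', hrr'] at hQ'
  rw [hb] at hr1 hr2 hr3
  rw [hb'] at hr1' hr2' hr3'
  rw [hr] at hr2
  rw [hrr'] at hr2'
  rw [hb, hb'] at hbb
  have hnr : n = bst k lab s b + r := by omega
  have hnr' : n' = bst k lab s b' + r' := by omega
  clear hr hrr' hb hb'
  by_cases hbe : b % 2 = 0
  · by_cases hbl : b < Tb k lab s - 1
    · -- b type E
      rw [seg_E k lab s hbe hbl] at hz
      obtain ⟨hy, hx1, hx2⟩ := hz
      by_cases hbe' : b' % 2 = 0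
      · by_cases hbl' : b' < Tb k lab s - 1
        · -- (E, E)
          rw [seg_E k lab s hbe' hbl'] at hz'
          obtain ⟨hy', hx1', hx2'⟩ := hz'
          by_cases hbeq : b' = b
          · subst hbeq
            have hrr : r < r' := by omega
            have h1 : (Xc k lab s (b'/2) + r') * lam1 k lab s ≤
                (Xc k lab s (b'/2) + (r+1)) * lam1 k lab s := by
              exact_mod_cast le_trans hx1' hx2
            have h2 : Xc k lab s (b'/2) + r' ≤ Xc k lab s (b'/2) + (r+1) :=
              Nat.le_of_mul_le_mul_right h1 (by omega)
            have hr'r : r' = r + 1 := by omega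
            subst hr'r
            exact Or.inl ⟨by omega, by
              rw [hQ', Fn_E k lab s hbe' hbl', cR_mk]
              exact Prod.ext_iff.mpr ⟨le_antisymm hx2 hx1', hy⟩⟩
          · exfalso
            have hbb' : b < b' := by omega
            have hii : b/2 < b'/2 := by omega
            have hyy : Yc k lab s (b/2) * lam2 k lab s = Yc k lab s (b'/2) * lam2 k lab s := by
              exact_mod_cast hy.symm.trans hy'
            have hYe : Yc k lab s (b/2) = Yc k lab s (b'/2) :=
              Nat.eq_of_mul_eq_mul_right (by omega) hyy
            have hstr := Yc_strict k lab s hk hT3 hii (by omega)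
            have hbp : 1 ≤ blen k lab s (2*(b/2)+1) := blen_pos k lab s (by omega) (by omega)
            omega
        · -- (E, Top)
          exfalso
          rw [seg_Top k lab s hbe' hbl'] at hz'
          obtain ⟨hy', hx1', hx2'⟩ := hz'
          have hii : b/2 < mb k lab s - 1 := by omega
          have hyy : Yc k lab s (b/2) * lam2 k lab s =
              Yc k lab s (mb k lab s - 1) * lam2 k lab s := by
            exact_mod_cast hy.symm.trans hy'
          have hYe : Yc k lab s (b/2) = Yc k lab s (mb k lab s - 1) :=
            Nat.eq_of_mul_eq_mul_right (by omega) hyy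
          have hstr := Yc_strict k lab s hk hT3 hii (by omega)
          have hbp : 1 ≤ blen k lab s (2*(b/2)+1) := blen_pos k lab s (by omega) (by omega)
          omega
      · by_cases hbl' : b' < Tb k lab s
        · -- (E, O)
          rw [seg_O k lab s hbe' hbl'] at hz'
          obtain ⟨hx', hy1', hy2'⟩ := hz'
          rw [hx'] at hx1 hx2
          rw [hy] at hy1' hy2'
          have d1 : Xc k lab s (b/2) + r ≤ Xc k lab s ((b'+1)/2) :=
            Nat.le_of_mul_le_mul_right (by exact_mod_cast hx1) (by omega)
          have d2 : Xc k lab s ((b'+1)/2) ≤ Xc k lab s (b/2) + (r+1) :=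
            Nat.le_of_mul_le_mul_right (by exact_mod_cast hx2) (by omega)
          have d3 : Yc k lab s ((b'-1)/2) + r' ≤ Yc k lab s (b/2) :=
            Nat.le_of_mul_le_mul_right (by exact_mod_cast hy1') (by omega)
          have d4 : Yc k lab s (b/2) ≤ Yc k lab s ((b'-1)/2) + (r'+1) :=
            Nat.le_of_mul_le_mul_right (by exact_mod_cast hy2') (by omega)
          have hij : b/2 + 1 ≤ (b'+1)/2 := by omega
          have hj'M : (b'+1)/2 ≤ mb k lab s - 1 := by omega
          have e2 : Xc k lab s (b/2+1) = Xc k lab s (b/2) + blen k lab s (2*(b/2)) :=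
            Xc_succ k lab s (b/2)
          have hbb2 : 2*(b/2) = b := by omega
          have e4 : r + 1 ≤ blen k lab s (2*(b/2)) := by rw [hbb2]; exact hr2
          have hnot : ¬ (b/2 + 2 ≤ (b'+1)/2) := by
            intro hcon
            have e1 := Xc_strict k lab s hk hT3 (show b/2 + 1 < (b'+1)/2 by omega) hj'M
            have e3 : 1 ≤ blen k lab s (2*(b/2+1)) := blen_pos k lab s (by omega) (by omega)
            omega
          have hj'i : (b'+1)/2 = b/2 + 1 := by omega
          have e5 : blen k lab s (2*(b/2)) = r + 1 := by rw [hj'i] at d1 d2; omega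
          have e6 : (b'-1)/2 = b/2 := by omega
          have e7 : r' = 0 := by rw [e6] at d3; omega
          have hb'b : b' = b + 1 := by omega
          have e8 := bst_add_blen k lab s (b := b) (by omega)
          have hn'n : n' = n + 1 := by
            rw [hnr, hnr', hb'b, e8, ← hbb2, e5, e7]
            omega
          refine Or.inl ⟨hn'n, ?_⟩
          rw [hQ', Fn_O k lab s hbe' hbl', cR_mk]
          refine Prod.ext_iff.mpr ⟨hx', ?_⟩
          have heq : (Yc k lab s ((b'-1)/2) + r') * lam2 k lab s =
              Yc k lab s (b/2) * lam2 k lab s := by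
            rw [e6, e7]
            simp
          rw [hy, heq]
        · -- (E, Left)
          rw [seg_Left k lab s hbe' hbl'] at hz'
          obtain ⟨hx', hy1', hy2'⟩ := hz'
          rw [hx'] at hx1 hx2
          have d1' : (Xc k lab s (b/2) + r) * lam1 k lab s ≤ 0 := by exact_mod_cast hx1
          have d2 : Xc k lab s (b/2) = 0 ∧ r = 0 := by
            have h5 : (Xc k lab s (b/2) + r) * lam1 k lab s = 0 := by omega
            have := Nat.mul_eq_zero.mp h5
            omega
          have hi0 : b/2 = 0 := by
            by_contra hcon
            have := Xc_pos k lab s hk hT3 (i := b/2) (by omega) (by omega)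
            omega
          have hb0 : b = 0 := by omega
          have hn0 : n = 0 := by rw [hnr, hb0, bst_zero]; omega
          have hy0 : z.2 = 0 := by
            rw [hy, hi0, Yc_zero]
            simp
          rw [hy0] at hy1'
          have d3' : (lam2 k lab s - (r'+1)) * Yc k lab s (mb k lab s - 1) ≤ 0 := by
            exact_mod_cast hy1'
          have d4 : lam2 k lab s - (r'+1) = 0 := by
            have h5 : (lam2 k lab s - (r'+1)) * Yc k lab s (mb k lab s - 1) = 0 := by omega
            have := Nat.mul_eq_zero.mp h5
            omega
          have hlb' : blen k lab s b' = lam2 k lab s := by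
            rw [lam2]
            congr 1
            omega
          have hr'l : r' + 1 = lam2 k lab s := by
            rw [← hlb']
            rw [hlb'] at hr2'
            omega
          have hbT : b' = Tb k lab s := by omega
          have hnk : n' = k - 1 := by
            have h9 := bst_add_blen_T k lab s
            rw [hbT] at hlb'
            rw [hnr', hbT]
            omega
          refine Or.inr ⟨hn0, hnk, ?_⟩
          rw [Qn_zero k lab s hk hT3, cR_mk]
          refine Prod.ext_iff.mpr ⟨?_, ?_⟩
          · rw [hx']; simp
          · rw [hy0]; simp
    · -- b type Top : b = Tb - 1
      have hbT1 : b = Tb k lab s - 1 := by omega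
      rw [seg_Top k lab s hbe hbl] at hz
      obtain ⟨hy, hx1, hx2⟩ := hz
      by_cases hbe' : b' % 2 = 0
      · -- (Top, Top) : b' = b
        have hbeq : b' = b := by omega
        subst hbeq
        rw [seg_Top k lab s hbe hbl] at hz'
        obtain ⟨hy', hx1', hx2'⟩ := hz'
        have hrr : r < r' := by omega
        have h1 : (lam1 k lab s - (r+1)) * Xc k lab s (mb k lab s - 1) ≤
            (lam1 k lab s - r') * Xc k lab s (mb k lab s - 1) := by
          exact_mod_cast le_trans hx1 hx2'
        have h2 : lam1 k lab s - (r+1) ≤ lam1 k lab s - r' :=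
          Nat.le_of_mul_le_mul_right h1 (by omega)
        have hlb : blen k lab s b' = lam1 k lab s := by rw [lam1, hbT1]
        have hr'r : r' = r + 1 := by
          rw [hlb] at hr2 hr2'
          omega
        subst hr'r
        exact Or.inl ⟨by omega, by
          rw [hQ', Fn_Top k lab s hbe hbl, cR_mk]
          exact Prod.ext_iff.mpr ⟨le_antisymm hx2' hx1, hy⟩⟩
      · -- (Top, Left) : b' = Tb
        have hbT : b' = Tb k lab s := by omega
        rw [seg_Left k lab s hbe' (by omega)] at hz'
        obtain ⟨hx', hy1', hy2'⟩ := hz'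
        rw [hx'] at hx1
        have d1' : (lam1 k lab s - (r+1)) * Xc k lab s (mb k lab s - 1) ≤ 0 := by
          exact_mod_cast hx1
        have d2 : lam1 k lab s - (r+1) = 0 := by
          have h5 : (lam1 k lab s - (r+1)) * Xc k lab s (mb k lab s - 1) = 0 := by omega
          have := Nat.mul_eq_zero.mp h5
          omega
        have hlb : blen k lab s b = lam1 k lab s := by rw [lam1, hbT1]
        have hrl : r + 1 = lam1 k lab s := by
          rw [hlb] at hr2
          omega
        rw [hy] at hy2'
        have d3 : Yc k lab s (mb k lab s - 1) * lam2 k lab s ≤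
            (lam2 k lab s - r') * Yc k lab s (mb k lab s - 1) :=
          Nat.cast_le.mp (by exact_mod_cast hy2')
        have d4 : lam2 k lab s * Yc k lab s (mb k lab s - 1) ≤
            (lam2 k lab s - r') * Yc k lab s (mb k lab s - 1) := by
          rw [Nat.mul_comm (lam2 k lab s)]
          exact d3
        have d5 : lam2 k lab s ≤ lam2 k lab s - r' :=
          Nat.le_of_mul_le_mul_right d4 (by omega)
        have hr'0 : r' = 0 := by omega
        have hn'n : n' = n + 1 := by
          have e8 := bst_add_blen k lab s (b := b) (by omega)
          rw [show b + 1 = Tb k lab s by omega] at e8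
          rw [hnr, hnr', hr'0, hbT]
          omega
        refine Or.inl ⟨hn'n, ?_⟩
        rw [hQ', Fn_Left k lab s hbe' (by omega), cR_mk]
        refine Prod.ext_iff.mpr ⟨by rw [hx']; simp, ?_⟩
        rw [hy, hr'0, Nat.sub_zero]
        push_cast
        ring
  · -- b odd
    by_cases hbl : b < Tb k lab s
    · -- b type O
      rw [seg_O k lab s hbe hbl] at hz
      obtain ⟨hx, hy1, hy2⟩ := hz
      by_cases hbe' : b' % 2 = 0
      · by_cases hbl' : b' < Tb k lab s - 1
        · -- (O, E)
          rw [seg_E k lab s hbe' hbl'] at hz'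
          obtain ⟨hy', hx1', hx2'⟩ := hz'
          rw [hx] at hx1' hx2'
          rw [hy'] at hy1 hy2
          have d1 : Xc k lab s (b'/2) + r' ≤ Xc k lab s ((b+1)/2) :=
            Nat.le_of_mul_le_mul_right (by exact_mod_cast hx1') (by omega)
          have d2 : Xc k lab s ((b+1)/2) ≤ Xc k lab s (b'/2) + (r'+1) :=
            Nat.le_of_mul_le_mul_right (by exact_mod_cast hx2') (by omega)
          have d3 : Yc k lab s ((b-1)/2) + r ≤ Yc k lab s (b'/2) :=
            Nat.le_of_mul_le_mul_right (by exact_mod_cast hy1) (by omega)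
          have d4 : Yc k lab s (b'/2) ≤ Yc k lab s ((b-1)/2) + (r+1) :=
            Nat.le_of_mul_le_mul_right (by exact_mod_cast hy2) (by omega)
          have hij : (b+1)/2 ≤ b'/2 := by omega
          have hnot : ¬ ((b+1)/2 + 1 ≤ b'/2) := by
            intro hcon
            have e1 := Xc_strict k lab s hk hT3 (show (b+1)/2 < b'/2 by omega) (by omega)
            have e3 : 1 ≤ blen k lab s (2*((b+1)/2)) := blen_pos k lab s (by omega) (by omega)
            omega
          have hj'i : b'/2 = (b+1)/2 := by omega
          have hr'0 : r' = 0 := by rw [hj'i] at d1; omega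
          have e2 : Yc k lab s ((b-1)/2+1) = Yc k lab s ((b-1)/2) + blen k lab s (2*((b-1)/2)+1) :=
            Yc_succ k lab s ((b-1)/2)
          have hbb2 : 2*((b-1)/2)+1 = b := by omega
          have e4 : r + 1 ≤ blen k lab s (2*((b-1)/2)+1) := by rw [hbb2]; exact hr2
          have hsucc : (b-1)/2 + 1 = b'/2 := by omega
          have e5 : blen k lab s (2*((b-1)/2)+1) = r + 1 := by
            rw [hsucc] at e2
            omega
          have hb'b : b' = b + 1 := by omega
          have e8 := bst_add_blen k lab s (b := b) (by omega)
          have hn'n : n' = n + 1 := by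
            rw [hnr, hnr', hb'b, e8, ← hbb2, e5, hr'0]
            omega
          refine Or.inl ⟨hn'n, ?_⟩
          rw [hQ', Fn_E k lab s hbe' hbl', cR_mk]
          refine Prod.ext_iff.mpr ⟨?_, hy'⟩
          have heq : (Xc k lab s (b'/2) + r') * lam1 k lab s =
              Xc k lab s ((b+1)/2) * lam1 k lab s := by
            rw [hj'i, hr'0]
            simp
          rw [hx, heq]
        · -- (O, Top)
          have hbT1 : b' = Tb k lab s - 1 := by omega
          rw [seg_Top k lab s hbe' hbl'] at hz'
          obtain ⟨hy', hx1', hx2'⟩ := hz'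
          rw [hy'] at hy1 hy2
          rw [hx] at hx2'
          have d3 : Yc k lab s ((b-1)/2) + r ≤ Yc k lab s (mb k lab s - 1) :=
            Nat.le_of_mul_le_mul_right (by exact_mod_cast hy1) (by omega)
          have d4 : Yc k lab s (mb k lab s - 1) ≤ Yc k lab s ((b-1)/2) + (r+1) :=
            Nat.le_of_mul_le_mul_right (by exact_mod_cast hy2) (by omega)
          have hjM : (b+1)/2 ≤ mb k lab s - 1 := by omega
          have e2 : Yc k lab s ((b-1)/2+1) = Yc k lab s ((b-1)/2) + blen k lab s (2*((b-1)/2)+1) :=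
            Yc_succ k lab s ((b-1)/2)
          have hbb2 : 2*((b-1)/2)+1 = b := by omega
          have e4 : r + 1 ≤ blen k lab s (2*((b-1)/2)+1) := by rw [hbb2]; exact hr2
          have hsucc : (b-1)/2 + 1 = (b+1)/2 := by omega
          have hnot : ¬ ((b+1)/2 + 1 ≤ mb k lab s - 1) := by
            intro hcon
            have e1 := Yc_strict k lab s hk hT3 (show (b-1)/2 + 1 < mb k lab s - 1 by omega)
              (le_refl _)
            rw [hsucc] at e1
            have e3 : 1 ≤ blen k lab s (2*((b+1)/2)+1) := blen_pos k lab s (by omega) (by omega)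
            have e2' : Yc k lab s ((b+1)/2) = Yc k lab s ((b-1)/2) + blen k lab s (2*((b-1)/2)+1) := by
              rw [← hsucc]; exact e2
            omega
          have hjm : (b+1)/2 = mb k lab s - 1 := by omega
          have e5 : blen k lab s (2*((b-1)/2)+1) = r + 1 := by
            rw [hsucc, hjm] at e2
            omega
          have hb'b : b' = b + 1 := by omega
          -- now x: z.1 = Xc (m-1) * lam1 and ≤ (lam1 - r') * Xc (m-1)
          have d5 : Xc k lab s ((b+1)/2) * lam1 k lab s ≤
              (lam1 k lab s - r') * Xc k lab s (mb k lab s - 1) := by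
            exact_mod_cast hx2'
          have d6 : lam1 k lab s * Xc k lab s (mb k lab s - 1) ≤
              (lam1 k lab s - r') * Xc k lab s (mb k lab s - 1) := by
            have heq : lam1 k lab s * Xc k lab s (mb k lab s - 1) =
                Xc k lab s ((b+1)/2) * lam1 k lab s := by
              rw [hjm]
              exact Nat.mul_comm _ _
            rw [heq]
            exact d5
          have d7 : lam1 k lab s ≤ lam1 k lab s - r' :=
            Nat.le_of_mul_le_mul_right d6 (by omega)
          have hr'0 : r' = 0 := by omega
          have e8 := bst_add_blen k lab s (b := b) (by omega)
          have hn'n : n' = n + 1 := by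
            rw [hnr, hnr', hb'b, e8, ← hbb2, e5, hr'0]
            omega
          refine Or.inl ⟨hn'n, ?_⟩
          rw [hQ', Fn_Top k lab s hbe' hbl', cR_mk]
          refine Prod.ext_iff.mpr ⟨?_, hy'⟩
          have heq : (lam1 k lab s - r') * Xc k lab s (mb k lab s - 1) =
              Xc k lab s ((b+1)/2) * lam1 k lab s := by
            rw [hjm, hr'0, Nat.sub_zero]
            exact Nat.mul_comm _ _
          rw [hx, heq]
      · -- b' odd
        by_cases hbl' : b' < Tb k lab s
        · -- (O, O)
          rw [seg_O k lab s hbe' hbl'] at hz'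
          obtain ⟨hx', hy1', hy2'⟩ := hz'
          by_cases hbeq : b' = b
          · subst hbeq
            have hrr : r < r' := by omega
            have h1 : (Yc k lab s ((b'-1)/2) + r') * lam2 k lab s ≤
                (Yc k lab s ((b'-1)/2) + (r+1)) * lam2 k lab s := by
              exact_mod_cast le_trans hy1' hy2
            have h2 : Yc k lab s ((b'-1)/2) + r' ≤ Yc k lab s ((b'-1)/2) + (r+1) :=
              Nat.le_of_mul_le_mul_right h1 (by omega)
            have hr'r : r' = r + 1 := by omega
            subst hr'r
            exact Or.inl ⟨by omega, by
              rw [hQ', Fn_O k lab s hbe' hbl', cR_mk]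
              exact Prod.ext_iff.mpr ⟨hx, le_antisymm hy2 hy1'⟩⟩
          · exfalso
            have hbb' : b < b' := by omega
            have hii : (b+1)/2 < (b'+1)/2 := by omega
            have hxx : Xc k lab s ((b+1)/2) * lam1 k lab s =
                Xc k lab s ((b'+1)/2) * lam1 k lab s := by
              exact_mod_cast hx.symm.trans hx'
            have hXe : Xc k lab s ((b+1)/2) = Xc k lab s ((b'+1)/2) :=
              Nat.eq_of_mul_eq_mul_right (by omega) hxx
            have hstr := Xc_strict k lab s hk hT3 hii (by omega)
            have hbp : 1 ≤ blen k lab s (2*((b+1)/2)) := blen_pos k lab s (by omega) (by omega)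
            omega
        · -- (O, Left)
          exfalso
          rw [seg_Left k lab s hbe' hbl'] at hz'
          obtain ⟨hx', hy1', hy2'⟩ := hz'
          rw [hx'] at hx
          have hXp : 1 ≤ Xc k lab s ((b+1)/2) := Xc_pos k lab s hk hT3 (by omega) (by omega)
          have : Xc k lab s ((b+1)/2) * lam1 k lab s = 0 := by
            exact_mod_cast hx.symm
          have := Nat.mul_eq_zero.mp this
          omega
    · -- b type Left : b = Tb, so b' = Tb too
      have hbT : b = Tb k lab s := by omega
      have hbT' : b' = Tb k lab s := by omega
      have hbeq : b' = b := by omega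
      subst hbeq
      rw [seg_Left k lab s hbe hbl] at hz
      rw [seg_Left k lab s hbe hbl] at hz'
      obtain ⟨hx, hy1, hy2⟩ := hz
      obtain ⟨hx', hy1', hy2'⟩ := hz'
      have hrr : r < r' := by omega
      have h1 : (lam2 k lab s - (r+1)) * Yc k lab s (mb k lab s - 1) ≤
          (lam2 k lab s - r') * Yc k lab s (mb k lab s - 1) := by
        exact_mod_cast le_trans hy1 hy2'
      have h2 : lam2 k lab s - (r+1) ≤ lam2 k lab s - r' :=
        Nat.le_of_mul_le_mul_right h1 (by omega)
      have hlb : blen k lab s b' = lam2 k lab s := by rw [lam2, hbT]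
      have hr'r : r' = r + 1 := by
        rw [hlb] at hr2 hr2'
        omega
      subst hr'r
      exact Or.inl ⟨by omega, by
        rw [hQ', Fn_Left k lab s hbe hbl, cR_mk, Nat.cast_zero]
        exact Prod.ext_iff.mpr ⟨hx, le_antisymm hy2' hy1⟩⟩


lemma Fn_ne (hk : 3 ≤ k) (hT3 : 3 ≤ Tb k lab s) (hodd : Tb k lab s % 2 = 1) {b r : ℕ} (hb : b ≤ Tb k lab s)
    (hr : r + 1 ≤ blen k lab s b) : cR (Fn k lab s b r) ≠ cR (Fn k lab s b (r+1)) := by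
  have hl1 : 1 ≤ lam1 k lab s := lam1_pos k lab s hk
  have hl2 : 1 ≤ lam2 k lab s := lam2_pos k lab s hk
  have hM2 : 2 ≤ mb k lab s := by rw [mb]; omega
  have hXm1 : 1 ≤ Xc k lab s (mb k lab s - 1) := Xc_pos k lab s hk hT3 (by omega) (by omega)
  have hYm1 : 1 ≤ Yc k lab s (mb k lab s - 1) := Yc_pos k lab s hk hT3 (by omega) (by omega)
  intro hcon
  by_cases hbe : b % 2 = 0
  · by_cases hbl : b < Tb k lab s - 1
    · rw [Fn_E k lab s hbe hbl, Fn_E k lab s hbe hbl, cR_mk, cR_mk] at hcon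
      have h1 : (Xc k lab s (b/2) + r) * lam1 k lab s =
          (Xc k lab s (b/2) + (r+1)) * lam1 k lab s := by
        rw [Prod.mk.injEq] at hcon
        exact_mod_cast hcon.1
      nlinarith [h1]
    · rw [Fn_Top k lab s hbe hbl, Fn_Top k lab s hbe hbl, cR_mk, cR_mk] at hcon
      have hlb : blen k lab s b = lam1 k lab s := by
        rw [lam1]
        congr 1
        omega
      have h1 : (lam1 k lab s - r) * Xc k lab s (mb k lab s - 1) =
          (lam1 k lab s - (r+1)) * Xc k lab s (mb k lab s - 1) := by
        rw [Prod.mk.injEq] at hcon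
        exact_mod_cast hcon.1
      have h2 : lam1 k lab s - r = lam1 k lab s - (r+1) :=
        Nat.eq_of_mul_eq_mul_right (by omega) h1
      omega
  · by_cases hbl : b < Tb k lab s
    · rw [Fn_O k lab s hbe hbl, Fn_O k lab s hbe hbl, cR_mk, cR_mk] at hcon
      have h1 : (Yc k lab s ((b-1)/2) + r) * lam2 k lab s =
          (Yc k lab s ((b-1)/2) + (r+1)) * lam2 k lab s := by
        rw [Prod.mk.injEq] at hcon
        exact_mod_cast hcon.2
      nlinarith [h1]
    · rw [Fn_Left k lab s hbe hbl, Fn_Left k lab s hbe hbl, cR_mk, cR_mk] at hcon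
      have hlb : blen k lab s b = lam2 k lab s := by
        rw [lam2]
        congr 1
        omega
      have h1 : (lam2 k lab s - r) * Yc k lab s (mb k lab s - 1) =
          (lam2 k lab s - (r+1)) * Yc k lab s (mb k lab s - 1) := by
        rw [Prod.mk.injEq] at hcon
        exact_mod_cast hcon.2
      have h2 : lam2 k lab s - r = lam2 k lab s - (r+1) :=
        Nat.eq_of_mul_eq_mul_right (by omega) h1
      omega

lemma Qn_last_ne (hk : 3 ≤ k) (hT3 : 3 ≤ Tb k lab s) (hodd : Tb k lab s % 2 = 1) :
    cR (Qn k lab s (k-1)) ≠ cR (Qn k lab s 0) := by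
  have hl2 : 1 ≤ lam2 k lab s := lam2_pos k lab s hk
  have hM2 : 2 ≤ mb k lab s := by rw [mb]; omega
  have hYm1 : 1 ≤ Yc k lab s (mb k lab s - 1) := Yc_pos k lab s hk hT3 (by omega) (by omega)
  have hTb : tb k lab s (k-1) = Tb k lab s := rfl
  have hB := bst_add_blen_T k lab s
  have hlb : blen k lab s (Tb k lab s) = lam2 k lab s := by rw [lam2]
  have hb1 : bst k lab s (Tb k lab s) ≤ k - 1 := bst_le k lab s (le_refl _)
  rw [Qn_zero k lab s hk hT3, Qn_lt k lab s (le_refl _), hTb,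
    Fn_Left k lab s (by omega) (by omega), cR_mk, cR_mk]
  intro hcon
  have h2 : (lam2 k lab s - (k - 1 - bst k lab s (Tb k lab s))) *
      Yc k lab s (mb k lab s - 1) = 0 := by
    rw [Prod.mk.injEq] at hcon
    exact_mod_cast hcon.2
  have := Nat.mul_eq_zero.mp h2
  omega

lemma Qn_inj (hk : 3 ≤ k) (hT3 : 3 ≤ Tb k lab s) (hodd : Tb k lab s % 2 = 1)
    {n n' : ℕ} (hnn : n < n') (hn' : n' ≤ k - 1) :
    cR (Qn k lab s n) ≠ cR (Qn k lab s n') := by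
  intro hcon
  have hz : cR (Qn k lab s n) ∈ segment ℝ (cR (Qn k lab s n)) (cR (Qn k lab s (n+1))) :=
    left_mem_segment _ _ _
  have hz' : cR (Qn k lab s n) ∈ segment ℝ (cR (Qn k lab s n')) (cR (Qn k lab s (n'+1))) := by
    rw [hcon]
    exact left_mem_segment _ _ _
  rcases core k lab s hk hT3 hodd hnn hn' hz hz' with ⟨h1, h2⟩ | ⟨h1, h2, h3⟩
  · -- Qn n = Qn n' = Qn (n+1) but edge endpoints distinct
    obtain ⟨hr1, hr2, hr3⟩ := edge_r k lab s (by omega) (by omega : n ≤ k - 1)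
    have hQ1 := Qn_lt k lab s (by omega : n ≤ k - 1)
    have hQ2 := Qn_succ k lab s hk hT3 hodd (by omega : n ≤ k - 1)
    apply Fn_ne k lab s hk hT3 hodd hr3 hr2
    rw [← hQ1, ← hQ2]
    rw [hcon, h1]
  · subst h1 h2
    exact Qn_last_ne k lab s hk hT3 hodd hcon.symm

variable (hk : 3 ≤ k) (hT3 : 3 ≤ Tb k lab s)
include hk hT3

omit hk hT3 in
lemma natCast_val_self (hk : 3 ≤ k) (a : ZMod k) : ((a.val : ℕ) : ZMod k) = a := by
  haveI : NeZero k := ⟨by omega⟩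
  rw [ZMod.natCast_val, ZMod.cast_id]

omit hk hT3 in
lemma zsub_inj {a b : ZMod k} (h : a - s = b - s) : a = b := by
  have := congrArg (fun x => x + s) h
  simpa [sub_add_cancel] using this

omit hk hT3 in
lemma Lw_lab (hk : 3 ≤ k) (i : ZMod k) : Lw k lab s ((i - s).val) = lab i := by
  rw [Lw, natCast_val_self k hk]
  congr 1
  ring

omit hk hT3 in
lemma sub_val_lt (hk : 3 ≤ k) (i : ZMod k) : (i - s).val ≤ k - 1 := by
  haveI : NeZero k := ⟨by omega⟩
  have := ZMod.val_lt (i - s)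
  omega

lemma pdraw_succ' (hodd : Tb k lab s % 2 = 1) (i : ZMod k) :
    pdraw k lab s (i + 1) = cR (Qn k lab s ((i - s).val + 1)) := by
  haveI : NeZero k := ⟨by omega⟩
  have hval : (i + 1 - s) = (((i - s).val + 1 : ℕ) : ZMod k) := by
    push_cast
    rw [natCast_val_self k hk]
    ring
  have hlt := ZMod.val_lt (i - s)
  rw [pdraw, hval, ZMod.val_natCast]
  by_cases hn1 : (i - s).val + 1 < k
  · rw [Nat.mod_eq_of_lt hn1]
  · have hn2 : (i - s).val = k - 1 := by omega
    have hn3 : ((i - s).val + 1) % k = 0 := by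
      rw [hn2, show k - 1 + 1 = k by omega, Nat.mod_self]
    rw [hn3, Qn_zero k lab s hk hT3]
    have hTb : tb k lab s (k-1) = Tb k lab s := rfl
    have hB := bst_add_blen_T k lab s
    have hb1 : bst k lab s (Tb k lab s) ≤ k - 1 := bst_le k lab s (le_refl _)
    rw [hn2, Qn_succ k lab s hk hT3 hodd (le_refl _), hTb,
      Fn_Left k lab s (by omega) (by omega)]
    have hlam : lam2 k lab s = blen k lab s (Tb k lab s) := rfl
    have hz : lam2 k lab s - (k - 1 - bst k lab s (Tb k lab s) + 1) = 0 := by omega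
    rw [hz, Nat.zero_mul]

lemma construction_respects (hodd : Tb k lab s % 2 = 1) (h0 : Lw k lab s 0 = HVLabel.H) :
    CycleRespects k lab (pdraw k lab s) := by
  haveI : NeZero k := ⟨by omega⟩
  intro i
  have hn : (i - s).val ≤ k - 1 := sub_val_lt k s hk i
  have hp1 : pdraw k lab s i = cR (Qn k lab s ((i - s).val)) := rfl
  have hp2 := pdraw_succ' k lab s hk hT3 hodd i
  rw [Qn_lt k lab s hn] at hp1
  rw [Qn_succ k lab s hk hT3 hodd hn] at hp2
  have hpar := tb_parity k lab s h0 ((i - s).val)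
  rw [Lw_lab k lab s hk i] at hpar
  obtain ⟨hr1, hr2, hr3⟩ := edge_r k lab s (by omega) hn
  constructor
  · intro hH
    have hbe : tb k lab s ((i - s).val) % 2 = 0 := by
      obtain ⟨c, hc⟩ := hpar.mp hH
      omega
    rw [Horiz, hp1, hp2]
    by_cases hbl : tb k lab s ((i - s).val) < Tb k lab s - 1
    · rw [Fn_E k lab s hbe hbl, Fn_E k lab s hbe hbl, cR_mk, cR_mk]
    · rw [Fn_Top k lab s hbe hbl, Fn_Top k lab s hbe hbl, cR_mk, cR_mk]
  · intro hV
    have hbo : ¬ tb k lab s ((i - s).val) % 2 = 0 := by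
      intro hcon
      have : lab i = HVLabel.H := hpar.mpr ⟨tb k lab s ((i - s).val) / 2, by omega⟩
      rw [this] at hV
      exact absurd hV (by simp)
    rw [Vert, hp1, hp2]
    by_cases hbl : tb k lab s ((i - s).val) < Tb k lab s
    · rw [Fn_O k lab s hbo hbl, Fn_O k lab s hbo hbl, cR_mk, cR_mk]
    · rw [Fn_Left k lab s hbo hbl, Fn_Left k lab s hbo hbl, cR_mk, cR_mk]

lemma construction_inj (hodd : Tb k lab s % 2 = 1) :
    Function.Injective (pdraw k lab s) := by
  haveI : NeZero k := ⟨by omega⟩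
  intro v v' h
  by_contra hne
  have hv : (v - s).val ≠ (v' - s).val := by
    intro hval
    apply hne
    apply zsub_inj k s
    rw [← natCast_val_self k hk (v - s), ← natCast_val_self k hk (v' - s), hval]
  have h1 := sub_val_lt k s hk v
  have h2 := sub_val_lt k s hk v'
  rcases Nat.lt_or_ge ((v - s).val) ((v' - s).val) with hlt | hge
  · exact Qn_inj k lab s hk hT3 hodd hlt h2 h
  · exact Qn_inj k lab s hk hT3 hodd (by omega) h1 h.symm

lemma plan_aux2 (hodd : Tb k lab s % 2 = 1)
    (u u' : ZMod k) (hlt : (u - s).val < (u' - s).val) (z : ℝ × ℝ)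
    (hz : z ∈ segment ℝ (pdraw k lab s u) (pdraw k lab s (u+1)))
    (hz' : z ∈ segment ℝ (pdraw k lab s u') (pdraw k lab s (u'+1))) :
    ∃ w : ZMod k, pdraw k lab s w = z ∧ (w = u ∨ w = u + 1) ∧ (w = u' ∨ w = u' + 1) := by
  haveI : NeZero k := ⟨by omega⟩
  have hn' : (u' - s).val ≤ k - 1 := sub_val_lt k s hk u'
  rw [show pdraw k lab s u = cR (Qn k lab s ((u - s).val)) from rfl,
    pdraw_succ' k lab s hk hT3 hodd u] at hz
  rw [show pdraw k lab s u' = cR (Qn k lab s ((u' - s).val)) from rfl,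
    pdraw_succ' k lab s hk hT3 hodd u'] at hz'
  have e1 : u + 1 - s = (((u - s).val + 1 : ℕ) : ZMod k) := by
    push_cast
    rw [natCast_val_self k hk]
    ring
  have e1' : u' + 1 - s = (((u' - s).val + 1 : ℕ) : ZMod k) := by
    push_cast
    rw [natCast_val_self k hk]
    ring
  rcases core k lab s hk hT3 hodd hlt hn' hz hz' with ⟨h1, h2⟩ | ⟨h1, h2, h3⟩
  · refine ⟨u + 1, ?_, Or.inr rfl, Or.inl ?_⟩
    · rw [pdraw_succ' k lab s hk hT3 hodd u, ← h1, ← h2]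
    · apply zsub_inj k s
      rw [e1, ← natCast_val_self k hk (u' - s), h1]
  · refine ⟨u, ?_, Or.inl rfl, Or.inr ?_⟩
    · rw [show pdraw k lab s u = cR (Qn k lab s ((u - s).val)) from rfl, h1, h3]
    · apply zsub_inj k s
      rw [e1', ← natCast_val_self k hk (u - s), h1, h2]
      rw [show (k - 1 + 1 : ℕ) = k by omega, ZMod.natCast_self]
      simp

lemma plan_aux (hodd : Tb k lab s % 2 = 1)
    (u u' : ZMod k) (hne : u ≠ u') (z : ℝ × ℝ)
    (hz : z ∈ segment ℝ (pdraw k lab s u) (pdraw k lab s (u+1)))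
    (hz' : z ∈ segment ℝ (pdraw k lab s u') (pdraw k lab s (u'+1))) :
    ∃ w : ZMod k, pdraw k lab s w = z ∧ (w = u ∨ w = u + 1) ∧ (w = u' ∨ w = u' + 1) := by
  haveI : NeZero k := ⟨by omega⟩
  have hv : (u - s).val ≠ (u' - s).val := by
    intro hval
    apply hne
    apply zsub_inj k s
    rw [← natCast_val_self k hk (u - s), ← natCast_val_self k hk (u' - s), hval]
  rcases Nat.lt_or_ge ((u - s).val) ((u' - s).val) with hlt | hge
  · exact plan_aux2 k lab s hk hT3 hodd u u' hlt z hz hz'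
  · obtain ⟨w, hw1, hw2, hw3⟩ :=
      plan_aux2 k lab s hk hT3 hodd u' u (by omega) z hz' hz
    exact ⟨w, hw1, hw3, hw2⟩

lemma construction_planar (hodd : Tb k lab s % 2 = 1) :
    IsPlanarDrawing (cycleGraph k) (pdraw k lab s) := by
  intro u v u' v' huv huv' hne x hx hx'
  rcases huv.2 with h1 | h1 <;> rcases huv'.2 with h2 | h2
  · obtain ⟨w, hw1, hw2, hw3⟩ := plan_aux k lab s hk hT3 hodd u u'
      (fun h => hne (by rw [h1, h2, h])) x
      (by rw [← h1]; exact hx) (by rw [← h2]; exact hx')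
    exact ⟨w, hw1, by rw [h1]; exact hw2, by rw [h2]; exact hw3⟩
  · obtain ⟨w, hw1, hw2, hw3⟩ := plan_aux k lab s hk hT3 hodd u v'
      (fun h => hne (by rw [h1, h2, h, Sym2.eq_swap])) x
      (by rw [← h1]; exact hx) (by rw [← h2, segment_symm]; exact hx')
    exact ⟨w, hw1, by rw [h1]; exact hw2, by rw [h2]; tauto⟩
  · obtain ⟨w, hw1, hw2, hw3⟩ := plan_aux k lab s hk hT3 hodd v u'
      (fun h => hne (by rw [h1, h2, h, Sym2.eq_swap])) x
      (by rw [← h1, segment_symm]; exact hx) (by rw [← h2]; exact hx')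
    exact ⟨w, hw1, by rw [h1]; tauto, by rw [h2]; exact hw3⟩
  · obtain ⟨w, hw1, hw2, hw3⟩ := plan_aux k lab s hk hT3 hodd v v'
      (fun h => hne (by rw [h1, h2, h])) x
      (by rw [← h1, segment_symm]; exact hx) (by rw [← h2, segment_symm]; exact hx')
    exact ⟨w, hw1, by rw [h1]; tauto, by rw [h2]; tauto⟩

end Construction2

section Main

variable (k : ℕ) (lab : ZMod k → HVLabel)

/-- the labels form one H block followed by one V block (cyclically) -/
def TwoBlock : Prop := ∃ (s : ZMod k) (a : ℕ), 0 < a ∧ a < k ∧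
  (∀ j : ℕ, j < a → lab (s + (j : ZMod k)) = HVLabel.H) ∧
  (∀ j : ℕ, a ≤ j → j < k → lab (s + (j : ZMod k)) = HVLabel.V)

lemma exists_VH (hk : 3 ≤ k) (a b : ZMod k) (ha : lab a = HVLabel.V)
    (hb : lab b = HVLabel.H) : ∃ s : ZMod k, lab (s - 1) = HVLabel.V ∧ lab s = HVLabel.H := by
  by_contra hno
  push_neg at hno
  have hstep : ∀ s : ZMod k, lab s = HVLabel.H → lab (s - 1) = HVLabel.H := by
    intro t ht
    rcases hv_cases (lab (t - 1)) with h | h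
    · exact h
    · exact absurd ht (hno t h)
  have hchain : ∀ n : ℕ, lab (b - (n : ZMod k)) = HVLabel.H := by
    intro n
    induction n with
    | zero => simpa using hb
    | succ n ih =>
      have := hstep _ ih
      have he : b - ((n : ZMod k) + 1) = b - (n : ZMod k) - 1 := by ring
      rw [show ((n + 1 : ℕ) : ZMod k) = (n : ZMod k) + 1 by push_cast; ring, he]
      exact this
  have := hchain ((b - a).val)
  rw [natCast_val_self k hk (b - a)] at this
  have hba : b - (b - a) = a := by ring
  rw [hba, ha] at this
  exact absurd this (by simp)

lemma TwoBlock_not_HasHVHV (hk : 3 ≤ k) (h2 : TwoBlock k lab) : ¬ HasHVHV k lab := by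
  haveI : NeZero k := ⟨by omega⟩
  obtain ⟨s, a, ha0, hak, hbH, hbV⟩ := h2
  have hσ : s.val < k := ZMod.val_lt s
  have key : ∀ x : ℕ, x < k →
      (lab (x : ZMod k) = HVLabel.H ↔
        ((s.val ≤ x ∧ x < s.val + a) ∨ x + k < s.val + a)) := by
    intro x hx
    have hg : ((x : ZMod k) - s).val = (x + (k - s.val)) % k := by
      have h1 : (x : ZMod k) - s = ((x + (k - s.val) : ℕ) : ZMod k) := by
        push_cast [Nat.cast_sub (le_of_lt hσ)]
        rw [ZMod.natCast_self, natCast_val_self k hk s]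
        ring
      rw [h1, ZMod.val_natCast]
    have hxeq : (x : ZMod k) = s + ((((x : ZMod k) - s).val : ℕ) : ZMod k) := by
      rw [natCast_val_self k hk]
      ring
    have hgk : ((x : ZMod k) - s).val < k := ZMod.val_lt _
    constructor
    · intro hH
      by_contra hcon
      -- then g ≥ a, so lab x = V
      have hga : a ≤ ((x : ZMod k) - s).val := by
        by_contra hga
        -- g < a
        rw [hg] at hga hgk
        rcases Nat.lt_or_ge (x + (k - s.val)) k with hc | hc
        · rw [Nat.mod_eq_of_lt hc] at hga
          omega
        · rw [Nat.mod_eq_sub_mod hc, Nat.mod_eq_of_lt (by omega)] at hga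
          omega
      have := hbV _ hga hgk
      rw [← hxeq] at this
      rw [this] at hH
      exact absurd hH (by simp)
    · intro hor
      have hga : ((x : ZMod k) - s).val < a := by
        rw [hg]
        rcases Nat.lt_or_ge (x + (k - s.val)) k with hc | hc
        · rw [Nat.mod_eq_of_lt hc]
          omega
        · rw [Nat.mod_eq_sub_mod hc, Nat.mod_eq_of_lt (by omega)]
          omega
      have := hbH _ hga
      rw [← hxeq] at this
      exact this
  rintro ⟨i1, i2, i3, i4, h12, h23, h34, h4k, hpat⟩
  have hi1 : i1 < k := by omega
  have hi2 : i2 < k := by omega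
  have hi3 : i3 < k := by omega
  have hi4 : i4 < k := by omega
  rcases hpat with ⟨p1, p2, p3, p4⟩ | ⟨p1, p2, p3, p4⟩
  · have q1 := (key i1 hi1).mp p1
    have q3 := (key i3 hi3).mp p3
    have q2 : ¬ ((s.val ≤ i2 ∧ i2 < s.val + a) ∨ i2 + k < s.val + a) := by
      intro hq
      rw [(key i2 hi2).mpr hq] at p2
      exact absurd p2 (by simp)
    have q4 : ¬ ((s.val ≤ i4 ∧ i4 < s.val + a) ∨ i4 + k < s.val + a) := by
      intro hq
      rw [(key i4 hi4).mpr hq] at p4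
      exact absurd p4 (by simp)
    omega
  · have q2 := (key i2 hi2).mp p2
    have q4 := (key i4 hi4).mp p4
    have q1 : ¬ ((s.val ≤ i1 ∧ i1 < s.val + a) ∨ i1 + k < s.val + a) := by
      intro hq
      rw [(key i1 hi1).mpr hq] at p1
      exact absurd p1 (by simp)
    have q3 : ¬ ((s.val ≤ i3 ∧ i3 < s.val + a) ∨ i3 + k < s.val + a) := by
      intro hq
      rw [(key i3 hi3).mpr hq] at p3
      exact absurd p3 (by simp)
    omega

lemma rotation (hk : 3 ≤ k) (s : ZMod k) (t1 t2 t3 t4 : ℕ)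
    (h12 : t1 < t2) (h23 : t2 < t3) (h34 : t3 < t4) (h4 : t4 < k)
    (p1 : lab (s + (t1 : ZMod k)) = HVLabel.H) (p2 : lab (s + (t2 : ZMod k)) = HVLabel.V)
    (p3 : lab (s + (t3 : ZMod k)) = HVLabel.H) (p4 : lab (s + (t4 : ZMod k)) = HVLabel.V) :
    HasHVHV k lab := by
  haveI : NeZero k := ⟨by omega⟩
  have hσ : s.val < k := ZMod.val_lt s
  have hlab : ∀ t : ℕ, lab ((((s.val + t) % k : ℕ)) : ZMod k) = lab (s + (t : ZMod k)) := by
    intro t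
    congr 1
    rw [ZMod.natCast_mod]
    push_cast
    rw [natCast_val_self k hk s]
  have hmod : ∀ t : ℕ, t < k → (s.val + t) % k = if s.val + t < k then s.val + t
      else s.val + t - k := by
    intro t ht
    split
    · exact Nat.mod_eq_of_lt (by omega)
    · rw [Nat.mod_eq_sub_mod (by omega), Nat.mod_eq_of_lt (by omega)]
  have e1 := hmod t1 (by omega)
  have e2 := hmod t2 (by omega)
  have e3 := hmod t3 (by omega)
  have e4 := hmod t4 (by omega)
  by_cases c1 : s.val + t1 < k
  · by_cases c2 : s.val + t2 < k
    · by_cases c3 : s.val + t3 < k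
      · by_cases c4 : s.val + t4 < k
        · exact ⟨(s.val + t1) % k, (s.val + t2) % k, (s.val + t3) % k, (s.val + t4) % k,
            by simp only [e1, e2, e3, e4]; split_ifs <;> omega, by simp only [e1, e2, e3, e4]; split_ifs <;> omega,
            by simp only [e1, e2, e3, e4]; split_ifs <;> omega, by simp only [e1, e2, e3, e4]; split_ifs <;> omega,
            Or.inl ⟨by rw [hlab]; exact p1, by rw [hlab]; exact p2,
              by rw [hlab]; exact p3, by rw [hlab]; exact p4⟩⟩
        · exact ⟨(s.val + t4) % k, (s.val + t1) % k, (s.val + t2) % k, (s.val + t3) % k,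
            by simp only [e1, e2, e3, e4]; split_ifs <;> omega, by simp only [e1, e2, e3, e4]; split_ifs <;> omega,
            by simp only [e1, e2, e3, e4]; split_ifs <;> omega, by simp only [e1, e2, e3, e4]; split_ifs <;> omega,
            Or.inr ⟨by rw [hlab]; exact p4, by rw [hlab]; exact p1,
              by rw [hlab]; exact p2, by rw [hlab]; exact p3⟩⟩
      · exact ⟨(s.val + t3) % k, (s.val + t4) % k, (s.val + t1) % k, (s.val + t2) % k,
          by simp only [e1, e2, e3, e4]; split_ifs <;> omega, by simp only [e1, e2, e3, e4]; split_ifs <;> omega,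
          by simp only [e1, e2, e3, e4]; split_ifs <;> omega, by simp only [e1, e2, e3, e4]; split_ifs <;> omega,
          Or.inl ⟨by rw [hlab]; exact p3, by rw [hlab]; exact p4,
            by rw [hlab]; exact p1, by rw [hlab]; exact p2⟩⟩
    · exact ⟨(s.val + t2) % k, (s.val + t3) % k, (s.val + t4) % k, (s.val + t1) % k,
        by simp only [e1, e2, e3, e4]; split_ifs <;> omega, by simp only [e1, e2, e3, e4]; split_ifs <;> omega,
        by simp only [e1, e2, e3, e4]; split_ifs <;> omega, by simp only [e1, e2, e3, e4]; split_ifs <;> omega,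
        Or.inr ⟨by rw [hlab]; exact p2, by rw [hlab]; exact p3,
          by rw [hlab]; exact p4, by rw [hlab]; exact p1⟩⟩
  · exact ⟨(s.val + t1) % k, (s.val + t2) % k, (s.val + t3) % k, (s.val + t4) % k,
      by simp only [e1, e2, e3, e4]; split_ifs <;> omega, by simp only [e1, e2, e3, e4]; split_ifs <;> omega,
      by simp only [e1, e2, e3, e4]; split_ifs <;> omega, by simp only [e1, e2, e3, e4]; split_ifs <;> omega,
      Or.inl ⟨by rw [hlab]; exact p1, by rw [hlab]; exact p2,
        by rw [hlab]; exact p3, by rw [hlab]; exact p4⟩⟩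

end Main

section Main2

variable (k : ℕ) (lab : ZMod k → HVLabel) (s : ZMod k)

lemma Lw_zero' : Lw k lab s 0 = lab s := by
  rw [Lw]
  norm_num

lemma Lw_last' (hk : 3 ≤ k) : Lw k lab s (k-1) = lab (s - 1) := by
  rw [Lw]
  congr 1
  rw [Nat.cast_sub (by omega : 1 ≤ k), Nat.cast_one, ZMod.natCast_self]
  ring

lemma Tb_three (hk : 3 ≤ k) (hH : lab s = HVLabel.H) (hV' : lab (s - 1) = HVLabel.V)
    (hno : ¬ TwoBlock k lab) : 3 ≤ Tb k lab s := by
  have h0 : Lw k lab s 0 = HVLabel.H := by rw [Lw_zero']; exact hH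
  have hlast : Lw k lab s (k-1) = HVLabel.V := by rw [Lw_last' k lab s hk]; exact hV'
  have hodd := Tb_odd k lab s h0 hlast
  by_contra hcon
  have hT1 : Tb k lab s = 1 := by omega
  apply hno
  refine ⟨s, bst k lab s 1, ?_, ?_, ?_, ?_⟩
  · by_contra hb
    have h5 : bst k lab s 1 ≤ 0 := by omega
    rw [bst_le_iff k lab s (by omega)] at h5
    rw [tb_zero] at h5
    omega
  · have := bst_le k lab s (show 1 ≤ tb k lab s (k-1) by
      rw [show tb k lab s (k-1) = Tb k lab s from rfl]; omega)
    omega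
  · intro j hj
    have hjt : tb k lab s j = 0 := by
      have h6 : ¬ bst k lab s 1 ≤ j := by omega
      rw [bst_le_iff k lab s (by omega)] at h6
      omega
    exact (tb_parity k lab s h0 j).mpr (by rw [hjt]; exact Even.zero)
  · intro j hja hjk
    have hj1 : 1 ≤ tb k lab s j := by
      rw [← bst_le_iff k lab s (by omega)]
      omega
    have hj2 : tb k lab s j ≤ 1 := by
      have := tb_mono k lab s (show j ≤ k - 1 by omega)
      rw [show tb k lab s (k-1) = Tb k lab s from rfl] at this
      omega
    have hodd1 : ¬ Even (tb k lab s j) := by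
      rw [show tb k lab s j = 1 by omega]
      simp
    rcases hv_cases (Lw k lab s j) with hLj | hLj
    · exact absurd ((tb_parity k lab s h0 j).mp hLj) hodd1
    · exact hLj

lemma HasHVHV_of (hk : 3 ≤ k) (hH : lab s = HVLabel.H) (hV' : lab (s - 1) = HVLabel.V)
    (hT3 : 3 ≤ Tb k lab s) : HasHVHV k lab := by
  have h0 : Lw k lab s 0 = HVLabel.H := by rw [Lw_zero']; exact hH
  have hlast : Lw k lab s (k-1) = HVLabel.V := by rw [Lw_last' k lab s hk]; exact hV'
  have ht1 : tb k lab s (bst k lab s 1) = 1 := tb_bst k lab s (by omega)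
  have ht2 : tb k lab s (bst k lab s 2) = 2 := tb_bst k lab s (by omega)
  have hb0 : 0 < bst k lab s 1 := by
    by_contra hb
    have h5 : bst k lab s 1 ≤ 0 := by omega
    rw [bst_le_iff k lab s (by omega)] at h5
    rw [tb_zero] at h5
    omega
  have hb12 : bst k lab s 1 < bst k lab s 2 := by
    by_contra hb
    have h5 : bst k lab s 2 ≤ bst k lab s 1 := by omega
    rw [bst_le_iff k lab s (by omega)] at h5
    omega
  have hb2k : bst k lab s 2 < k - 1 := by
    have h5 : bst k lab s 2 ≤ k - 1 := bst_le k lab s (show 2 ≤ tb k lab s (k-1) by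
      rw [show tb k lab s (k-1) = Tb k lab s from rfl]; omega)
    rcases Nat.lt_or_ge (bst k lab s 2) (k-1) with h | h
    · exact h
    · exfalso
      have : bst k lab s 2 = k - 1 := by omega
      rw [this, show tb k lab s (k-1) = Tb k lab s from rfl] at ht2
      omega
  have hL1 : Lw k lab s (bst k lab s 1) = HVLabel.V := by
    rcases hv_cases (Lw k lab s (bst k lab s 1)) with h | h
    · exfalso
      have := (tb_parity k lab s h0 _).mp h
      rw [ht1] at this
      simp at this
    · exact h
  have hL2 : Lw k lab s (bst k lab s 2) = HVLabel.H := by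
    exact (tb_parity k lab s h0 _).mpr (by rw [ht2]; decide)
  apply rotation k lab hk s 0 (bst k lab s 1) (bst k lab s 2) (k-1)
    hb0 hb12 hb2k (by omega)
  · rw [show s + ((0:ℕ) : ZMod k) = s by norm_num]
    exact hH
  · exact hL1
  · exact hL2
  · exact hlast

lemma construction_good (hk : 3 ≤ k) (hH : lab s = HVLabel.H) (hV' : lab (s - 1) = HVLabel.V)
    (hT3 : 3 ≤ Tb k lab s) : CycleGood k lab (pdraw k lab s) := by
  have h0 : Lw k lab s 0 = HVLabel.H := by rw [Lw_zero']; exact hH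
  have hlast : Lw k lab s (k-1) = HVLabel.V := by rw [Lw_last' k lab s hk]; exact hV'
  have hodd := Tb_odd k lab s h0 hlast
  exact ⟨construction_inj k lab s hk hT3 hodd, construction_planar k lab s hk hT3 hodd,
    construction_respects k lab s hk hT3 hodd h0⟩

lemma twoblock_no (hk : 3 ≤ k) (h2 : TwoBlock k lab) (p : ZMod k → ℝ × ℝ)
    (hp : CycleGood k lab p) : False := by
  haveI : NeZero k := ⟨by omega⟩
  obtain ⟨s, a, ha0, hak, hbH, hbV⟩ := h2
  obtain ⟨hinj, hplan, hresp⟩ := hp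
  have hy : ∀ j : ℕ, j ≤ a → (p (s + (j : ZMod k))).2 = (p s).2 := by
    intro j hj
    induction j with
    | zero => norm_num
    | succ j ih =>
      have hHj := hbH j (by omega)
      have hhor := (hresp (s + (j : ZMod k))).1 hHj
      rw [Horiz] at hhor
      rw [show ((j+1 : ℕ) : ZMod k) = ((j:ℕ) : ZMod k) + 1 by push_cast; ring, ← add_assoc,
        ← hhor]
      exact ih (by omega)
  have hx : ∀ j : ℕ, a ≤ j → j ≤ k → (p (s + (j : ZMod k))).1 = (p (s + (a : ZMod k))).1 := by
    intro j hja hjk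
    induction j with
    | zero => omega
    | succ j ih =>
      rcases Nat.lt_or_ge j a with h | h
      · have hja' : j + 1 = a := by omega
        rw [hja']
      · have hVj := hbV j h (by omega)
        have hver := (hresp (s + (j : ZMod k))).2 hVj
        rw [Vert] at hver
        rw [show ((j+1 : ℕ) : ZMod k) = ((j:ℕ) : ZMod k) + 1 by push_cast; ring, ← add_assoc,
          ← hver]
        exact ih h (by omega)
  have hxa : (p (s + (a : ZMod k))).1 = (p s).1 := by
    have := hx k (by omega) (le_refl k)
    rw [ZMod.natCast_self, add_zero] at this
    exact this.symm
  have heq : p (s + (a : ZMod k)) = p s := by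
    refine Prod.ext_iff.mpr ⟨hxa, ?_⟩
    exact hy a (le_refl a)
  have := hinj heq
  have ha00 : (a : ZMod k) = 0 := by
    have h7 := congrArg (fun x => x - s) this
    simpa using h7
  rw [ZMod.natCast_eq_zero_iff] at ha00
  have := Nat.le_of_dvd (by omega) ha00
  omega

lemma const_H_no (hk : 3 ≤ k) (hall : ∀ i, lab i = HVLabel.H) (p : ZMod k → ℝ × ℝ)
    (hp : CycleGood k lab p) : False := by
  haveI : NeZero k := ⟨by omega⟩
  obtain ⟨hinj, hplan, hresp⟩ := hp
  have hstep : ∀ i : ZMod k, (p i).2 = (p (i+1)).2 := fun i => (hresp i).1 (hall i)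
  have hy : ∀ i : ZMod k, (p i).2 = (p 0).2 := by
    have hn : ∀ n : ℕ, (p ((n : ℕ) : ZMod k)).2 = (p 0).2 := by
      intro n
      induction n with
      | zero => norm_num
      | succ n ih =>
        rw [show ((n+1 : ℕ) : ZMod k) = ((n:ℕ) : ZMod k) + 1 by push_cast; ring, ← hstep]
        exact ih
    intro i
    rw [← natCast_val_self k hk i]
    exact hn i.val
  obtain ⟨m, _, hm⟩ := Finset.exists_max_image (Finset.univ : Finset (ZMod k))
    (fun i => (p i).1) ⟨0, Finset.mem_univ 0⟩
  have h1ne : (1 : ZMod k) ≠ 0 := by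
    have h5 : ((1:ℕ) : ZMod k) ≠ 0 := by
      rw [Ne, ZMod.natCast_eq_zero_iff]
      intro hdvd
      have := Nat.le_of_dvd (by norm_num) hdvd
      omega
    simpa using h5
  have h2ne : (2 : ZMod k) ≠ 0 := by
    have h5 : ((2:ℕ) : ZMod k) ≠ 0 := by
      rw [Ne, ZMod.natCast_eq_zero_iff]
      intro hdvd
      have := Nat.le_of_dvd (by norm_num) hdvd
      omega
    simpa using h5
  have hm1 : m - 1 ≠ m := by
    intro h
    exact h1ne (by linear_combination -h)
  have hm2 : m + 1 ≠ m := by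
    intro h
    exact h1ne (by linear_combination h)
  have hm3 : m - 1 ≠ m + 1 := by
    intro h
    exact h2ne (by linear_combination -h)
  have adj1 : (cycleGraph k).Adj (m-1) m := ⟨hm1, Or.inl (by ring)⟩
  have adj2 : (cycleGraph k).Adj m (m+1) := ⟨fun h => hm2 h.symm, Or.inl rfl⟩
  have hSym : s(m-1, m) ≠ s(m, m+1) := by
    rw [Ne, Sym2.eq_iff]
    rintro (⟨ha, hb⟩ | ⟨ha, hb⟩)
    · exact hm1 ha
    · exact hm3 ha
  have hxlt1 : (p (m-1)).1 < (p m).1 := by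
    rcases lt_or_eq_of_le (hm (m-1) (Finset.mem_univ _)) with h | h
    · exact h
    · exact absurd (hinj (Prod.ext_iff.mpr ⟨h, (hy (m-1)).trans (hy m).symm⟩)) hm1
  have hxlt2 : (p (m+1)).1 < (p m).1 := by
    rcases lt_or_eq_of_le (hm (m+1) (Finset.mem_univ _)) with h | h
    · exact h
    · exact absurd (hinj (Prod.ext_iff.mpr ⟨h, (hy (m+1)).trans (hy m).symm⟩)) (fun hc => hm2 hc)
  have hξ : max (p (m-1)).1 (p (m+1)).1 < (p m).1 := max_lt hxlt1 hxlt2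
  set ξ := max (p (m-1)).1 (p (m+1)).1 with hxi
  set t := (ξ + (p m).1)/2 with ht
  have e1 : p (m-1) = ((p (m-1)).1, (p 0).2) := by rw [← hy (m-1)]
  have e2 : p m = ((p m).1, (p 0).2) := by rw [← hy m]
  have e3 : p (m+1) = ((p (m+1)).1, (p 0).2) := by rw [← hy (m+1)]
  have hz1 : ((t, (p 0).2) : ℝ × ℝ) ∈ segment ℝ (p (m-1)) (p m) := by
    rw [e1, e2, mem_seg_horiz_s8]
    refine ⟨rfl, ?_⟩
    rw [Set.uIcc_of_le (le_of_lt hxlt1), Set.mem_Icc]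
    constructor
    · have := le_max_left (p (m-1)).1 (p (m+1)).1
      rw [← hxi] at this
      simp only
      linarith
    · simp only
      linarith
  have hz2 : ((t, (p 0).2) : ℝ × ℝ) ∈ segment ℝ (p m) (p (m+1)) := by
    rw [e2, e3, mem_seg_horiz_s8]
    refine ⟨rfl, ?_⟩
    rw [Set.uIcc_of_ge (le_of_lt hxlt2), Set.mem_Icc]
    constructor
    · have := le_max_right (p (m-1)).1 (p (m+1)).1
      rw [← hxi] at this
      simp only
      linarith
    · simp only
      linarith
  obtain ⟨w, hw, hw1, hw2⟩ := hplan (m-1) m m (m+1) adj1 adj2 hSym (t, (p 0).2) hz1 hz2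
  rcases hw1 with h | h <;> rcases hw2 with h' | h'
  · exact hm1 (h.symm.trans h')
  · exact hm3 (h.symm.trans h')
  · rw [h'] at hw
    have h9 : (p m).1 = t := by rw [hw]
    linarith
  · rw [h] at hw
    have h9 : (p m).1 = t := by rw [hw]
    linarith

lemma const_V_no (hk : 3 ≤ k) (hall : ∀ i, lab i = HVLabel.V) (p : ZMod k → ℝ × ℝ)
    (hp : CycleGood k lab p) : False := by
  haveI : NeZero k := ⟨by omega⟩
  obtain ⟨hinj, hplan, hresp⟩ := hp
  have hstep : ∀ i : ZMod k, (p i).1 = (p (i+1)).1 := fun i => (hresp i).2 (hall i)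
  have hy : ∀ i : ZMod k, (p i).1 = (p 0).1 := by
    have hn : ∀ n : ℕ, (p ((n : ℕ) : ZMod k)).1 = (p 0).1 := by
      intro n
      induction n with
      | zero => norm_num
      | succ n ih =>
        rw [show ((n+1 : ℕ) : ZMod k) = ((n:ℕ) : ZMod k) + 1 by push_cast; ring, ← hstep]
        exact ih
    intro i
    rw [← natCast_val_self k hk i]
    exact hn i.val
  obtain ⟨m, _, hm⟩ := Finset.exists_max_image (Finset.univ : Finset (ZMod k))
    (fun i => (p i).2) ⟨0, Finset.mem_univ 0⟩
  have h1ne : (1 : ZMod k) ≠ 0 := by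
    have h5 : ((1:ℕ) : ZMod k) ≠ 0 := by
      rw [Ne, ZMod.natCast_eq_zero_iff]
      intro hdvd
      have := Nat.le_of_dvd (by norm_num) hdvd
      omega
    simpa using h5
  have h2ne : (2 : ZMod k) ≠ 0 := by
    have h5 : ((2:ℕ) : ZMod k) ≠ 0 := by
      rw [Ne, ZMod.natCast_eq_zero_iff]
      intro hdvd
      have := Nat.le_of_dvd (by norm_num) hdvd
      omega
    simpa using h5
  have hm1 : m - 1 ≠ m := by
    intro h
    exact h1ne (by linear_combination -h)
  have hm2 : m + 1 ≠ m := by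
    intro h
    exact h1ne (by linear_combination h)
  have hm3 : m - 1 ≠ m + 1 := by
    intro h
    exact h2ne (by linear_combination -h)
  have adj1 : (cycleGraph k).Adj (m-1) m := ⟨hm1, Or.inl (by ring)⟩
  have adj2 : (cycleGraph k).Adj m (m+1) := ⟨fun h => hm2 h.symm, Or.inl rfl⟩
  have hSym : s(m-1, m) ≠ s(m, m+1) := by
    rw [Ne, Sym2.eq_iff]
    rintro (⟨ha, hb⟩ | ⟨ha, hb⟩)
    · exact hm1 ha
    · exact hm3 ha
  have hxlt1 : (p (m-1)).2 < (p m).2 := by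
    rcases lt_or_eq_of_le (hm (m-1) (Finset.mem_univ _)) with h | h
    · exact h
    · exact absurd (hinj (Prod.ext_iff.mpr ⟨(hy (m-1)).trans (hy m).symm, h⟩)) hm1
  have hxlt2 : (p (m+1)).2 < (p m).2 := by
    rcases lt_or_eq_of_le (hm (m+1) (Finset.mem_univ _)) with h | h
    · exact h
    · exact absurd (hinj (Prod.ext_iff.mpr ⟨(hy (m+1)).trans (hy m).symm, h⟩)) (fun hc => hm2 hc)
  have hξ : max (p (m-1)).2 (p (m+1)).2 < (p m).2 := max_lt hxlt1 hxlt2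
  set ξ := max (p (m-1)).2 (p (m+1)).2 with hxi
  set t := (ξ + (p m).2)/2 with ht
  have e1 : p (m-1) = ((p 0).1, (p (m-1)).2) := by rw [← hy (m-1)]
  have e2 : p m = ((p 0).1, (p m).2) := by rw [← hy m]
  have e3 : p (m+1) = ((p 0).1, (p (m+1)).2) := by rw [← hy (m+1)]
  have hz1 : (((p 0).1, t) : ℝ × ℝ) ∈ segment ℝ (p (m-1)) (p m) := by
    rw [e1, e2, mem_seg_vert_s8]
    refine ⟨rfl, ?_⟩
    rw [Set.uIcc_of_le (le_of_lt hxlt1), Set.mem_Icc]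
    constructor
    · have := le_max_left (p (m-1)).2 (p (m+1)).2
      rw [← hxi] at this
      simp only
      linarith
    · simp only
      linarith
  have hz2 : (((p 0).1, t) : ℝ × ℝ) ∈ segment ℝ (p m) (p (m+1)) := by
    rw [e2, e3, mem_seg_vert_s8]
    refine ⟨rfl, ?_⟩
    rw [Set.uIcc_of_ge (le_of_lt hxlt2), Set.mem_Icc]
    constructor
    · have := le_max_right (p (m-1)).2 (p (m+1)).2
      rw [← hxi] at this
      simp only
      linarith
    · simp only
      linarith
  obtain ⟨w, hw, hw1, hw2⟩ := hplan (m-1) m m (m+1) adj1 adj2 hSym ((p 0).1, t) hz1 hz2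
  rcases hw1 with h | h <;> rcases hw2 with h' | h'
  · exact hm1 (h.symm.trans h')
  · exact hm3 (h.symm.trans h')
  · rw [h'] at hw
    have h9 : (p m).2 = t := by rw [hw]
    linarith
  · rw [h] at hw
    have h9 : (p m).2 = t := by rw [hw]
    linarith

end Main2

lemma forward (k : ℕ) (lab : ZMod k → HVLabel) (hk : 3 ≤ k) (p : ZMod k → ℝ × ℝ)
    (hp : CycleGood k lab p) : HasHVHV k lab := by
  by_contra hno
  by_cases hc : ∃ a : ZMod k, lab a = HVLabel.V
  · by_cases hc' : ∃ b : ZMod k, lab b = HVLabel.H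
    · obtain ⟨a, ha⟩ := hc
      obtain ⟨b, hb⟩ := hc'
      obtain ⟨s, hV', hH⟩ := exists_VH k lab hk a b ha hb
      by_cases h2 : TwoBlock k lab
      · exact twoblock_no k lab hk h2 p hp
      · exact hno (HasHVHV_of k lab s hk hH hV' (Tb_three k lab s hk hH hV' h2))
    · push_neg at hc'
      have hall : ∀ i, lab i = HVLabel.V := by
        intro i
        rcases hv_cases (lab i) with h | h
        · exact absurd h (hc' i)
        · exact h
      exact const_V_no k lab hk hall p hp
  · push_neg at hc
    have hall : ∀ i, lab i = HVLabel.H := by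
      intro i
      rcases hv_cases (lab i) with h | h
      · exact h
      · exact absurd h (hc i)
    exact const_H_no k lab hk hall p hp

lemma reverse (k : ℕ) (lab : ZMod k → HVLabel) (hk : 3 ≤ k) (h : HasHVHV k lab) :
    ∃ p : ZMod k → ℝ × ℝ, CycleGood k lab p := by
  have hex : (∃ a : ZMod k, lab a = HVLabel.V) ∧ (∃ b : ZMod k, lab b = HVLabel.H) := by
    obtain ⟨i1, i2, i3, i4, _, _, _, _, hpat⟩ := h
    rcases hpat with ⟨p1, p2, _, _⟩ | ⟨p1, p2, _, _⟩
    · exact ⟨⟨_, p2⟩, ⟨_, p1⟩⟩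
    · exact ⟨⟨_, p1⟩, ⟨_, p2⟩⟩
  obtain ⟨⟨a, ha⟩, ⟨b, hb⟩⟩ := hex
  obtain ⟨s, hV', hH⟩ := exists_VH k lab hk a b ha hb
  have hno2 : ¬ TwoBlock k lab := fun h2 => TwoBlock_not_HasHVHV k lab hk h2 h
  have hT3 := Tb_three k lab s hk hH hV' hno2
  exact ⟨pdraw k lab s, construction_good k lab s hk hH hV' hT3⟩

end HVx

/-- an HV-restricted cycle `C_k` admits a good orthogonal drawing if and only if
the cyclic sequence of its labels contains H, V, H, V as a cyclic subsequence. -/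
theorem cycle_good_drawing_iff_HVHV (k : ℕ) (hk : 3 ≤ k) (lab : ZMod k → HVLabel) :
    (∃ p : ZMod k → ℝ × ℝ, CycleGood k lab p) ↔ HasHVHV k lab := by
  constructor
  · rintro ⟨p, hp⟩
    exact HVx.forward k lab hk p hp
  · exact HVx.reverse k lab hk
end

section
/- Let C_k be the cycle graph with vertices w_0, …, w_{k−1} and edges e_i = {w_i, w_{i+1 mod k}} (k ≥ 3), equipped with an HV-labelling λ, and let p be a good orthogonal drawing of C_k. Suppose that every V-labelled edge of C_k is critical, i.e., both of its cyclically neighbouring edges are labelled H, and that for every V-labelled edge e_i = {w_i, w_{i+1}} the quantities ((p w_{i−1}).1 − (p w_i).1) and ((p w_{i+2}).1 − (p w_{i+1}).1) are both positive or both negative (indices mod k; the two adjacent horizontal drawn segments lie on the same side of the vertical line through e_i). Then the number of V-labelled edges of C_k is even. The analogous statement holds with the roles of H and V (and of first and second coordinates) exchanged. -/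
lemma seg_swap {a b x : ℝ × ℝ} (h : x ∈ segment ℝ a b) :
    x.swap ∈ segment ℝ a.swap b.swap := by
  obtain ⟨s, t, hs, ht, hst, h⟩ := h
  refine ⟨s, t, hs, ht, hst, ?_⟩
  rw [← h]
  ext <;> simp

lemma seg_of_horiz {a b x : ℝ × ℝ} (hy : a.2 = b.2) (hxy : x.2 = a.2)
    (hx : x.1 ∈ segment ℝ a.1 b.1) : x ∈ segment ℝ a b := by
  obtain ⟨s, t, hs, ht, hst, h⟩ := hx
  refine ⟨s, t, hs, ht, hst, ?_⟩
  ext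
  · simpa using h
  · simp only [Prod.snd_add, Prod.smul_snd, smul_eq_mul, ← hy, hxy]
    linear_combination a.2 * hst

lemma prod_pos_iff_even_neg {α : Type*} [DecidableEq α] (s : Finset α) (g : α → ℝ)
    (h0 : ∀ i ∈ s, g i ≠ 0) :
    (0 < ∏ i ∈ s, g i) ↔ Even ((s.filter fun i => g i < 0).card) := by
  induction s using Finset.induction_on with
  | empty => simp
  | @insert a s' ha ih =>
    have h0' : ∀ i ∈ s', g i ≠ 0 := fun i hi => h0 i (Finset.mem_insert_of_mem hi)
    have hga : g a ≠ 0 := h0 a (Finset.mem_insert_self a s')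
    have hrest : ∏ i ∈ s', g i ≠ 0 := Finset.prod_ne_zero_iff.mpr h0'
    rw [Finset.prod_insert ha, Finset.filter_insert]
    rcases lt_or_gt_of_ne hga with hneg | hpos
    · rw [if_pos hneg, Finset.card_insert_of_notMem (by simp [ha]), Nat.even_add_one,
        ← ih h0']
      constructor
      · intro h hpos'
        nlinarith
      · intro h
        rcases lt_or_gt_of_ne hrest with hr | hr
        · nlinarith
        · exact absurd hr h
    · rw [if_neg (by linarith), ← ih h0']
      constructor
      · intro h; nlinarith
      · intro h; exact mul_pos hpos h

lemma aux_even (k : ℕ) (hk : 3 ≤ k) (lab : ZMod k → HVLabel) (p : ZMod k → ℝ × ℝ)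
    (hinj : Function.Injective p) (hpl : IsPlanarDrawing (cycleGraph k) p)
    (hresp : CycleRespects k lab p)
    (hcrit : ∀ i : ZMod k, lab i = HVLabel.V →
      lab (i - 1) = HVLabel.H ∧ lab (i + 1) = HVLabel.H)
    (hside : ∀ i : ZMod k, lab i = HVLabel.V →
      (0 < (p (i - 1)).1 - (p i).1 ∧ 0 < (p (i + 2)).1 - (p (i + 1)).1) ∨
      ((p (i - 1)).1 - (p i).1 < 0 ∧ (p (i + 2)).1 - (p (i + 1)).1 < 0)) :
    Even (((Finset.range k).filter fun i : ℕ => lab (i : ZMod k) = HVLabel.V).card) := by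
  haveI : NeZero k := ⟨by omega⟩
  classical
  -- basic ZMod facts
  have hone : (1 : ZMod k) ≠ 0 := by
    intro h
    have h' : ((1 : ℕ) : ZMod k) = 0 := by exact_mod_cast h
    have := (ZMod.natCast_eq_zero_iff 1 k).mp h'
    have := Nat.le_of_dvd one_pos this
    omega
  have htwo : (2 : ZMod k) ≠ 0 := by
    intro h
    have h' : ((2 : ℕ) : ZMod k) = 0 := by exact_mod_cast h
    have := (ZMod.natCast_eq_zero_iff 2 k).mp h'
    have := Nat.le_of_dvd two_pos this
    omega
  have hne1 : ∀ i : ZMod k, i ≠ i + 1 := by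
    intro i h
    exact hone (left_eq_add.mp h)
  have hne2 : ∀ i : ZMod k, i ≠ i + 1 + 1 := by
    intro i h
    rw [add_assoc, left_eq_add] at h
    exact htwo (by linear_combination h)
  have hsub1 : ∀ i : ZMod k, i - 1 + 1 = i := fun i => by ring
  have hadd1 : ∀ i : ZMod k, i + 1 - 1 = i := fun i => by ring
  -- horizontal edges
  have hy : ∀ i : ZMod k, lab i = HVLabel.H → (p i).2 = (p (i + 1)).2 :=
    fun i h => (hresp i).1 h
  -- the sign function
  set t : ZMod k → ℝ := fun i =>
    if lab i = HVLabel.H then (p (i + 1)).1 - (p i).1 else (p (i - 1)).1 - (p i).1 with ht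
  have hH : ∀ i : ZMod k, lab i = HVLabel.H → t i = (p (i + 1)).1 - (p i).1 := by
    intro i h; simp [ht, h]
  have hV : ∀ i : ZMod k, lab i = HVLabel.V → t i = (p (i - 1)).1 - (p i).1 := by
    intro i h; simp [ht, h]
  have htne : ∀ i : ZMod k, t i ≠ 0 := by
    intro i
    cases hl : lab i with
    | H =>
      rw [hH i hl]
      intro h0
      have hxy := hy i hl
      have : p i = p (i + 1) := Prod.ext (by linarith [sub_eq_zero.mp h0]) hxy
      exact hne1 i (hinj this)
    | V =>
      have hc := (hcrit i hl).1
      have hxy := hy (i - 1) hc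
      rw [hsub1 i] at hxy
      rw [hV i hl]
      intro h0
      have : p (i - 1) = p i := Prod.ext (sub_eq_zero.mp h0) hxy
      have h1 : i - 1 = i := hinj this
      exact hne1 i (by linear_combination h1)
  -- adjacency
  have hadj : ∀ i : ZMod k, (cycleGraph k).Adj i (i + 1) := fun i => ⟨hne1 i, Or.inl rfl⟩
  have hneq : ∀ i : ZMod k, s(i, i + 1) ≠ s(i + 1, i + 1 + 1) := by
    intro i h
    rw [Sym2.eq_iff] at h
    rcases h with ⟨h1, _⟩ | ⟨h1, _⟩
    · exact hne1 i h1
    · exact hne2 i h1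
  -- two consecutive horizontal edges go in the same x-direction (planarity)
  have hHH : ∀ i : ZMod k, lab i = HVLabel.H → lab (i + 1) = HVLabel.H →
      ¬ (((p (i + 1)).1 - (p i).1) * ((p (i + 1 + 1)).1 - (p (i + 1)).1) < 0) := by
    intro i hli hli1 hneg
    set A := p i
    set B := p (i + 1)
    set C := p (i + 1 + 1)
    have hyAB : A.2 = B.2 := hy i hli
    have hyBC : B.2 = C.2 := hy (i + 1) hli1
    rcases mul_neg_iff.mp hneg with ⟨h1, h2⟩ | ⟨h1, h2⟩
    · -- A.1 < B.1, C.1 < B.1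
      have hAB : A.1 < B.1 := by linarith
      have hCB : C.1 < B.1 := by linarith
      rcases le_or_gt A.1 C.1 with hca | hca
      · have hC1 : C.1 ∈ segment ℝ A.1 B.1 := by
          rw [segment_eq_Icc hAB.le]; exact ⟨hca, hCB.le⟩
        obtain ⟨w, hw, hw1, hw2⟩ := hpl i (i + 1) (i + 1) (i + 1 + 1) (hadj i)
          (hadj (i + 1)) (hneq i) C
          (seg_of_horiz hyAB (hyAB.trans hyBC).symm hC1) (right_mem_segment ℝ B C)
        have hwC : w = i + 1 + 1 := hinj hw
        rcases hw1 with h | h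
        · exact hne2 i (hwC ▸ h.symm)
        · exact hne1 (i + 1) (hwC ▸ h.symm)
      · have hA1 : A.1 ∈ segment ℝ B.1 C.1 := by
          rw [segment_symm, segment_eq_Icc hCB.le]; exact ⟨hca.le, hAB.le⟩
        obtain ⟨w, hw, hw1, hw2⟩ := hpl i (i + 1) (i + 1) (i + 1 + 1) (hadj i)
          (hadj (i + 1)) (hneq i) A
          (left_mem_segment ℝ A B) (seg_of_horiz hyBC hyAB hA1)
        have hwA : w = i := hinj hw
        rcases hw2 with h | h
        · exact hne1 i (hwA ▸ h)
        · exact hne2 i (hwA ▸ h)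
    · -- B.1 < A.1, B.1 < C.1
      have hBA : B.1 < A.1 := by linarith
      have hBC : B.1 < C.1 := by linarith
      rcases le_or_gt C.1 A.1 with hca | hca
      · have hC1 : C.1 ∈ segment ℝ A.1 B.1 := by
          rw [segment_symm, segment_eq_Icc hBA.le]; exact ⟨hBC.le, hca⟩
        obtain ⟨w, hw, hw1, hw2⟩ := hpl i (i + 1) (i + 1) (i + 1 + 1) (hadj i)
          (hadj (i + 1)) (hneq i) C
          (seg_of_horiz hyAB (hyAB.trans hyBC).symm hC1) (right_mem_segment ℝ B C)
        have hwC : w = i + 1 + 1 := hinj hw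
        rcases hw1 with h | h
        · exact hne2 i (hwC ▸ h.symm)
        · exact hne1 (i + 1) (hwC ▸ h.symm)
      · have hA1 : A.1 ∈ segment ℝ B.1 C.1 := by
          rw [segment_eq_Icc hBC.le]; exact ⟨hBA.le, hca.le⟩
        obtain ⟨w, hw, hw1, hw2⟩ := hpl i (i + 1) (i + 1) (i + 1 + 1) (hadj i)
          (hadj (i + 1)) (hneq i) A
          (left_mem_segment ℝ A B) (seg_of_horiz hyBC hyAB hA1)
        have hwA : w = i := hinj hw
        rcases hw2 with h | h
        · exact hne1 i (hwA ▸ h)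
        · exact hne2 i (hwA ▸ h)
  -- the sign flips exactly at vertical edges
  have hsign : ∀ i : ZMod k, (t i * t (i + 1) < 0 ↔ lab (i + 1) = HVLabel.V) := by
    intro i
    cases hl1 : lab (i + 1) with
    | V =>
      simp only [iff_true]
      have hli : lab i = HVLabel.H := by
        have := (hcrit (i + 1) hl1).1
        rwa [hadd1 i] at this
      have h1 : t i = (p (i + 1)).1 - (p i).1 := hH i hli
      have h2 : t (i + 1) = (p i).1 - (p (i + 1)).1 := by
        rw [hV (i + 1) hl1, hadd1 i]
      have hne := htne i
      rw [h1, h2]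
      rw [h1] at hne
      rcases lt_or_gt_of_ne hne with h | h <;> nlinarith
    | H =>
      refine iff_of_false ?_ (by simp)
      intro hneg
      cases hl0 : lab i with
      | H =>
        rw [hH i hl0, hH (i + 1) hl1] at hneg
        exact hHH i hl0 hl1 hneg
      | V =>
        have h11 : i + 1 + 1 = i + 2 := by ring
        rw [hV i hl0, hH (i + 1) hl1, h11] at hneg
        rcases hside i hl0 with ⟨ha, hb⟩ | ⟨ha, hb⟩ <;> nlinarith
  -- the product of consecutive signs is positive
  have hprodpos : 0 < ∏ i : ZMod k, (t i * t (i + 1)) := by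
    rw [Finset.prod_mul_distrib]
    have he : ∏ i : ZMod k, t (i + 1) = ∏ i : ZMod k, t i :=
      Fintype.prod_equiv (Equiv.addRight (1 : ZMod k)) _ _ (fun i => rfl)
    rw [he]
    exact mul_self_pos.mpr (Finset.prod_ne_zero_iff.mpr fun i _ => htne i)
  have heven := (prod_pos_iff_even_neg Finset.univ (fun i => t i * t (i + 1))
    (fun i _ => mul_ne_zero (htne i) (htne (i + 1)))).mp hprodpos
  have hfe : (Finset.univ.filter fun i : ZMod k => t i * t (i + 1) < 0) =
      Finset.univ.filter fun i : ZMod k => lab (i + 1) = HVLabel.V :=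
    Finset.filter_congr fun i _ => by simpa using hsign i
  rw [hfe] at heven
  have hcard1 : (Finset.univ.filter fun i : ZMod k => lab (i + 1) = HVLabel.V).card =
      (Finset.univ.filter fun j : ZMod k => lab j = HVLabel.V).card := by
    refine Finset.card_bij' (fun a _ => a + 1) (fun b _ => b - 1) ?_ ?_ ?_ ?_
    · intro a ha
      simp only [Finset.mem_filter, Finset.mem_univ, true_and] at ha ⊢
      exact ha
    · intro b hb
      simp only [Finset.mem_filter, Finset.mem_univ, true_and] at hb ⊢
      rwa [hsub1 b]
    · intro a _; exact hadd1 a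
    · intro b _; exact hsub1 b
  have hcard2 : (((Finset.range k).filter fun i : ℕ => lab (i : ZMod k) = HVLabel.V).card) =
      (Finset.univ.filter fun j : ZMod k => lab j = HVLabel.V).card := by
    refine Finset.card_bij' (fun (a : ℕ) _ => (a : ZMod k)) (fun (b : ZMod k) _ => b.val)
      ?_ ?_ ?_ ?_
    · intro a ha
      simp only [Finset.mem_filter, Finset.mem_range] at ha
      simp only [Finset.mem_filter, Finset.mem_univ, true_and]
      exact ha.2
    · intro b hb
      simp only [Finset.mem_filter, Finset.mem_univ, true_and] at hb
      simp only [Finset.mem_filter, Finset.mem_range]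
      exact ⟨ZMod.val_lt b, by rwa [ZMod.natCast_zmod_val]⟩
    · intro a ha
      simp only [Finset.mem_filter, Finset.mem_range] at ha
      exact ZMod.val_cast_of_lt ha.1
    · intro b _
      exact ZMod.natCast_zmod_val b
  rw [hcard2, ← hcard1]
  exact heven


/-- in a good orthogonal drawing of an HV-restricted cycle in which every
V-labelled edge is critical and has its two neighbouring (horizontal) edges drawn on the
same side, the number of V-labelled edges is even; and symmetrically for H. -/
theorem even_number_of_critical_edges (k : ℕ) (hk : 3 ≤ k) (lab : ZMod k → HVLabel)
    (p : ZMod k → ℝ × ℝ) (hgood : CycleGood k lab p) :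
    (((∀ i : ZMod k, lab i = HVLabel.V →
        lab (i - 1) = HVLabel.H ∧ lab (i + 1) = HVLabel.H) →
      (∀ i : ZMod k, lab i = HVLabel.V →
        (0 < (p (i - 1)).1 - (p i).1 ∧ 0 < (p (i + 2)).1 - (p (i + 1)).1) ∨
        ((p (i - 1)).1 - (p i).1 < 0 ∧ (p (i + 2)).1 - (p (i + 1)).1 < 0)) →
      Even (((Finset.range k).filter fun i : ℕ => lab (i : ZMod k) = HVLabel.V).card)) ∧
     ((∀ i : ZMod k, lab i = HVLabel.H →
        lab (i - 1) = HVLabel.V ∧ lab (i + 1) = HVLabel.V) →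
      (∀ i : ZMod k, lab i = HVLabel.H →
        (0 < (p (i - 1)).2 - (p i).2 ∧ 0 < (p (i + 2)).2 - (p (i + 1)).2) ∨
        ((p (i - 1)).2 - (p i).2 < 0 ∧ (p (i + 2)).2 - (p (i + 1)).2 < 0)) →
      Even (((Finset.range k).filter fun i : ℕ => lab (i : ZMod k) = HVLabel.H).card))) := by
  obtain ⟨hinj, hpl, hresp⟩ := hgood
  constructor
  · intro hcrit hside
    exact aux_even k hk lab p hinj hpl hresp hcrit hside
  · intro hcrit hside
    -- swap the roles of the coordinates and of the labels
    set lab' : ZMod k → HVLabel := fun i =>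
      if lab i = HVLabel.H then HVLabel.V else HVLabel.H with hlab'
    set q : ZMod k → ℝ × ℝ := fun i => (p i).swap with hq
    have hlabV : ∀ i, (lab' i = HVLabel.V ↔ lab i = HVLabel.H) := by
      intro i
      cases h : lab i <;> simp [hlab', h]
    have hlabH : ∀ i, (lab' i = HVLabel.H ↔ lab i = HVLabel.V) := by
      intro i
      cases h : lab i <;> simp [hlab', h]
    have hinj' : Function.Injective q := fun a b h =>
      hinj (Prod.swap_injective h)
    have hpl' : IsPlanarDrawing (cycleGraph k) q := by
      intro u v u' v' h h' hne x hx hx'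
      have h1 := seg_swap hx
      have h2 := seg_swap hx'
      simp only [hq, Prod.swap_swap] at h1 h2
      obtain ⟨w, hw, hw1, hw2⟩ := hpl u v u' v' h h' hne x.swap h1 h2
      exact ⟨w, by simp [hq, hw], hw1, hw2⟩
    have hresp' : CycleRespects k lab' q := by
      intro i
      constructor
      · intro h
        have := (hresp i).2 ((hlabH i).mp h)
        exact this
      · intro h
        have := (hresp i).1 ((hlabV i).mp h)
        exact this
    have hcrit' : ∀ i : ZMod k, lab' i = HVLabel.V →
        lab' (i - 1) = HVLabel.H ∧ lab' (i + 1) = HVLabel.H := by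
      intro i h
      obtain ⟨h1, h2⟩ := hcrit i ((hlabV i).mp h)
      exact ⟨(hlabH _).mpr h1, (hlabH _).mpr h2⟩
    have hside' : ∀ i : ZMod k, lab' i = HVLabel.V →
        (0 < (q (i - 1)).1 - (q i).1 ∧ 0 < (q (i + 2)).1 - (q (i + 1)).1) ∨
        ((q (i - 1)).1 - (q i).1 < 0 ∧ (q (i + 2)).1 - (q (i + 1)).1 < 0) := by
      intro i h
      exact hside i ((hlabV i).mp h)
    have := aux_even k hk lab' q hinj' hpl' hresp' hcrit' hside'
    have hfilter : ((Finset.range k).filter fun i : ℕ => lab' (i : ZMod k) = HVLabel.V) =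
        ((Finset.range k).filter fun i : ℕ => lab (i : ZMod k) = HVLabel.H) :=
      Finset.filter_congr fun i _ => by simpa using hlabV (i : ZMod k)
    rwa [hfilter] at this
end
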